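/- arXiv:1209.1618 — 8 statements merged into one kernel-verified Lean document; each statement's English description precedes it below -/
import Mathlib

section
/- Let θ be an irrational real number and consider the rotation x ↦ x + θ on the circle ℝ/ℤ. For every prime p and every ε > 0 there exist continuous functions f₀,…,f_{p−1}, g₀,…,g_{p−1} : ℝ/ℤ → [0,1] such that: (i) f_i·f_j = 0 and g_i·g_j = 0 whenever i ≠ j; (ii) f₀ + ⋯ + f_{p−1} + g₀ + ⋯ + g_{p−1} = 1; (iii) for every j, sup_x |f_j(x − θ) − f_{(j+1 mod p)}(x)| < ε and sup_x |g_j(x − θ) − g_{(j+1 mod p)}(x)| < ε. (These are two single cyclic Rokhlin towers of height p, showing that the irrational rotation action on C(ℝ/ℤ) has Rokhlin dimension 1 with single towers.) -/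
noncomputable section

/-- triangle bump on ℝ -/
def tri (s : ℝ) : ℝ := max 0 (1 - |s|)

lemma tri_nonneg (s : ℝ) : 0 ≤ tri s := le_max_left _ _
lemma tri_le_one (s : ℝ) : tri s ≤ 1 :=
  max_le zero_le_one (by have := abs_nonneg s; linarith)
lemma tri_eq_zero {s : ℝ} (h : 1 ≤ |s|) : tri s = 0 := max_eq_left (by linarith)
lemma tri_abs (s : ℝ) : tri |s| = tri s := by simp [tri, abs_abs]
lemma tri_lip (a b : ℝ) : |tri a - tri b| ≤ |a - b| := by
  have h1 : |max 0 (1 - |a|) - max 0 (1 - |b|)| ≤ |(1 - |a|) - (1 - |b|)| := by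
    have := abs_max_sub_max_le_abs (1 - |a|) (1 - |b|) 0
    simpa [max_comm] using this
  have h2 : |(1 - |a|) - (1 - |b|)| = abs (|b| - |a|) := by ring_nf
  have h3 : abs (|b| - |a|) ≤ |b - a| := abs_abs_sub_abs_le_abs_sub b a
  calc |tri a - tri b| ≤ |(1 - |a|) - (1 - |b|)| := h1
    _ = abs (|b| - |a|) := h2
    _ ≤ |b - a| := h3
    _ = |a - b| := abs_sub_comm b a
lemma tri_continuous : Continuous tri :=
  continuous_const.max (continuous_const.sub continuous_abs)

/-- norm on AddCircle 1 -/
lemma norm_coe_unit (u : ℝ) : ‖(u : AddCircle (1:ℝ))‖ = |u - round u| := by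
  rw [AddCircle.norm_eq]; simp

lemma coe_int_eq_zero (m : ℤ) : (((m : ℝ)) : AddCircle (1:ℝ)) = 0 := by
  have h : ((m : ℝ)) = m • (1 : ℝ) := by simp
  rw [h, AddCircle.coe_zsmul, AddCircle.coe_period, smul_zero]

lemma coe_sub_int (v : ℝ) (m : ℤ) : ((v - m : ℝ) : AddCircle (1:ℝ)) = ↑v := by
  rw [AddCircle.coe_sub, coe_int_eq_zero, sub_zero]

/-- bump on circle -/
def cbump (n : ℕ) (y : AddCircle (1:ℝ)) : ℝ := tri (n * ‖y‖)

lemma cbump_nonneg (n : ℕ) (y : AddCircle (1:ℝ)) : 0 ≤ cbump n y := tri_nonneg _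
lemma cbump_le_one (n : ℕ) (y : AddCircle (1:ℝ)) : cbump n y ≤ 1 := tri_le_one _
lemma cbump_continuous (n : ℕ) : Continuous (cbump n) :=
  tri_continuous.comp (continuous_const.mul continuous_norm)

lemma cbump_lip (n : ℕ) (a b : AddCircle (1:ℝ)) :
    |cbump n a - cbump n b| ≤ n * ‖a - b‖ := by
  calc |cbump n a - cbump n b| ≤ |(n:ℝ) * ‖a‖ - n * ‖b‖| := tri_lip _ _
    _ = (n:ℝ) * |‖a‖ - ‖b‖| := by rw [← mul_sub, abs_mul, abs_of_nonneg (by positivity : (0:ℝ) ≤ (n:ℝ))]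
    _ ≤ (n:ℝ) * ‖a - b‖ := by
        have := abs_norm_sub_norm_le a b
        exact mul_le_mul_of_nonneg_left this (by positivity)

lemma cbump_coe (n : ℕ) (u : ℝ) : cbump n ↑u = tri (n * u - n * round u) := by
  unfold cbump
  rw [norm_coe_unit, ← tri_abs (n * u - n * round u)]
  congr 1
  rw [← mul_sub, abs_mul, abs_of_nonneg (by positivity : (0:ℝ) ≤ (n:ℝ))]

lemma cbump_coe_of_small (n : ℕ) {u : ℝ} (h : |u| ≤ 1/2) : cbump n ↑u = tri (n * u) := by
  unfold cbump
  have h' : ‖(u : AddCircle (1:ℝ))‖ = |u| :=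
    (AddCircle.norm_coe_eq_abs_iff 1 one_ne_zero).mpr (by simpa using h)
  rw [h', ← tri_abs (n*u), abs_mul, abs_of_nonneg (by positivity : (0:ℝ) ≤ (n:ℝ))]

lemma cbump_coe_eq_zero (n : ℕ) {u : ℝ} (h : ∀ j : ℤ, 1 ≤ |n * u - n * j|) :
    cbump n ↑u = 0 := by
  rw [cbump_coe]; exact tri_eq_zero (h (round u))

lemma cbump_support {n : ℕ} {y : AddCircle (1:ℝ)} (h : cbump n y ≠ 0) : (n:ℝ) * ‖y‖ < 1 := by
  by_contra h'
  push_neg at h'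
  exact h (tri_eq_zero (by rwa [abs_of_nonneg (by positivity : (0:ℝ) ≤ (n:ℝ)*‖y‖)]))

end

noncomputable section

lemma norm_div_nat_ge (p : ℕ) (hp : 0 < p) (a : ℤ) (ha : ¬ ((p:ℤ) ∣ a)) :
    1 / (p:ℝ) ≤ ‖(((a:ℝ)/(p:ℝ)) : AddCircle (1:ℝ))‖ := by
  rw [norm_coe_unit]
  set r := round ((a:ℝ)/(p:ℝ)) with hr
  have hp' : (0:ℝ) < (p:ℝ) := by positivity
  have h1 : (a:ℝ)/(p:ℝ) - r = ((a - r * p : ℤ) : ℝ) / (p:ℝ) := by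
    push_cast; field_simp
  have h2 : a - r * p ≠ 0 := by
    intro h
    exact ha ⟨r, by linarith [h]⟩
  have h3 : (1:ℝ) ≤ |((a - r * p : ℤ) : ℝ)| := by
    rw [← Int.cast_abs]
    exact_mod_cast Int.one_le_abs h2
  rw [h1, abs_div, abs_of_pos hp', div_le_div_iff_of_pos_right hp']
  exact h3

lemma cbump_mul_eq_zero {n : ℕ} (hn0 : 0 < n) {y c₁ c₂ : AddCircle (1:ℝ)} (h : 2/(n:ℝ) ≤ ‖c₁ - c₂‖) :
    cbump n (y - c₁) * cbump n (y - c₂) = 0 := by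
  rcases eq_or_ne (cbump n (y - c₁)) 0 with h1 | h1
  · rw [h1, zero_mul]
  rcases eq_or_ne (cbump n (y - c₂)) 0 with h2 | h2
  · rw [h2, mul_zero]
  exfalso
  have hn : (0:ℝ) < n := by exact_mod_cast hn0
  have b1 := cbump_support h1
  have b2 := cbump_support h2
  have hd : ‖c₁ - c₂‖ ≤ ‖y - c₁‖ + ‖y - c₂‖ := by
    have : c₁ - c₂ = (y - c₂) - (y - c₁) := by abel
    rw [this]
    calc ‖(y - c₂) - (y - c₁)‖ ≤ ‖y - c₂‖ + ‖y - c₁‖ := norm_sub_le _ _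
      _ = ‖y - c₁‖ + ‖y - c₂‖ := by ring
  have l1 : ‖y - c₁‖ < 1/(n:ℝ) := by rw [lt_div_iff₀ hn]; linarith [b1]
  have l2 : ‖y - c₂‖ < 1/(n:ℝ) := by rw [lt_div_iff₀ hn]; linarith [b2]
  have : (2:ℝ)/(n:ℝ) < 2/(n:ℝ) := by
    calc (2:ℝ)/(n:ℝ) ≤ ‖c₁ - c₂‖ := h
      _ ≤ ‖y - c₁‖ + ‖y - c₂‖ := hd
      _ < 1/(n:ℝ) + 1/(n:ℝ) := by linarith
      _ = 2/(n:ℝ) := by ring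
  exact lt_irrefl _ this

lemma sum_range_even_odd (f : ℕ → ℝ) (p : ℕ) :
    ∑ k ∈ Finset.range (2*p), f k
      = ∑ j ∈ Finset.range p, f (2*j) + ∑ j ∈ Finset.range p, f (2*j+1) := by
  induction p with
  | zero => simp
  | succ q ih =>
    have h : 2*(q+1) = (2*q + 1) + 1 := by ring
    rw [h, Finset.sum_range_succ, Finset.sum_range_succ,
      Finset.sum_range_succ (fun j => f (2*j)) q, Finset.sum_range_succ (fun j => f (2*j+1)) q, ih]
    ring

lemma exists_approx (θ : ℝ) (hθ : Irrational θ) (c δ : ℝ) (hδ : 0 < δ) :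
    ∃ z : ℤ, ‖(((z:ℝ) * θ - c : ℝ) : AddCircle (1:ℝ))‖ < δ := by
  rcases (AddSubgroup.closure {(1:ℝ), θ}).dense_or_cyclic with hd | ⟨a, ha⟩
  · have := Metric.dense_iff.mp hd c δ hδ
    obtain ⟨y, hy1, hy2⟩ := this
    rw [Metric.mem_ball] at hy1
    obtain ⟨m, z, hmz⟩ := AddSubgroup.mem_closure_pair.mp hy2
    refine ⟨z, ?_⟩
    have hy : y = (m:ℝ) + z * θ := by
      rw [← hmz]; push_cast [zsmul_eq_mul]; ring
    have hco : (((z:ℝ) * θ - c : ℝ) : AddCircle (1:ℝ)) = ((y - c - (m:ℝ) : ℝ) : AddCircle (1:ℝ)) := by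
      congr 1; rw [hy]; ring
    rw [hco, coe_sub_int, norm_coe_unit]
    calc |y - c - round (y - c)| ≤ |y - c - (0:ℤ)| := round_le (y - c) 0
      _ = |y - c| := by simp
      _ < δ := by rw [abs_sub_comm, ← Real.dist_eq, dist_comm]; exact hy1
  · exfalso
    have h1 : (1:ℝ) ∈ AddSubgroup.closure {(1:ℝ), θ} :=
      AddSubgroup.subset_closure (by simp)
    have h2 : θ ∈ AddSubgroup.closure {(1:ℝ), θ} :=
      AddSubgroup.subset_closure (by simp)
    rw [ha] at h1 h2
    obtain ⟨m, hm⟩ := AddSubgroup.mem_closure_singleton.mp h1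
    obtain ⟨k, hk⟩ := AddSubgroup.mem_closure_singleton.mp h2
    have hm0 : m ≠ 0 := by
      intro h; rw [h] at hm; simp at hm
    have hmm : (m:ℝ) * a = 1 := by rw [← hm]; push_cast [zsmul_eq_mul]; ring
    have hkk : (k:ℝ) * a = θ := by rw [← hk]; push_cast [zsmul_eq_mul]; ring
    have hmr : (m:ℝ) ≠ 0 := Int.cast_ne_zero.mpr hm0
    have hth : θ * (m:ℝ) = (k:ℝ) := by linear_combination (k:ℝ)*hmm - (m:ℝ)*hkk
    have hfin : θ = (k:ℝ) / (m:ℝ) := by field_simp; exact hth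
    exact hθ ⟨(k:ℚ)/(m:ℚ), by push_cast; exact hfin.symm⟩

end

noncomputable section

lemma cbump_sum (n : ℕ) (hn : 2 ≤ n) (y : AddCircle (1:ℝ)) :
    ∑ k ∈ Finset.range n, cbump n (y - ↑(((k:ℝ)+1)/(n:ℝ))) = 1 := by
  have hn0 : (0:ℝ) < (n:ℝ) := by positivity
  have hn2 : (2:ℝ) ≤ (n:ℝ) := by exact_mod_cast hn
  refine QuotientAddGroup.induction_on y ?_
  intro x₀
  set x := Int.fract x₀ with hxdef
  have hco : ((x : ℝ) : AddCircle (1:ℝ)) = (x₀ : AddCircle (1:ℝ)) := by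
    rw [hxdef, Int.fract]; exact coe_sub_int x₀ ⌊x₀⌋
  have hx0 : 0 ≤ x := Int.fract_nonneg x₀
  have hx1 : x < 1 := Int.fract_lt_one x₀
  have hterm : ∀ k : ℕ, ((x₀ : AddCircle (1:ℝ)) - ↑(((k:ℝ)+1)/(n:ℝ)))
      = ((x - ((k:ℝ)+1)/(n:ℝ) : ℝ) : AddCircle (1:ℝ)) := by
    intro k; rw [AddCircle.coe_sub, hco]
  simp only [hterm]
  -- set up integer data
  set s := (n:ℝ) * x with hsdef
  have hs0 : 0 ≤ s := by positivity
  have hs1 : s < n := by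
    calc s = (n:ℝ) * x := rfl
      _ < (n:ℝ) * 1 := by exact mul_lt_mul_of_pos_left hx1 hn0
      _ = n := mul_one _
  set M : ℕ := ⌊s⌋.toNat with hMdef
  have hMfloor : (M : ℤ) = ⌊s⌋ := Int.toNat_of_nonneg (Int.floor_nonneg.mpr hs0)
  have hMle : (M:ℝ) ≤ s := by
    have := Int.floor_le s
    rw [← hMfloor] at this; exact_mod_cast this
  have hMlt : s < (M:ℝ) + 1 := by
    have := Int.lt_floor_add_one s
    rw [← hMfloor] at this; exact_mod_cast this
  have hMn : M < n := by
    by_contra hcon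
    push_neg at hcon
    have : (n:ℝ) ≤ (M:ℝ) := by exact_mod_cast hcon
    linarith
  set t := s - (M:ℝ) with htdef
  have ht0 : 0 ≤ t := by simp [htdef]; linarith
  have ht1 : t < 1 := by simp [htdef]; linarith
  set k₁ : ℕ := if M = 0 then n - 1 else M - 1 with hk₁def
  have hk₁cases : (M = 0 ∧ k₁ = n - 1) ∨ (1 ≤ M ∧ k₁ = M - 1) := by
    by_cases h : M = 0
    · left; exact ⟨h, by simp [hk₁def, h]⟩
    · right; exact ⟨Nat.one_le_iff_ne_zero.mpr h, by simp [hk₁def, h]⟩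
  have hk₁n : k₁ < n := by rcases hk₁cases with ⟨_, h⟩ | ⟨_, h⟩ <;> omega

  have hne : k₁ ≠ M := by rcases hk₁cases with ⟨h0, h⟩ | ⟨h0, h⟩ <;> omega
  -- values at the two distinguished indices
  have hF2 : cbump n ↑(x - ((M:ℝ)+1)/(n:ℝ)) = t := by
    have hu : x - ((M:ℝ)+1)/(n:ℝ) = (t - 1)/(n:ℝ) := by
      field_simp [htdef, hsdef]; ring
    have habs : |(t-1)/(n:ℝ)| ≤ 1/2 := by
      rw [abs_div, abs_of_pos hn0, div_le_iff₀ hn0, abs_of_nonpos (by linarith : t - 1 ≤ 0)]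
      linarith
    rw [hu, cbump_coe_of_small n habs]
    have : (n:ℝ) * ((t-1)/(n:ℝ)) = t - 1 := by field_simp
    rw [this]
    unfold tri
    rw [abs_of_nonpos (by linarith)]
    rw [max_eq_right (by linarith)]
    ring
  have hF1 : cbump n ↑(x - ((k₁:ℝ)+1)/(n:ℝ)) = 1 - t := by
    rcases hk₁cases with ⟨h0, hk⟩ | ⟨h0, hk⟩
    · -- M = 0, k₁ = n - 1
      have hcast : ((k₁:ℝ)+1) = (n:ℝ) := by
        rw [hk]; push_cast [Nat.cast_sub (by omega : 1 ≤ n)]; ring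
      have hx' : x - ((k₁:ℝ)+1)/(n:ℝ) = x - 1 := by rw [hcast]; field_simp
      have hcoe : ((x - 1 : ℝ) : AddCircle (1:ℝ)) = ((x:ℝ) : AddCircle (1:ℝ)) := by
        have := coe_sub_int x 1
        simpa using this
      have hM0 : (M:ℝ) = 0 := by rw [h0]; simp
      have hts : t = s := by rw [htdef, hM0]; ring
      have habs : |x| ≤ 1/2 := by
        rw [abs_of_nonneg hx0]
        -- n*x = s = t < 1 so x < 1/n ≤ 1/2
        have hxlt : x ≤ 1/(n:ℝ) := by
          rw [le_div_iff₀ hn0]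
          have : (n:ℝ) * x = s := by rw [hsdef]
          rw [mul_comm] at this
          linarith [hts ▸ ht1, this]
        have : 1/(n:ℝ) ≤ 1/2 := by
          apply one_div_le_one_div_of_le <;> linarith
        linarith
      rw [hx', hcoe, cbump_coe_of_small n habs]
      have hnx : (n:ℝ) * x = t := by rw [hts, hsdef]
      rw [hnx]
      unfold tri
      rw [abs_of_nonneg ht0, max_eq_right (by linarith)]
    · -- 1 ≤ M, k₁ = M - 1
      have hcast : ((k₁:ℝ)+1) = (M:ℝ) := by
        rw [hk]; push_cast [Nat.cast_sub h0]; ring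
      have hu : x - ((k₁:ℝ)+1)/(n:ℝ) = t/(n:ℝ) := by
        rw [hcast]; field_simp [htdef, hsdef]; ring
      have habs : |t/(n:ℝ)| ≤ 1/2 := by
        rw [abs_div, abs_of_pos hn0, div_le_iff₀ hn0, abs_of_nonneg ht0]
        linarith
      rw [hu, cbump_coe_of_small n habs]
      have : (n:ℝ) * (t/(n:ℝ)) = t := by field_simp
      rw [this]
      unfold tri
      rw [abs_of_nonneg ht0, max_eq_right (by linarith)]
  -- all other terms vanish
  have hF0 : ∀ k ∈ Finset.range n, k ∉ ({k₁, M} : Finset ℕ) →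
      cbump n ↑(x - ((k:ℝ)+1)/(n:ℝ)) = 0 := by
    intro k hk hknot
    simp only [Finset.mem_insert, Finset.mem_singleton, not_or] at hknot
    obtain ⟨hkk₁, hkM⟩ := hknot
    rw [Finset.mem_range] at hk
    apply cbump_coe_eq_zero
    intro j
    have harg : (n:ℝ) * (x - ((k:ℝ)+1)/(n:ℝ)) - (n:ℝ) * (j:ℤ)
        = t + ((M:ℤ) - ((k:ℕ):ℤ) - 1 - (n:ℕ) * j : ℤ) := by
      push_cast
      rw [htdef, hsdef]
      field_simp
      ring
    set i : ℤ := (M:ℤ) - ((k:ℕ):ℤ) - 1 - (n:ℕ) * j with hidef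
    rw [harg]
    have hnZ : (0:ℤ) < (n:ℕ) := by exact_mod_cast (by omega : 0 < n)
    have hi0 : i ≠ 0 := by
      intro h
      have hj : (n:ℤ) * j = (M:ℤ) - k - 1 := by omega
      have hjlt : j < 1 := by
        have h1 : (n:ℤ) * j ≤ (n:ℤ) - 2 := by omega
        have h2 : (n:ℤ) * j < (n:ℤ) * 1 := by omega
        exact lt_of_mul_lt_mul_left h2 (by omega)
      have hjge : -1 ≤ j := by
        have h1 : (n:ℤ) * (-1) ≤ (n:ℤ) * j := by omega
        exact le_of_mul_le_mul_left h1 (by omega)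
      interval_cases j
      · -- j = -1 : k = M + n - 1, forces M = 0, k = n-1 = k₁
        rcases hk₁cases with ⟨hM0, hk₁⟩ | ⟨hM1, hk₁⟩ <;> omega
      · -- j = 0 : k = M - 1, M ≥ 1, k = k₁
        rcases hk₁cases with ⟨hM0, hk₁⟩ | ⟨hM1, hk₁⟩ <;> omega
    have him1 : i ≠ -1 := by
      intro h
      have hj : (n:ℤ) * j = (M:ℤ) - k := by omega
      have hjlt : j < 1 := by
        have h2 : (n:ℤ) * j < (n:ℤ) * 1 := by omega
        exact lt_of_mul_lt_mul_left h2 (by omega)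
      have hjge : 0 ≤ j := by
        have h1 : (n:ℤ) * 0 ≤ (n:ℤ) * j + (n:ℤ) - 1 := by omega
        nlinarith
      interval_cases j
      · omega
    have hcases : 1 ≤ i ∨ i ≤ -2 := by omega
    rcases hcases with hc | hc
    · have : (1:ℝ) ≤ t + (i:ℝ) := by
        have : (1:ℝ) ≤ (i:ℝ) := by exact_mod_cast hc
        linarith
      calc (1:ℝ) ≤ t + (i:ℝ) := this
        _ ≤ |t + (i:ℝ)| := le_abs_self _
    · have : (1:ℝ) ≤ -(t + (i:ℝ)) := by
        have : (i:ℝ) ≤ -2 := by exact_mod_cast hc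
        linarith
      calc (1:ℝ) ≤ -(t + (i:ℝ)) := this
        _ ≤ |t + (i:ℝ)| := neg_le_abs _
  -- assemble
  have hsub : ({k₁, M} : Finset ℕ) ⊆ Finset.range n := by
    intro k hk
    simp only [Finset.mem_insert, Finset.mem_singleton] at hk
    rcases hk with rfl | rfl <;> simp [Finset.mem_range, hk₁n, hMn]
  rw [← Finset.sum_subset hsub (fun k hk hk' => hF0 k hk hk')]
  rw [Finset.sum_pair hne, hF1, hF2]
  ring

end




/-- For an irrational rotation of the circle `ℝ/ℤ`, for every prime `p` and
every `ε > 0` there are two single cyclic Rokhlin towers of height `p` made of continuous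
`[0,1]`-valued functions: the members of each tower are pairwise orthogonal, all of them sum to
`1`, and the rotation by `θ` permutes each tower cyclically up to `ε`. -/
theorem irrational_rotation_single_towers (θ : ℝ) (hθ : Irrational θ)
    (p : ℕ) (hp : p.Prime) (ε : ℝ) (hε : 0 < ε) :
    ∃ f g : ℕ → C(AddCircle (1 : ℝ), ℝ),
      (∀ j, j < p → ∀ x, 0 ≤ f j x ∧ f j x ≤ 1 ∧ 0 ≤ g j x ∧ g j x ≤ 1) ∧
      -- (i) orthogonality within each tower
      (∀ i j, i < p → j < p → i ≠ j → ∀ x, f i x * f j x = 0 ∧ g i x * g j x = 0) ∧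
      -- (ii) partition of unity
      (∀ x, ((∑ j ∈ Finset.range p, f j x) + ∑ j ∈ Finset.range p, g j x) = 1) ∧
      -- (iii) the rotation cyclically permutes each tower up to ε
      (∀ j, j < p → ∀ x : AddCircle (1 : ℝ),
        |f j (x - (θ : AddCircle (1 : ℝ))) - f ((j + 1) % p) x| < ε ∧
        |g j (x - (θ : AddCircle (1 : ℝ))) - g ((j + 1) % p) x| < ε) := by

  have hp0 : 0 < p := hp.pos
  have hp2 : 2 ≤ p := hp.two_le
  set n : ℕ := 2 * p with hndef
  have hn2 : 2 ≤ n := by omega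
  have hn0 : (0:ℝ) < (n:ℝ) := by positivity
  have hpR : (0:ℝ) < (p:ℝ) := by positivity
  have hnp : (n:ℝ) = 2 * (p:ℝ) := by exact_mod_cast rfl
  obtain ⟨z, hz⟩ := exists_approx θ hθ (1/(p:ℝ)) (ε/(n:ℝ)) (by positivity)
  -- the two towers
  refine ⟨fun j => ⟨fun x => cbump n (z • x - ↑((2*(j:ℝ)+1)/(n:ℝ))), ?_⟩,
          fun j => ⟨fun x => cbump n (z • x - ↑((2*(j:ℝ)+2)/(n:ℝ))), ?_⟩, ?_, ?_, ?_, ?_⟩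
  · exact (cbump_continuous n).comp ((continuous_zsmul z).sub continuous_const)
  · exact (cbump_continuous n).comp ((continuous_zsmul z).sub continuous_const)
  · -- bounds
    intro j hj x
    exact ⟨cbump_nonneg _ _, cbump_le_one _ _, cbump_nonneg _ _, cbump_le_one _ _⟩
  · -- orthogonality
    intro i j hi hj hij x
    have hdvd : ¬ ((p:ℤ) ∣ ((i:ℤ) - (j:ℤ))) := by
      intro hd
      have h1 : |(i:ℤ) - (j:ℤ)| < (p:ℤ) := by
        rw [abs_sub_lt_iff]; omega
      have := Int.eq_zero_of_abs_lt_dvd hd h1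
      have : (i:ℤ) = (j:ℤ) := by omega
      exact hij (by exact_mod_cast this)
    have hnorm : 2/(n:ℝ) ≤ ‖(↑((2*(i:ℝ)+1)/(n:ℝ)) - ↑((2*(j:ℝ)+1)/(n:ℝ)) : AddCircle (1:ℝ))‖ := by
      rw [← AddCircle.coe_sub]
      have harg : (2*(i:ℝ)+1)/(n:ℝ) - (2*(j:ℝ)+1)/(n:ℝ) = (((i:ℤ)-(j:ℤ) : ℤ):ℝ)/(p:ℝ) := by
        rw [hnp]; push_cast; field_simp; ring
      rw [harg]
      have := norm_div_nat_ge p hp0 ((i:ℤ)-(j:ℤ)) hdvd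
      calc 2/(n:ℝ) = 1/(p:ℝ) := by rw [hnp]; ring
        _ ≤ _ := this
    have hnorm' : 2/(n:ℝ) ≤ ‖(↑((2*(i:ℝ)+2)/(n:ℝ)) - ↑((2*(j:ℝ)+2)/(n:ℝ)) : AddCircle (1:ℝ))‖ := by
      rw [← AddCircle.coe_sub]
      have harg : (2*(i:ℝ)+2)/(n:ℝ) - (2*(j:ℝ)+2)/(n:ℝ) = (((i:ℤ)-(j:ℤ) : ℤ):ℝ)/(p:ℝ) := by
        rw [hnp]; push_cast; field_simp; ring
      rw [harg]
      have := norm_div_nat_ge p hp0 ((i:ℤ)-(j:ℤ)) hdvd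
      calc 2/(n:ℝ) = 1/(p:ℝ) := by rw [hnp]; ring
        _ ≤ _ := this
    exact ⟨cbump_mul_eq_zero (by omega) hnorm, cbump_mul_eq_zero (by omega) hnorm'⟩
  · -- partition of unity
    intro x
    simp only [ContinuousMap.coe_mk]
    have h3 := sum_range_even_odd (fun k => cbump n (z • x - ↑(((k:ℝ)+1)/(n:ℝ)))) p
    have h4 : ∑ k ∈ Finset.range (2*p), cbump n (z • x - ↑(((k:ℝ)+1)/(n:ℝ))) = 1 := by
      rw [← hndef]; exact cbump_sum n hn2 (z • x)
    have h1 : ∑ j ∈ Finset.range p, cbump n (z • x - ↑((2*(j:ℝ)+1)/(n:ℝ)))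
        = ∑ j ∈ Finset.range p, cbump n (z • x - ↑((((2*j:ℕ):ℝ)+1)/(n:ℝ))) :=
      Finset.sum_congr rfl (fun j _ => by norm_num)
    have h2 : ∑ j ∈ Finset.range p, cbump n (z • x - ↑((2*(j:ℝ)+2)/(n:ℝ)))
        = ∑ j ∈ Finset.range p, cbump n (z • x - ↑((((2*j+1:ℕ):ℝ)+1)/(n:ℝ))) :=
      Finset.sum_congr rfl (fun j _ => by push_cast; ring_nf)
    rw [h1, h2, ← h3]
    exact h4
  · -- approximate cyclicity
    intro j hj x
    set q : ℕ := (j+1)/p with hqdef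
    have hqmod : p * ((j+1)/p) + (j+1) % p = j + 1 := Nat.div_add_mod (j+1) p
    have hqR : (p:ℝ) * (q:ℝ) + (((j+1)%p : ℕ):ℝ) = (j:ℝ) + 1 := by
      rw [hqdef]; exact_mod_cast hqmod
    simp only [ContinuousMap.coe_mk]
    have key : ∀ c : ℝ, |cbump n (z • (x - (θ:AddCircle (1:ℝ))) - ↑((2*(j:ℝ)+c)/(n:ℝ)))
        - cbump n (z • x - ↑((2*((((j+1)%p : ℕ)):ℝ)+c)/(n:ℝ)))| < ε := by
      intro c
      set u : ℝ := (z:ℝ)*θ + (2*(j:ℝ)+c)/(n:ℝ) with hudef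
      set v : ℝ := (2*((((j+1)%p : ℕ)):ℝ)+c)/(n:ℝ) with hvdef
      have e1 : cbump n (z • (x - (θ:AddCircle (1:ℝ))) - ↑((2*(j:ℝ)+c)/(n:ℝ)))
          = cbump n (z • x - ↑u) := by
        congr 1
        rw [smul_sub, AddCircle.coe_add, sub_sub]
        congr 2
        rw [← AddCircle.coe_zsmul]
        congr 1
        exact zsmul_eq_mul θ z
      rw [e1]
      have hAB := cbump_lip n (z • x - ↑u) (z • x - ↑v)
      have e2 : (z • x - (↑u : AddCircle (1:ℝ))) - (z • x - ↑v) = ↑(v - u) := by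
        rw [AddCircle.coe_sub]; abel
      have harith : v - u = -((z:ℝ)*θ - 1/(p:ℝ)) - ((q:ℤ):ℝ) := by
        rw [hvdef, hudef, hnp]
        push_cast
        field_simp
        linear_combination 2 * hqR
      have e3 : ((v - u : ℝ) : AddCircle (1:ℝ)) = ↑(-((z:ℝ)*θ - 1/(p:ℝ))) := by
        rw [harith]; exact coe_sub_int _ _
      have e4 : ‖((v - u : ℝ) : AddCircle (1:ℝ))‖ = ‖(((z:ℝ)*θ - 1/(p:ℝ) : ℝ) : AddCircle (1:ℝ))‖ := by
        rw [e3, AddCircle.coe_neg, norm_neg]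
      calc |cbump n (z • x - ↑u) - cbump n (z • x - ↑v)|
          ≤ (n:ℝ) * ‖(z • x - (↑u : AddCircle (1:ℝ))) - (z • x - ↑v)‖ := hAB
        _ = (n:ℝ) * ‖(((z:ℝ)*θ - 1/(p:ℝ) : ℝ) : AddCircle (1:ℝ))‖ := by rw [e2, e4]
        _ < (n:ℝ) * (ε/(n:ℝ)) := by
            apply mul_lt_mul_of_pos_left hz hn0
        _ = ε := by field_simp
    exact ⟨key 1, by simpa using key 2⟩
end

section
/- Let T be a nonempty connected compact Hausdorff space and h : T → T a homeomorphism. Then for every integer p ≥ 2 there exists ε > 0 such that there is NO 0-dimensional Rokhlin tower system of height p with tolerance ε for h; in other words, no ℤ-action on C(T) for connected T has Rokhlin dimension 0. -/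
/-- A `d`-dimensional Rokhlin tower system of height `p` with tolerance `ε` for the
homeomorphism `h` (continuous `[0,1]`-valued functions `f l r j` for `l ∈ {0,…,d}`,
`r ∈ {0,1}`, `j ∈ {0,…,p-1+r}`, encoded as total functions vanishing outside this range). -/
def IsRokhlinSystem {T : Type*} [TopologicalSpace T] (h : T ≃ₜ T) (d p : ℕ) (ε : ℝ)
    (f : ℕ → ℕ → ℕ → C(T, ℝ)) : Prop :=
  (∀ l r j, ¬(l ≤ d ∧ r < 2 ∧ j < p + r) → f l r j = 0) ∧
  (∀ l r j (t : T), 0 ≤ f l r j t ∧ f l r j t ≤ 1) ∧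
  (∀ l ≤ d, ∀ q i r j, q < 2 → r < 2 → i < p + q → j < p + r → (q, i) ≠ (r, j) →
    ∀ t : T, |f l q i t * f l r j t| < ε) ∧
  (∀ t : T, |(∑ l ∈ Finset.range (d + 1),
      ((∑ j ∈ Finset.range p, f l 0 j t) + ∑ j ∈ Finset.range (p + 1), f l 1 j t)) - 1| < ε) ∧
  (∀ l ≤ d, ∀ r j, r < 2 → j + 1 < p + r → ∀ t : T,
    |f l r j (h.symm t) - f l r (j + 1) t| < ε) ∧
  (∀ l ≤ d, ∀ t : T,
    |(f l 0 (p - 1) (h.symm t) + f l 1 p (h.symm t)) - (f l 0 0 t + f l 1 0 t)| < ε)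


private lemma sum_range_le' {g : ℕ → ℝ} {n : ℕ} {c : ℝ} (hg : ∀ j < n, g j ≤ c) :
    ∑ j ∈ Finset.range n, g j ≤ n * c := by
  calc ∑ j ∈ Finset.range n, g j ≤ ∑ _j ∈ Finset.range n, c :=
        Finset.sum_le_sum (fun j hj => hg j (Finset.mem_range.1 hj))
    _ = n * c := by simp [mul_comm]

private lemma sum_range_le_add' {g : ℕ → ℝ} {n j1 : ℕ} {c : ℝ} (hj1 : j1 < n) (hc : 0 ≤ c)
    (hg : ∀ j < n, j ≠ j1 → g j ≤ c) :
    ∑ j ∈ Finset.range n, g j ≤ g j1 + n * c := by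
  rw [← Finset.add_sum_erase _ g (Finset.mem_range.2 hj1)]
  have h1 : ∑ j ∈ (Finset.range n).erase j1, g j ≤ (((Finset.range n).erase j1).card : ℝ) * c := by
    have := Finset.sum_le_card_nsmul ((Finset.range n).erase j1) g c
      (fun j hj => hg j (Finset.mem_range.1 (Finset.mem_of_mem_erase hj)) (Finset.ne_of_mem_erase hj))
    simpa [nsmul_eq_mul] using this
  have h2 : (((Finset.range n).erase j1).card : ℝ) ≤ (n : ℝ) := by
    have := Finset.card_le_card (Finset.erase_subset j1 (Finset.range n))
    exact_mod_cast (Finset.card_range n ▸ this)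
  have := mul_le_mul_of_nonneg_right h2 hc
  linarith

/-- For a homeomorphism of a nonempty connected compact Hausdorff space and any
height `p ≥ 2`, there is a tolerance `ε > 0` for which no 0-dimensional Rokhlin tower system of
height `p` exists; i.e. no ℤ-action on `C(T)` with `T` connected has Rokhlin dimension 0. -/
theorem no_rokhlin_dimension_zero_of_connected {T : Type*} [TopologicalSpace T] [CompactSpace T]
    [T2Space T] [ConnectedSpace T] (h : T ≃ₜ T) (p : ℕ) (hp : 2 ≤ p) :
    ∃ ε : ℝ, 0 < ε ∧ ¬ ∃ f : ℕ → ℕ → ℕ → C(T, ℝ), IsRokhlinSystem h 0 p ε f := by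
  have hp0 : (0 : ℝ) < p := by exact_mod_cast Nat.lt_of_lt_of_le (by norm_num) hp
  have hp2 : (2 : ℝ) ≤ p := by exact_mod_cast hp
  set δ : ℝ := ((100 : ℝ) * p)⁻¹ with hδdef
  have hδpos : 0 < δ := by positivity
  have hpδ : (p : ℝ) * δ = 1 / 100 := by
    field_simp [hδdef]
    rw [hδdef]
    field_simp
  have hδle : δ ≤ 1 / 200 := by
    rw [hδdef]
    rw [inv_le_comm₀ (by positivity) (by norm_num)]
    nlinarith
  set ε : ℝ := δ ^ 2 with hεdef
  have hεpos : 0 < ε := by positivity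
  have hεle : ε ≤ 1 / 40000 := by
    have : δ * δ ≤ (1/200) * (1/200) := mul_le_mul hδle hδle hδpos.le (by norm_num)
    nlinarith [sq_nonneg δ]
  refine ⟨ε, hεpos, ?_⟩
  rintro ⟨f, hzero, hbound, horth, hsum, hshift, htop⟩
  -- sum bound
  have hAB : ∀ t : T, 1 - ε <
      (∑ j ∈ Finset.range p, f 0 0 j t) + ∑ j ∈ Finset.range (p + 1), f 0 1 j t := by
    intro t
    have := hsum t
    rw [Finset.sum_range_one] at this
    have := (abs_lt.1 this).1
    linarith
  -- pairwise: if one is > δ, the others are ≤ δ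
  have hpair : ∀ (t : T) (q i r j : ℕ), q < 2 → r < 2 → i < p + q → j < p + r →
      (q, i) ≠ (r, j) → δ < f 0 q i t → f 0 r j t ≤ δ := by
    intro t q i r j hq hr hi hj hne hbig
    by_contra hlt
    push_neg at hlt
    have h1 : ε < f 0 q i t * f 0 r j t := by
      have := mul_lt_mul'' hbig hlt hδpos.le hδpos.le
      nlinarith
    have h2 := (le_abs_self _).trans_lt (horth 0 le_rfl q i r j hq hr hi hj hne t)
    linarith
  -- key claim: at every point some tower function exceeds 1/2
  have hA : ∀ t : T, ∃ r j, r < 2 ∧ j < p + r ∧ 1 / 2 < f 0 r j t := by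
    intro t
    by_contra hcon
    push_neg at hcon
    by_cases hbig : ∃ r j, r < 2 ∧ j < p + r ∧ δ < f 0 r j t
    · obtain ⟨r1, j1, hr1, hj1, hf1⟩ := hbig
      have hothers : ∀ r j, r < 2 → j < p + r → (r, j) ≠ (r1, j1) → f 0 r j t ≤ δ := by
        intro r j hr hj hne
        exact hpair t r1 j1 r j hr1 hr hj1 hj (Ne.symm hne) hf1
      have hkey : (∑ j ∈ Finset.range p, f 0 0 j t) + (∑ j ∈ Finset.range (p+1), f 0 1 j t)
          ≤ f 0 r1 j1 t + (2 * p + 1) * δ := by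
        interval_cases r1
        · have hB : ∑ j ∈ Finset.range (p+1), f 0 1 j t ≤ (p + 1) * δ := by
            have := sum_range_le' (g := fun j => f 0 1 j t) (n := p+1) (c := δ)
              (fun j hj => hothers 1 j (by norm_num) hj (by simp))
            push_cast at this ⊢
            linarith
          have hA' : ∑ j ∈ Finset.range p, f 0 0 j t ≤ f 0 0 j1 t + p * δ :=
            sum_range_le_add' (by simpa using hj1) hδpos.le
              (fun j hj hne => hothers 0 j (by norm_num) (by simpa using hj) (by simp [hne]))
          push_cast
          linarith
        · have hA' : ∑ j ∈ Finset.range p, f 0 0 j t ≤ p * δ := by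
            exact sum_range_le' (fun j hj => hothers 0 j (by norm_num) (by simpa using hj) (by simp))
          have hB : ∑ j ∈ Finset.range (p+1), f 0 1 j t ≤ f 0 1 j1 t + (p + 1) * δ := by
            have := sum_range_le_add' (g := fun j => f 0 1 j t) (n := p+1) (j1 := j1)
              hj1 hδpos.le (fun j hj hne => hothers 1 j (by norm_num) hj (by simp [hne]))
            push_cast at this ⊢
            linarith
          push_cast
          linarith
      have h2p : (2 * (p : ℝ) + 1) * δ = 2 / 100 + δ := by linear_combination 2 * hpδ
      have hc := hcon r1 j1 hr1 hj1
      have hab := hAB t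
      linarith
    · push_neg at hbig
      have hA' : ∑ j ∈ Finset.range p, f 0 0 j t ≤ p * δ :=
        sum_range_le' (fun j hj => hbig 0 j (by norm_num) (by simpa using hj))
      have hB : ∑ j ∈ Finset.range (p+1), f 0 1 j t ≤ (p + 1) * δ := by
        have := sum_range_le' (g := fun j => f 0 1 j t) (n := p+1) (c := δ)
          (fun j hj => hbig 1 j (by norm_num) hj)
        push_cast at this ⊢
        linarith
      have hab := hAB t
      have h2p : 2 * ((p:ℝ) * δ) + δ = 2 / 100 + δ := by linear_combination 2 * hpδ
      nlinarith
  -- fix a point and the dominant index there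
  obtain ⟨t0⟩ : Nonempty T := inferInstance
  obtain ⟨r0, j0, hr0, hj0, hf0⟩ := hA t0
  -- the set where the dominant function exceeds 1/2 is clopen, hence everything
  have huniv : ∀ t : T, 1 / 2 < f 0 r0 j0 t := by
    have hSopen : IsOpen {t : T | 1 / 2 < f 0 r0 j0 t} :=
      isOpen_lt continuous_const (f 0 r0 j0).continuous
    have hSeq : {t : T | 1 / 2 < f 0 r0 j0 t} = {t : T | 1 / 2 ≤ f 0 r0 j0 t} := by
      ext t
      simp only [Set.mem_setOf_eq]
      constructor
      · exact le_of_lt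
      · intro hle
        obtain ⟨r, j, hr, hj, hf⟩ := hA t
        by_cases hne : (r, j) = (r0, j0)
        · obtain ⟨rfl, rfl⟩ := Prod.mk.injEq .. ▸ hne
          exact hf
        · exfalso
          have h1 : ε < f 0 r j t * f 0 r0 j0 t := by nlinarith
          have h2 := (le_abs_self _).trans_lt (horth 0 le_rfl r j r0 j0 hr hr0 hj hj0 hne t)
          linarith
    have hSclosed : IsClosed {t : T | 1 / 2 < f 0 r0 j0 t} := by
      rw [hSeq]
      exact isClosed_le continuous_const (f 0 r0 j0).continuous
    have := (IsClopen.eq_univ ⟨hSclosed, hSopen⟩ ⟨t0, hf0⟩ : _)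
    intro t
    have ht : t ∈ {t : T | 1 / 2 < f 0 r0 j0 t} := this ▸ Set.mem_univ t
    exact ht
  -- every other tower function is small everywhere
  have hsmall : ∀ r j, r < 2 → j < p + r → (r, j) ≠ (r0, j0) → ∀ t : T, f 0 r j t < 2 * ε := by
    intro r j hr hj hne t
    have h1 := (le_abs_self _).trans_lt (horth 0 le_rfl r j r0 j0 hr hr0 hj hj0 hne t)
    have h2 := huniv t
    have h3 := (hbound 0 r j t).1
    nlinarith
  -- the dominant index must be the top of its tower
  have htopidx : j0 + 1 = p + r0 := by
    by_contra hne
    have hlt : j0 + 1 < p + r0 := lt_of_le_of_ne hj0 hne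
    have h1 := (abs_lt.1 (hshift 0 le_rfl r0 j0 hr0 hlt t0)).2
    have h2 := huniv (h.symm t0)
    have h3 := hsmall r0 (j0 + 1) hr0 hlt (by simp) t0
    -- 1/2 - ε < f 0 r0 (j0+1) t0 < 2ε
    linarith
  -- contradiction via the cyclic condition
  have h4 := (abs_lt.1 (htop 0 le_rfl t0)).2
  have hb1 := (hbound 0 0 (p - 1) (h.symm t0)).1
  have hb2 := (hbound 0 1 p (h.symm t0)).1
  interval_cases r0
  · -- j0 = p - 1
    have hj0eq : j0 = p - 1 := by omega
    subst hj0eq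
    have h5 := huniv (h.symm t0)
    have h6 := hsmall 0 0 (by norm_num) (by omega)
      (fun hc => by rw [Prod.mk.injEq] at hc; omega) t0
    have h7 := hsmall 1 0 (by norm_num) (by omega)
      (fun hc => by rw [Prod.mk.injEq] at hc; omega) t0
    linarith
  · -- j0 = p
    have hj0eq : j0 = p := by omega
    subst hj0eq
    have h5 := huniv (h.symm t0)
    have h6 := hsmall 0 0 (by norm_num) (by omega)
      (fun hc => by rw [Prod.mk.injEq] at hc; omega) t0
    have h7 := hsmall 1 0 (by norm_num) (by omega)
      (fun hc => by rw [Prod.mk.injEq] at hc; omega) t0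
    linarith
end

section
/- Let A be a unital C*-algebra and α an automorphism of A with Rokhlin dimension at most d. Then for every finite set F ⊆ A, every integer p ≥ 1 and every ε > 0 there exist positive contractions g^{(l)}_j ∈ A, for l ∈ {0,…,2d+1} and j ∈ {0,…,p−1}, such that: (i) ‖g^{(l)}_i g^{(l)}_j‖ < ε for each l and all i ≠ j; (ii) ‖Σ_{l,j} g^{(l)}_j − 1‖ < ε; (iii) ‖α(g^{(l)}_j) − g^{(l)}_{(j+1 mod p)}‖ < ε for all l and j (cyclically); (iv) ‖[g^{(l)}_j, a]‖ < ε for all l, j and a ∈ F. In other words, α has Rokhlin dimension at most 2d+1 with single towers, and all single towers can be chosen of the same height p. -/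
/-- `α` has Rokhlin dimension at most `d`: for every finite set `F ⊆ A`, every height `p` and
every `ε > 0` there are positive contractions `f l r j` (for `l ∈ {0,…,d}`, `r ∈ {0,1}`,
`j ∈ {0,…,p-1+r}`, encoded as total families vanishing outside this index range) forming
approximately orthogonal, approximately central double Rokhlin towers which approximately
sum to `1` and are approximately shifted by `α`. -/
def RokhlinDimLE {A : Type*} [CStarAlgebra A] [PartialOrder A] [StarOrderedRing A]
    (α : A ≃⋆ₐ[ℂ] A) (d : ℕ) : Prop :=
  ∀ F : Finset A, ∀ p : ℕ, ∀ ε : ℝ, 0 < ε →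
    ∃ f : ℕ → ℕ → ℕ → A,
      (∀ l r j, ¬(l ≤ d ∧ r < 2 ∧ j < p + r) → f l r j = 0) ∧
      (∀ l r j, 0 ≤ f l r j ∧ ‖f l r j‖ ≤ 1) ∧
      -- (1)
      (∀ l ≤ d, ∀ q i r j, q < 2 → r < 2 → i < p + q → j < p + r → (q, i) ≠ (r, j) →
        ‖f l q i * f l r j‖ < ε) ∧
      -- (2)
      (‖(∑ l ∈ Finset.range (d + 1),
          ((∑ j ∈ Finset.range p, f l 0 j) + ∑ j ∈ Finset.range (p + 1), f l 1 j)) - 1‖ < ε) ∧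
      -- (3)
      (∀ l ≤ d, ∀ r j, r < 2 → j + 1 < p + r → ‖α (f l r j) - f l r (j + 1)‖ < ε) ∧
      -- (4)
      (∀ l ≤ d, ‖α (f l 0 (p - 1) + f l 1 p) - (f l 0 0 + f l 1 0)‖ < ε) ∧
      -- (5)
      (∀ l ≤ d, ∀ r j, r < 2 → j < p + r → ∀ a ∈ F, ‖f l r j * a - a * f l r j‖ < ε)

open Finset

/-- clamp to [0,1] -/
noncomputable def clamp01 (x : ℝ) : ℝ := max 0 (min 1 x)

lemma clamp01_nonneg (x : ℝ) : 0 ≤ clamp01 x := le_max_left _ _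

lemma clamp01_le_one (x : ℝ) : clamp01 x ≤ 1 :=
  max_le zero_le_one (min_le_left _ _)

lemma clamp01_of_one_le {x : ℝ} (h : 1 ≤ x) : clamp01 x = 1 := by
  simp [clamp01, min_eq_left h]

lemma clamp01_of_nonpos {x : ℝ} (h : x ≤ 0) : clamp01 x = 0 := by
  have : min 1 x ≤ 0 := le_trans (min_le_right _ _) h
  simp [clamp01, max_eq_left this]

lemma clamp01_lip (x y : ℝ) : |clamp01 x - clamp01 y| ≤ |x - y| := by
  have hx : x - y ≤ |x - y| := le_abs_self _
  have hy : y - x ≤ |x - y| := by rw [abs_sub_comm]; exact le_abs_self _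
  have habs : 0 ≤ |x - y| := abs_nonneg _
  rw [abs_sub_le_iff]
  unfold clamp01
  constructor <;>
  · simp only [max_def, min_def]
    split_ifs <;> linarith

/-- the weight profile on the long tower -/
noncomputable def wcl (R s : ℕ) : ℝ :=
  if s ≤ 2*R then clamp01 ((2*R - (s:ℝ))/R) else clamp01 (((s:ℝ) - (2*R+1))/R)

lemma wcl_nonneg (R s : ℕ) : 0 ≤ wcl R s := by
  unfold wcl; split_ifs <;> exact clamp01_nonneg _

lemma wcl_le_one (R s : ℕ) : wcl R s ≤ 1 := by
  unfold wcl; split_ifs <;> exact clamp01_le_one _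

lemma wcl_zero (R : ℕ) (hR : 0 < R) : wcl R 0 = 1 := by
  have hR' : (0:ℝ) < R := by exact_mod_cast hR
  rw [wcl, if_pos (Nat.zero_le _), clamp01_of_one_le]
  rw [le_div_iff₀ hR']
  push_cast; linarith

lemma wcl_large (R s : ℕ) (hR : 0 < R) (hs : 3*R+1 ≤ s) : wcl R s = 1 := by
  have hR' : (0:ℝ) < R := by exact_mod_cast hR
  have hs' : ¬ s ≤ 2*R := by omega
  rw [wcl, if_neg hs', clamp01_of_one_le]
  rw [le_div_iff₀ hR']
  have : (3*R+1 : ℝ) ≤ (s:ℝ) := by exact_mod_cast hs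
  push_cast at this ⊢; linarith

lemma wcl_2R (R : ℕ) : wcl R (2*R) = 0 := by
  rw [wcl, if_pos le_rfl, clamp01_of_nonpos]
  simp

lemma wcl_2R1 (R : ℕ) : wcl R (2*R+1) = 0 := by
  rw [wcl, if_neg (by omega), clamp01_of_nonpos]
  push_cast; simp

lemma wcl_lip (R s : ℕ) (hR : 0 < R) : |wcl R s - wcl R (s+1)| ≤ 1/R := by
  have hR' : (0:ℝ) < R := by exact_mod_cast hR
  rcases le_or_gt (s+1) (2*R) with h | h
  · rw [wcl, wcl, if_pos (by omega), if_pos h]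
    refine (clamp01_lip _ _).trans ?_
    rw [div_sub_div_same]
    rw [abs_div, abs_of_pos hR', div_le_div_iff_of_pos_right hR']
    push_cast
    rw [show (2*(R:ℝ) - s) - (2*R - (s+1)) = 1 by ring]
    simp
  · rcases le_or_gt s (2*R) with h2 | h2
    · have hs : s = 2*R := by omega
      rw [hs, wcl_2R, show 2*R+1 = 2*R+1 from rfl, wcl_2R1]
      simp only [sub_zero, abs_zero]
      positivity
    · rw [wcl, wcl, if_neg (by omega), if_neg (by omega)]
      refine (clamp01_lip _ _).trans ?_
      rw [div_sub_div_same, abs_div, abs_of_pos hR', div_le_div_iff_of_pos_right hR']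
      push_cast
      rw [show ((s:ℝ) - (2*R+1)) - ((s+1) - (2*R+1)) = -1 by ring]
      simp

lemma mod_succ_iff {p x j : ℕ} (hp : 0 < p) (hj : j < p) :
    x % p = j ↔ (x+1) % p = (j+1) % p := by
  constructor
  · intro h
    conv_lhs => rw [show x + 1 = x % p + 1 + p*(x/p) by
      have := Nat.mod_add_div x p; omega]
    rw [Nat.add_mul_mod_self_left, h]
  · intro h
    have hx : x % p < p := Nat.mod_lt _ hp
    have h2 : (x % p + 1) % p = (j+1) % p := by
      conv_lhs at h => rw [show x + 1 = x % p + 1 + p*(x/p) by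
        have := Nat.mod_add_div x p; omega]
      rwa [Nat.add_mul_mod_self_left] at h
    rcases Nat.lt_or_ge (x % p + 1) p with h3 | h3
    · rw [Nat.mod_eq_of_lt h3] at h2
      rcases Nat.lt_or_ge (j+1) p with h4 | h4
      · rw [Nat.mod_eq_of_lt h4] at h2; omega
      · have hjp : j + 1 = p := by omega
        rw [hjp, Nat.mod_self] at h2; omega
    · have hy : x % p + 1 = p := by omega
      rw [hy, Nat.mod_self] at h2
      rcases Nat.lt_or_ge (j+1) p with h4 | h4
      · rw [Nat.mod_eq_of_lt h4] at h2; omega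
      · omega

lemma succ_mod_eq_zero_iff {p j : ℕ} (hp : 0 < p) (hj : j < p) :
    (j+1) % p = 0 ↔ j = p - 1 := by
  rcases Nat.lt_or_ge (j+1) p with h | h
  · rw [Nat.mod_eq_of_lt h]; omega
  · have : j + 1 = p := by omega
    rw [this, Nat.mod_self]; omega

lemma pred_mod {p N : ℕ} (hp : 0 < p) (hN : 0 < N) (hNmod : N % p = 0) :
    (N - 1) % p = p - 1 := by
  have h1 : p - 1 < p := by omega
  refine (mod_succ_iff hp h1).mpr ?_
  rw [show N - 1 + 1 = N by omega, show p - 1 + 1 = p by omega, hNmod, Nat.mod_self]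

/-- tower-0 coefficient of color `l'`, class `j`, position `s` -/
noncomputable def acoef (p l' j s : ℕ) : ℝ :=
  if l' % 2 = 0 then (if s % p = j then 1 else 0) else 0

/-- tower-1 coefficient of color `l'`, class `j`, position `s` -/
noncomputable def bcoef (p R l' j s : ℕ) : ℝ :=
  if l' % 2 = 0 then
    wcl R s * (if s ≤ 2*R then (if s % p = j then (1:ℝ) else 0)
               else (if (s + p - 1) % p = j then 1 else 0))
  else (1 - wcl R s) * (if s % p = j then 1 else 0)

lemma acoef_nonneg (p l' j s : ℕ) : 0 ≤ acoef p l' j s := by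
  unfold acoef; split_ifs <;> norm_num

lemma acoef_le_one (p l' j s : ℕ) : acoef p l' j s ≤ 1 := by
  unfold acoef; split_ifs <;> norm_num

lemma bcoef_nonneg (R p l' j s : ℕ) : 0 ≤ bcoef p R l' j s := by
  have h1 := wcl_nonneg R s
  have h2 := wcl_le_one R s
  unfold bcoef; split_ifs <;> nlinarith

lemma bcoef_le_one (R p l' j s : ℕ) : bcoef p R l' j s ≤ 1 := by
  have h1 := wcl_nonneg R s
  have h2 := wcl_le_one R s
  unfold bcoef; split_ifs <;> nlinarith

lemma acoef_mul_eq_zero (p l' s : ℕ) {i j : ℕ} (hij : i ≠ j) :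
    acoef p l' i s * acoef p l' j s = 0 := by
  unfold acoef; split_ifs <;> simp_all

lemma bcoef_mul_eq_zero (p R l' s : ℕ) {i j : ℕ} (hij : i ≠ j) :
    bcoef p R l' i s * bcoef p R l' j s = 0 := by
  unfold bcoef; split_ifs <;> simp_all <;> ring

lemma acoef_shift {p : ℕ} (l' s : ℕ) {j : ℕ} (hp : 0 < p) (hj : j < p) :
    acoef p l' j s = acoef p l' ((j+1) % p) (s+1) := by
  unfold acoef
  rcases eq_or_ne (l' % 2) 0 with h | h
  · rw [if_pos h, if_pos h, if_congr (mod_succ_iff hp hj) rfl rfl]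
  · rw [if_neg h, if_neg h]

lemma acoef_top_iff {p N l' j : ℕ} (hp : 0 < p) (hj : j < p) (hN : 0 < N)
    (hNmod : N % p = 0) :
    acoef p l' j (N - 1) = (if l' % 2 = 0 then (if j = p - 1 then (1:ℝ) else 0) else 0) := by
  unfold acoef
  rw [pred_mod hp hN hNmod]
  rcases eq_or_ne (l' % 2) 0 with h | h
  · rw [if_pos h, if_pos h, if_congr (eq_comm) rfl rfl]
  · rw [if_neg h, if_neg h]

lemma bcoef_top {p R N l' j : ℕ} (hp : 0 < p) (hR : 0 < R) (hj : j < p)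
    (hNmod : N % p = 0) (hNge : 3*R+1 ≤ N) :
    bcoef p R l' j N = acoef p l' j (N - 1) := by
  have hN : 0 < N := by omega
  rw [acoef_top_iff hp hj hN hNmod]
  unfold bcoef
  rcases eq_or_ne (l' % 2) 0 with h | h
  · rw [if_pos h, if_pos h, wcl_large R N hR hNge, one_mul,
      if_neg (show ¬ N ≤ 2*R by omega)]
    have : (N + p - 1) % p = (N - 1) % p := by
      rw [show N + p - 1 = (N-1) + p by omega, Nat.add_mod_right]
    rw [this, pred_mod hp hN hNmod, if_congr (eq_comm) rfl rfl]
  · rw [if_neg h, if_neg h, wcl_large R N hR hNge]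
    ring

lemma acoef_bot {p N l' j : ℕ} (hp : 0 < p) (hj : j < p) (hN : 0 < N)
    (hNmod : N % p = 0) :
    acoef p l' ((j+1) % p) 0 = acoef p l' j (N - 1) := by
  rw [acoef_top_iff hp hj hN hNmod]
  unfold acoef
  rcases eq_or_ne (l' % 2) 0 with h | h
  · rw [if_pos h, if_pos h, Nat.zero_mod]
    have : (0 = (j+1) % p) ↔ (j = p - 1) := by
      rw [eq_comm, succ_mod_eq_zero_iff hp hj]
    rw [if_congr this rfl rfl]
  · rw [if_neg h, if_neg h]

lemma bcoef_bot {p R N l' j : ℕ} (hp : 0 < p) (hR : 0 < R) (hj : j < p) (hN : 0 < N)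
    (hNmod : N % p = 0) :
    bcoef p R l' ((j+1) % p) 0 = acoef p l' j (N - 1) := by
  rw [acoef_top_iff hp hj hN hNmod]
  unfold bcoef
  rcases eq_or_ne (l' % 2) 0 with h | h
  · rw [if_pos h, if_pos h, wcl_zero R hR, one_mul, if_pos (Nat.zero_le _), Nat.zero_mod]
    have : (0 = (j+1) % p) ↔ (j = p - 1) := by
      rw [eq_comm, succ_mod_eq_zero_iff hp hj]
    rw [if_congr this rfl rfl]
  · rw [if_neg h, if_neg h, wcl_zero R hR]
    ring

lemma bcoef_lip {p R : ℕ} (l' s : ℕ) {j : ℕ} (hp : 0 < p) (hR : 0 < R) (hj : j < p) :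
    |bcoef p R l' j s - bcoef p R l' ((j+1) % p) (s+1)| ≤ 1/R := by
  have hlip := wcl_lip R s hR
  have h1R : (0:ℝ) ≤ 1/R := by positivity
  unfold bcoef
  rcases eq_or_ne (l' % 2) 0 with h | h
  · rw [if_pos h, if_pos h]
    rcases le_or_gt (s+1) (2*R) with h2 | h2
    · rw [if_pos (show s ≤ 2*R by omega), if_pos h2,
        if_congr (mod_succ_iff hp hj) rfl rfl]
      split_ifs
      · rw [mul_one, mul_one]; exact hlip
      · simpa using h1R
    · rcases le_or_gt s (2*R) with h3 | h3
      · have hs : s = 2*R := by omega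
        rw [hs, wcl_2R, show 2*R+1 = 2*R+1 from rfl, wcl_2R1]
        simpa using h1R
      · rw [if_neg (show ¬ s ≤ 2*R by omega), if_neg (show ¬ s + 1 ≤ 2*R by omega)]
        have hcond : ((s + p - 1) % p = j) ↔ ((s + 1 + p - 1) % p = (j+1) % p) := by
          rw [show s + 1 + p - 1 = (s + p - 1) + 1 by omega]
          exact mod_succ_iff hp hj
        rw [if_congr hcond rfl rfl]
        split_ifs
        · rw [mul_one, mul_one]; exact hlip
        · simpa using h1R
  · rw [if_neg h, if_neg h, if_congr (mod_succ_iff hp hj) rfl rfl]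
    split_ifs
    · rw [mul_one, mul_one]
      rw [show (1 - wcl R s) - (1 - wcl R (s+1)) = -(wcl R s - wcl R (s+1)) by ring, abs_neg]
      exact hlip
    · simpa using h1R

lemma acoef_sum {p : ℕ} (hp : 0 < p) (l' s : ℕ) :
    ∑ j ∈ range p, acoef p l' j s = if l' % 2 = 0 then 1 else 0 := by
  unfold acoef
  rcases eq_or_ne (l' % 2) 0 with h | h
  · simp only [if_pos h]
    rw [Finset.sum_ite_eq]
    simp [Nat.mod_lt s hp]
  · simp [if_neg h]

lemma bcoef_sum {p : ℕ} (R : ℕ) (hp : 0 < p) (l' s : ℕ) :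
    ∑ j ∈ range p, bcoef p R l' j s = if l' % 2 = 0 then wcl R s else 1 - wcl R s := by
  unfold bcoef
  rcases eq_or_ne (l' % 2) 0 with h | h
  · simp only [if_pos h, ← Finset.mul_sum]
    rcases le_or_gt s (2*R) with h2 | h2
    · simp only [if_pos h2]
      rw [Finset.sum_ite_eq]
      simp [Nat.mod_lt s hp]
    · simp only [if_neg (not_le.mpr h2)]
      rw [Finset.sum_ite_eq]
      simp [Nat.mod_lt (s + p - 1) hp]
  · simp only [if_neg h, ← Finset.mul_sum]
    rw [Finset.sum_ite_eq]
    simp [Nat.mod_lt s hp]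

lemma sum_range_two_mul {M : Type*} [AddCommMonoid M] (n : ℕ) (h : ℕ → M) :
    ∑ i ∈ range (2*n), h i = ∑ l ∈ range n, (h (2*l) + h (2*l+1)) := by
  induction n with
  | zero => simp
  | succ n ih =>
    rw [Finset.sum_range_succ, ← ih, show 2*(n+1) = (2*n+1)+1 by ring,
      Finset.sum_range_succ, Finset.sum_range_succ]
    abel

open Finset

section Helpers

variable {A : Type*} [CStarAlgebra A] [PartialOrder A] [StarOrderedRing A]

/-- Any subfamily of the towers with coefficients in `[0,B]` has norm at most `B(1+ε')`. -/
lemma tower_norm_bound [Nontrivial A] (f : ℕ → ℕ → ℕ → A) (d N : ℕ) (ε' : ℝ)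
    (hfc : ∀ l r j, 0 ≤ f l r j)
    (h2 : ‖(∑ l ∈ range (d+1),
        ((∑ s ∈ range N, f l 0 s) + ∑ s ∈ range (N+1), f l 1 s)) - 1‖ ≤ ε')
    (l0 : ℕ) (hl0 : l0 ≤ d) (B : ℝ) (hB : 0 ≤ B) (u v : ℕ → ℝ)
    (hu : ∀ s, 0 ≤ u s ∧ u s ≤ B) (hv : ∀ s, 0 ≤ v s ∧ v s ≤ B) :
    ‖(∑ s ∈ range N, u s • f l0 0 s) + ∑ s ∈ range (N+1), v s • f l0 1 s‖ ≤ B * (1 + ε') := by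
  set S : A := ∑ l ∈ range (d+1),
      ((∑ s ∈ range N, f l 0 s) + ∑ s ∈ range (N+1), f l 1 s) with hSdef
  have hSnorm : ‖S‖ ≤ 1 + ε' := by
    calc ‖S‖ ≤ ‖S - 1‖ + ‖(1:A)‖ := by
          simpa using norm_add_le (S - 1) 1
      _ ≤ ε' + 1 := by rw [norm_one]; linarith
      _ = 1 + ε' := by ring
  set X : A := (∑ s ∈ range N, u s • f l0 0 s) + ∑ s ∈ range (N+1), v s • f l0 1 s with hXdef
  have hX0 : 0 ≤ X :=
    add_nonneg (Finset.sum_nonneg fun s _ => smul_nonneg (hu s).1 (hfc _ _ _))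
      (Finset.sum_nonneg fun s _ => smul_nonneg (hv s).1 (hfc _ _ _))
  have step1 : X ≤ B • ((∑ s ∈ range N, f l0 0 s) + ∑ s ∈ range (N+1), f l0 1 s) := by
    rw [smul_add, Finset.smul_sum, Finset.smul_sum]
    exact add_le_add
      (Finset.sum_le_sum fun s _ => smul_le_smul_of_nonneg_right (hu s).2 (hfc _ _ _))
      (Finset.sum_le_sum fun s _ => smul_le_smul_of_nonneg_right (hv s).2 (hfc _ _ _))
  have step2 : (∑ s ∈ range N, f l0 0 s) + ∑ s ∈ range (N+1), f l0 1 s ≤ S := by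
    refine Finset.single_le_sum (f := fun l => (∑ s ∈ range N, f l 0 s) +
      ∑ s ∈ range (N+1), f l 1 s) (fun i _ => add_nonneg
        (Finset.sum_nonneg fun s _ => hfc _ _ _)
        (Finset.sum_nonneg fun s _ => hfc _ _ _)) (Finset.mem_range.mpr (by omega))
  have hXle : X ≤ B • S := step1.trans (smul_le_smul_of_nonneg_left step2 hB)
  calc ‖X‖ ≤ ‖B • S‖ := CStarAlgebra.norm_le_norm_of_nonneg_of_le hX0 hXle
    _ = B * ‖S‖ := by rw [norm_smul, Real.norm_of_nonneg hB]
    _ ≤ B * (1 + ε') := mul_le_mul_of_nonneg_left hSnorm hB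

/-- Norm bound for the product of two coefficient combinations of towers of one color. -/
lemma tower_prod_bound (f : ℕ → ℕ → ℕ → A) (N : ℕ) (ε' : ℝ) (hε' : 0 < ε')
    (l0 : ℕ)
    (h1 : ∀ q i r j, q < 2 → r < 2 → i < N + q → j < N + r → (q, i) ≠ (r, j) →
      ‖f l0 q i * f l0 r j‖ < ε')
    (r q n m : ℕ) (hr : r < 2) (hq : q < 2) (hn : n ≤ N + r) (hm : m ≤ N + q)
    (u v : ℕ → ℝ) (hu : ∀ s, 0 ≤ u s ∧ u s ≤ 1) (hv : ∀ s, 0 ≤ v s ∧ v s ≤ 1)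
    (hz : ∀ s t, (r, s) = (q, t) → u s * v t = 0) :
    ‖(∑ s ∈ range n, u s • f l0 r s) * ∑ t ∈ range m, v t • f l0 q t‖ ≤ (n * m : ℕ) * ε' := by
  have expand : (∑ s ∈ range n, u s • f l0 r s) * ∑ t ∈ range m, v t • f l0 q t
      = ∑ s ∈ range n, ∑ t ∈ range m, (u s * v t) • (f l0 r s * f l0 q t) := by
    rw [Finset.sum_mul]
    refine Finset.sum_congr rfl fun s _ => ?_
    rw [Finset.mul_sum]
    exact Finset.sum_congr rfl fun t _ => smul_mul_smul_comm _ _ _ _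
  rw [expand]
  calc ‖∑ s ∈ range n, ∑ t ∈ range m, (u s * v t) • (f l0 r s * f l0 q t)‖
      ≤ ∑ s ∈ range n, ‖∑ t ∈ range m, (u s * v t) • (f l0 r s * f l0 q t)‖ :=
        norm_sum_le _ _
    _ ≤ ∑ s ∈ range n, ∑ t ∈ range m, ‖(u s * v t) • (f l0 r s * f l0 q t)‖ :=
        Finset.sum_le_sum fun s _ => norm_sum_le _ _
    _ ≤ ∑ s ∈ range n, ∑ t ∈ range m, ε' := by
        refine Finset.sum_le_sum fun s hs => Finset.sum_le_sum fun t ht => ?_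
        by_cases hst : (r, s) = (q, t)
        · rw [hz s t hst, zero_smul, norm_zero]; exact hε'.le
        · rw [norm_smul, Real.norm_of_nonneg (mul_nonneg (hu s).1 (hv t).1)]
          have hb : u s * v t ≤ 1 := mul_le_one₀ (hu s).2 (hv t).1 (hv t).2
          have := h1 r s q t hr hq (by have := Finset.mem_range.mp hs; omega)
            (by have := Finset.mem_range.mp ht; omega) hst
          nlinarith [norm_nonneg (f l0 r s * f l0 q t), (hu s).1, (hv t).1,
            mul_nonneg (hu s).1 (hv t).1]
    _ = (n * m : ℕ) * ε' := by
        simp [Finset.sum_const, Finset.card_range, mul_assoc]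

end Helpers

set_option maxHeartbeats 3200000 in
/-- If `α` has Rokhlin dimension at most `d`, then `α` has Rokhlin dimension at
most `2d + 1` with single towers, all of which can be chosen of the same height `p`: for every
finite `F ⊆ A`, every `p ≥ 1` and every `ε > 0` there are positive contractions `g l j`
(`l ∈ {0,…,2d+1}`, `j ∈ {0,…,p-1}`) which are approximately orthogonal within each color,
approximately sum to `1`, are approximately cyclically shifted by `α`, and approximately
commute with the members of `F`. -/
theorem single_towers_of_rokhlinDimLE {A : Type*} [CStarAlgebra A] [PartialOrder A]
    [StarOrderedRing A] (α : A ≃⋆ₐ[ℂ] A) (d : ℕ) (hα : RokhlinDimLE α d) :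
    ∀ F : Finset A, ∀ p : ℕ, 1 ≤ p → ∀ ε : ℝ, 0 < ε →
      ∃ g : ℕ → ℕ → A,
        (∀ l j, ¬(l ≤ 2 * d + 1 ∧ j < p) → g l j = 0) ∧
        (∀ l j, 0 ≤ g l j ∧ ‖g l j‖ ≤ 1) ∧
        -- (i)
        (∀ l ≤ 2 * d + 1, ∀ i j, i < p → j < p → i ≠ j → ‖g l i * g l j‖ < ε) ∧
        -- (ii)
        (‖(∑ l ∈ Finset.range (2 * d + 2), ∑ j ∈ Finset.range p, g l j) - 1‖ < ε) ∧
        -- (iii)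
        (∀ l ≤ 2 * d + 1, ∀ j < p, ‖α (g l j) - g l ((j + 1) % p)‖ < ε) ∧
        -- (iv)
        (∀ l ≤ 2 * d + 1, ∀ j < p, ∀ a ∈ F, ‖g l j * a - a * g l j‖ < ε) := by
  intro F p hp ε hε
  have hp0 : 0 < p := hp
  by_cases htriv : Subsingleton A
  · refine ⟨fun _ _ => 0, fun _ _ _ => rfl, fun _ _ => ⟨le_rfl, by simp⟩, ?_, ?_, ?_, ?_⟩
    · intro l _ i j _ _ _
      simpa using hε
    · have h0 : ((∑ l ∈ Finset.range (2*d+2), ∑ j ∈ Finset.range p, (0:A)) - 1) = 0 :=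
        Subsingleton.elim _ _
      rw [h0, norm_zero]; exact hε
    · intro l _ j _
      simpa using hε
    · intro l _ j _ a _
      simpa using hε
  haveI : Nontrivial A := not_subsingleton_iff_nontrivial.mp htriv
  -- choose the ramp length R
  obtain ⟨R, hR0, hRinv⟩ : ∃ R : ℕ, 0 < R ∧ 1/(R:ℝ) < ε/8 := by
    refine ⟨⌈(8:ℝ)/ε⌉₊ + 1, Nat.succ_pos _, ?_⟩
    have h8R : (8:ℝ)/ε < ((⌈(8:ℝ)/ε⌉₊ + 1 : ℕ) : ℝ) := by
      push_cast
      exact lt_of_le_of_lt (Nat.le_ceil _) (by linarith)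
    have hRpos : (0:ℝ) < ((⌈(8:ℝ)/ε⌉₊ + 1 : ℕ) : ℝ) := by positivity
    rw [div_lt_div_iff₀ hRpos (by norm_num : (0:ℝ) < 8)]
    have := (div_lt_iff₀ hε).mp h8R
    linarith
  have hRpos : (0:ℝ) < (R:ℝ) := by exact_mod_cast hR0
  -- the big height N
  set N : ℕ := (3*R+2)*p with hNdef
  have hNmod : N % p = 0 := Nat.mul_mod_left _ _
  have hNge : 3*R+2 ≤ N := Nat.le_mul_of_pos_right _ hp0
  have hN0 : 0 < N := by omega
  obtain ⟨M, hM⟩ : ∃ M, N = M+1 := ⟨N-1, by omega⟩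
  have hM1 : N - 1 = M := by omega
  -- the tolerance for the double towers
  set ε' : ℝ := min 1 (ε/(32*((N:ℝ)+2)^2)) with hε'def
  have hNR : (0:ℝ) < 32*((N:ℝ)+2)^2 := by positivity
  have hε'pos : 0 < ε' := lt_min one_pos (by positivity)
  have hε'le1 : ε' ≤ 1 := min_le_left _ _
  have hε'le : ε' ≤ ε/(32*((N:ℝ)+2)^2) := min_le_right _ _
  have hkey : 32*((N:ℝ)+2)^2 * ε' ≤ ε := by
    calc 32*((N:ℝ)+2)^2 * ε' ≤ 32*((N:ℝ)+2)^2 * (ε/(32*((N:ℝ)+2)^2)) :=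
          mul_le_mul_of_nonneg_left hε'le (by positivity)
      _ = ε := mul_div_cancel₀ _ (ne_of_gt hNR)
  have hx : (0:ℝ) ≤ (N:ℝ) := Nat.cast_nonneg N
  obtain ⟨f, hf0, hfc, h1, h2, h3, h4, h5⟩ := hα F N ε' hε'pos
  have hfpos : ∀ l r j, 0 ≤ f l r j := fun l r j => (hfc l r j).1
  have hαsmul : ∀ (r : ℝ) (x : A), α (r • x) = r • α x := fun r x => by
    rw [← algebraMap_smul ℂ r x, map_smul, algebraMap_smul]
  set θ : ℝ := (1+ε')⁻¹ with hθdef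
  have hθpos : 0 < θ := by rw [hθdef]; positivity
  have hθle1 : θ ≤ 1 := by
    rw [hθdef]
    rw [inv_le_one_iff₀]
    right; linarith
  have hθmul : θ * (1 + ε') = 1 := inv_mul_cancel₀ (by positivity)
  -- the single towers, unscaled
  set gh : ℕ → ℕ → A := fun l' j =>
    (∑ s ∈ Finset.range N, acoef p l' j s • f (l'/2) 0 s) +
      ∑ s ∈ Finset.range (N+1), bcoef p R l' j s • f (l'/2) 1 s with hghdef
  have h2' : ‖(∑ l ∈ Finset.range (d+1),
      ((∑ s ∈ Finset.range N, f l 0 s) + ∑ s ∈ Finset.range (N+1), f l 1 s)) - 1‖ ≤ ε' := h2.le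
  have hub : ∀ l', l' ≤ 2*d+1 → ∀ B : ℝ, 0 ≤ B → ∀ u v : ℕ → ℝ,
      (∀ s, 0 ≤ u s ∧ u s ≤ B) → (∀ s, 0 ≤ v s ∧ v s ≤ B) →
      ‖(∑ s ∈ Finset.range N, u s • f (l'/2) 0 s) +
        ∑ s ∈ Finset.range (N+1), v s • f (l'/2) 1 s‖ ≤ B*(1+ε') :=
    fun l' hl' B hB u v hu hv =>
      tower_norm_bound f d N ε' hfpos h2' (l'/2) (by omega) B hB u v hu hv
  have hghpos : ∀ l' j, 0 ≤ gh l' j := fun l' j => by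
    simp only [hghdef]
    exact add_nonneg
      (Finset.sum_nonneg fun s _ => smul_nonneg (acoef_nonneg _ _ _ _) (hfpos _ _ _))
      (Finset.sum_nonneg fun s _ => smul_nonneg (bcoef_nonneg _ _ _ _ _) (hfpos _ _ _))
  have hghnorm : ∀ l' j, l' ≤ 2*d+1 → ‖gh l' j‖ ≤ 1+ε' := by
    intro l' j hl'
    simp only [hghdef]
    simpa using hub l' hl' 1 zero_le_one (fun s => acoef p l' j s) (fun s => bcoef p R l' j s)
      (fun s => ⟨acoef_nonneg _ _ _ _, acoef_le_one _ _ _ _⟩)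
      (fun s => ⟨bcoef_nonneg _ _ _ _ _, bcoef_le_one _ _ _ _ _⟩)
  refine ⟨fun l' j => if l' ≤ 2*d+1 ∧ j < p then θ • gh l' j else 0, ?_, ?_, ?_, ?_, ?_, ?_⟩
  · -- vanishing
    intro l j h
    dsimp only
    rw [if_neg h]
  · -- positive contractions
    intro l j
    dsimp only
    by_cases hcond : l ≤ 2*d+1 ∧ j < p
    · rw [if_pos hcond]
      refine ⟨smul_nonneg hθpos.le (hghpos _ _), ?_⟩
      rw [norm_smul, Real.norm_of_nonneg hθpos.le]
      calc θ * ‖gh l j‖ ≤ θ * (1+ε') := mul_le_mul_of_nonneg_left (hghnorm l j hcond.1) hθpos.le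
        _ = 1 := hθmul
    · rw [if_neg hcond]
      simp
  · -- (i) approximate orthogonality
    intro l hl i j hi hj hij
    dsimp only
    rw [if_pos ⟨hl, hi⟩, if_pos ⟨hl, hj⟩]
    have hl2 : l/2 ≤ d := by omega
    rw [smul_mul_smul_comm, norm_smul, Real.norm_of_nonneg (by positivity : (0:ℝ) ≤ θ*θ)]
    have hgg : ‖gh l i * gh l j‖ ≤ (2*(N:ℝ)+1)^2 * ε' := by
      simp only [hghdef]
      have h1' := h1 (l/2) hl2
      rw [add_mul, mul_add, mul_add]
      have B00 := tower_prod_bound f N ε' hε'pos (l/2) h1' 0 0 N N (by omega) (by omega) (by omega) (by omega)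
        (fun s => acoef p l i s) (fun s => acoef p l j s)
        (fun s => ⟨acoef_nonneg _ _ _ _, acoef_le_one _ _ _ _⟩)
        (fun s => ⟨acoef_nonneg _ _ _ _, acoef_le_one _ _ _ _⟩)
        (fun s t hst => by
          have hseq : s = t := (Prod.ext_iff.mp hst).2
          subst hseq
          exact acoef_mul_eq_zero p l s hij)
      have B01 := tower_prod_bound f N ε' hε'pos (l/2) h1' 0 1 N (N+1) (by omega) (by omega) (by omega) (by omega)
        (fun s => acoef p l i s) (fun s => bcoef p R l j s)
        (fun s => ⟨acoef_nonneg _ _ _ _, acoef_le_one _ _ _ _⟩)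
        (fun s => ⟨bcoef_nonneg _ _ _ _ _, bcoef_le_one _ _ _ _ _⟩)
        (fun s t hst => absurd (Prod.ext_iff.mp hst).1 (by norm_num))
      have B10 := tower_prod_bound f N ε' hε'pos (l/2) h1' 1 0 (N+1) N (by omega) (by omega) (by omega) (by omega)
        (fun s => bcoef p R l i s) (fun s => acoef p l j s)
        (fun s => ⟨bcoef_nonneg _ _ _ _ _, bcoef_le_one _ _ _ _ _⟩)
        (fun s => ⟨acoef_nonneg _ _ _ _, acoef_le_one _ _ _ _⟩)
        (fun s t hst => absurd (Prod.ext_iff.mp hst).1 (by norm_num))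
      have B11 := tower_prod_bound f N ε' hε'pos (l/2) h1' 1 1 (N+1) (N+1) (by omega) (by omega) (by omega) (by omega)
        (fun s => bcoef p R l i s) (fun s => bcoef p R l j s)
        (fun s => ⟨bcoef_nonneg _ _ _ _ _, bcoef_le_one _ _ _ _ _⟩)
        (fun s => ⟨bcoef_nonneg _ _ _ _ _, bcoef_le_one _ _ _ _ _⟩)
        (fun s t hst => by
          have hseq : s = t := (Prod.ext_iff.mp hst).2
          subst hseq
          exact bcoef_mul_eq_zero p R l s hij)
      have tri := norm_add_le ((∑ s ∈ Finset.range N, acoef p l i s • f (l/2) 0 s) *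
          ∑ s ∈ Finset.range N, acoef p l j s • f (l/2) 0 s)
        ((∑ s ∈ Finset.range N, acoef p l i s • f (l/2) 0 s) *
          ∑ s ∈ Finset.range (N+1), bcoef p R l j s • f (l/2) 1 s)
      have tri2 := norm_add_le ((∑ s ∈ Finset.range (N+1), bcoef p R l i s • f (l/2) 1 s) *
          ∑ s ∈ Finset.range N, acoef p l j s • f (l/2) 0 s)
        ((∑ s ∈ Finset.range (N+1), bcoef p R l i s • f (l/2) 1 s) *
          ∑ s ∈ Finset.range (N+1), bcoef p R l j s • f (l/2) 1 s)
      beta_reduce at B00 B01 B10 B11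
      refine (norm_add_le _ _).trans ?_
      have hcount : ((N*N : ℕ) : ℝ) * ε' + ((N*(N+1) : ℕ) : ℝ) * ε' +
          (((N+1)*N : ℕ) : ℝ) * ε' + (((N+1)*(N+1) : ℕ) : ℝ) * ε' = (2*(N:ℝ)+1)^2 * ε' := by
        push_cast; ring
      linarith [tri, tri2, B00, B01, B10, B11]
    have hgg0 := norm_nonneg (gh l i * gh l j)
    have hθθ : θ*θ ≤ 1 := mul_le_one₀ hθle1 hθpos.le hθle1
    have hpoly : (2*(N:ℝ)+1)^2 + 1 ≤ 32*((N:ℝ)+2)^2 := by nlinarith [hx]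
    have hfin : (2*(N:ℝ)+1)^2 * ε' < ε := by
      have := mul_le_mul_of_nonneg_right hpoly hε'pos.le
      linarith [hkey, hε'pos]
    have step := mul_le_mul_of_nonneg_left hgg (by positivity : (0:ℝ) ≤ θ*θ)
    have step2 : θ*θ*((2*(N:ℝ)+1)^2*ε') ≤ (2*(N:ℝ)+1)^2*ε' := by
      have h0 : (0:ℝ) ≤ (2*(N:ℝ)+1)^2*ε' := by positivity
      nlinarith [mul_nonneg (show (0:ℝ) ≤ 1 - θ*θ by linarith) h0]
    linarith [step, step2, hfin]
  · -- (ii) sum close to 1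
    dsimp only
    have hguard : ∀ l' ∈ Finset.range (2*d+2), ∑ j ∈ Finset.range p,
        (if l' ≤ 2*d+1 ∧ j < p then θ • gh l' j else 0) = θ • ∑ j ∈ Finset.range p, gh l' j := by
      intro l' hl'
      rw [Finset.smul_sum]
      refine Finset.sum_congr rfl fun j hj => ?_
      rw [if_pos ⟨by have := Finset.mem_range.mp hl'; omega, Finset.mem_range.mp hj⟩]
    rw [Finset.sum_congr rfl hguard, ← Finset.smul_sum]
    have inner : ∀ l', ∑ j ∈ Finset.range p, gh l' j =
        (∑ s ∈ Finset.range N, (if l' % 2 = 0 then (1:ℝ) else 0) • f (l'/2) 0 s) +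
          ∑ s ∈ Finset.range (N+1),
            (if l' % 2 = 0 then wcl R s else 1 - wcl R s) • f (l'/2) 1 s := by
      intro l'
      simp only [hghdef]
      rw [Finset.sum_add_distrib]
      congr 1
      · rw [Finset.sum_comm]
        exact Finset.sum_congr rfl fun s _ => by rw [← Finset.sum_smul, acoef_sum hp0]
      · rw [Finset.sum_comm]
        exact Finset.sum_congr rfl fun s _ => by rw [← Finset.sum_smul, bcoef_sum R hp0]
    have hgsum : ∑ l' ∈ Finset.range (2*d+2), ∑ j ∈ Finset.range p, gh l' j =
        ∑ l ∈ Finset.range (d+1),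
          ((∑ s ∈ Finset.range N, f l 0 s) + ∑ s ∈ Finset.range (N+1), f l 1 s) := by
      rw [show 2*d+2 = 2*(d+1) by ring, sum_range_two_mul]
      refine Finset.sum_congr rfl fun l hl => ?_
      rw [inner, inner]
      have e1 : (2*l) % 2 = 0 := by omega
      have e2 : (2*l) / 2 = l := by omega
      have e3 : (2*l+1) % 2 = 1 := by omega
      have e4 : (2*l+1) / 2 = l := by omega
      rw [e1, e2, e3, e4]
      simp only [eq_self_iff_true, if_true, ite_true, if_neg (by norm_num : ¬ (1:ℕ) = 0),
        one_smul, zero_smul, Finset.sum_const_zero, zero_add]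
      rw [add_assoc]
      congr 1
      rw [← Finset.sum_add_distrib]
      refine Finset.sum_congr rfl fun s _ => ?_
      rw [← add_smul]
      rw [show wcl R s + (1 - wcl R s) = 1 by ring, one_smul]
    rw [hgsum]
    have hsplit : θ • (∑ l ∈ Finset.range (d+1),
          ((∑ s ∈ Finset.range N, f l 0 s) + ∑ s ∈ Finset.range (N+1), f l 1 s)) - 1 =
        θ • ((∑ l ∈ Finset.range (d+1),
          ((∑ s ∈ Finset.range N, f l 0 s) + ∑ s ∈ Finset.range (N+1), f l 1 s)) - 1)
          + (θ - 1) • (1:A) := by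
      rw [smul_sub, sub_smul, one_smul]
      abel
    rw [hsplit]
    have n1 : ‖θ • ((∑ l ∈ Finset.range (d+1),
        ((∑ s ∈ Finset.range N, f l 0 s) + ∑ s ∈ Finset.range (N+1), f l 1 s)) - 1)‖ < ε' := by
      rw [norm_smul, Real.norm_of_nonneg hθpos.le]
      refine lt_of_le_of_lt ?_ h2
      have := mul_le_mul_of_nonneg_right hθle1 (norm_nonneg ((∑ l ∈ Finset.range (d+1),
        ((∑ s ∈ Finset.range N, f l 0 s) + ∑ s ∈ Finset.range (N+1), f l 1 s)) - 1))
      linarith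
    have n2 : ‖(θ - 1) • (1:A)‖ ≤ ε' := by
      rw [norm_smul, norm_one, mul_one, Real.norm_eq_abs, abs_of_nonpos (by linarith)]
      have hθeq : (1:ℝ) - θ = ε'/(1+ε') := by
        rw [hθdef]; field_simp; ring
      rw [neg_sub, hθeq]
      exact div_le_self hε'pos.le (by linarith)
    refine lt_of_le_of_lt (norm_add_le _ _) ?_
    have hpoly2 : (3:ℝ) ≤ 32*((N:ℝ)+2)^2 := by nlinarith [hx]
    have hmul2 := mul_le_mul_of_nonneg_right hpoly2 hε'pos.le
    linarith [n1, n2, hkey, hε'pos]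
  · -- (iii) approximate cyclic shift
    intro l' hl' j hj
    dsimp only
    have hj' : (j+1) % p < p := Nat.mod_lt _ hp0
    rw [if_pos ⟨hl', hj⟩, if_pos ⟨hl', hj'⟩]
    have hl2 : l'/2 ≤ d := by omega
    have K3 : ∀ s, acoef p l' j s = acoef p l' ((j+1) % p) (s+1) :=
      fun s => acoef_shift l' s hp0 hj
    have K4 : bcoef p R l' j N = acoef p l' j M := by
      rw [← hM1]; exact bcoef_top hp0 hR0 hj hNmod (by omega)
    have K5 : acoef p l' ((j+1) % p) 0 = acoef p l' j M := by
      rw [← hM1]; exact acoef_bot hp0 hj hN0 hNmod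
    have K6 : bcoef p R l' ((j+1) % p) 0 = acoef p l' j M := by
      rw [← hM1]; exact bcoef_bot hp0 hR0 hj hN0 hNmod
    have K7 : ∀ s, |bcoef p R l' j s - bcoef p R l' ((j+1) % p) (s+1)| ≤ 1/(R:ℝ) :=
      fun s => bcoef_lip l' s hp0 hR0 hj
    set X : A := (∑ s ∈ Finset.range M, acoef p l' j s • f (l'/2) 0 (s+1)) +
        (∑ s ∈ Finset.range N, bcoef p R l' j s • f (l'/2) 1 (s+1)) +
        acoef p l' j M • (f (l'/2) 0 0 + f (l'/2) 1 0) with hX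
    have claim1 : α (gh l' j) - X =
        (∑ s ∈ Finset.range M, acoef p l' j s • (α (f (l'/2) 0 s) - f (l'/2) 0 (s+1))) +
        (∑ s ∈ Finset.range N, bcoef p R l' j s • (α (f (l'/2) 1 s) - f (l'/2) 1 (s+1))) +
        acoef p l' j M • (α (f (l'/2) 0 M + f (l'/2) 1 N) - (f (l'/2) 0 0 + f (l'/2) 1 0)) := by
      have egh : α (gh l' j) =
          ((∑ s ∈ Finset.range M, acoef p l' j s • α (f (l'/2) 0 s)) +
            acoef p l' j M • α (f (l'/2) 0 M)) +
          ((∑ s ∈ Finset.range N, bcoef p R l' j s • α (f (l'/2) 1 s)) +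
            acoef p l' j M • α (f (l'/2) 1 N)) := by
        simp only [hghdef]
        rw [map_add, map_sum, map_sum]
        simp only [hαsmul]
        congr 1
        · rw [hM, Finset.sum_range_succ]
        · rw [Finset.sum_range_succ, K4]
      rw [egh, hX]
      simp only [map_add, smul_sub, smul_add]
      rw [Finset.sum_sub_distrib, Finset.sum_sub_distrib]
      abel
    have norm1 : ‖α (gh l' j) - X‖ ≤ ((M:ℝ) + (N:ℝ) + 1) * ε' := by
      rw [claim1]
      have t1 : ‖∑ s ∈ Finset.range M, acoef p l' j s • (α (f (l'/2) 0 s) - f (l'/2) 0 (s+1))‖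
          ≤ (M:ℝ) * ε' := by
        refine (norm_sum_le _ _).trans ?_
        calc ∑ s ∈ Finset.range M, ‖acoef p l' j s • (α (f (l'/2) 0 s) - f (l'/2) 0 (s+1))‖
            ≤ ∑ s ∈ Finset.range M, ε' := by
              refine Finset.sum_le_sum fun s hs => ?_
              rw [norm_smul, Real.norm_of_nonneg (acoef_nonneg _ _ _ _)]
              have hsh := h3 (l'/2) hl2 0 s (by norm_num)
                (by have := Finset.mem_range.mp hs; omega)
              nlinarith [acoef_le_one p l' j s, acoef_nonneg p l' j s,
                norm_nonneg (α (f (l'/2) 0 s) - f (l'/2) 0 (s+1))]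
          _ = (M:ℝ) * ε' := by rw [Finset.sum_const, Finset.card_range, nsmul_eq_mul]
      have t2 : ‖∑ s ∈ Finset.range N, bcoef p R l' j s • (α (f (l'/2) 1 s) - f (l'/2) 1 (s+1))‖
          ≤ (N:ℝ) * ε' := by
        refine (norm_sum_le _ _).trans ?_
        calc ∑ s ∈ Finset.range N, ‖bcoef p R l' j s • (α (f (l'/2) 1 s) - f (l'/2) 1 (s+1))‖
            ≤ ∑ s ∈ Finset.range N, ε' := by
              refine Finset.sum_le_sum fun s hs => ?_
              rw [norm_smul, Real.norm_of_nonneg (bcoef_nonneg _ _ _ _ _)]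
              have hsh := h3 (l'/2) hl2 1 s (by norm_num)
                (by have := Finset.mem_range.mp hs; omega)
              nlinarith [bcoef_le_one R p l' j s, bcoef_nonneg R p l' j s,
                norm_nonneg (α (f (l'/2) 1 s) - f (l'/2) 1 (s+1))]
          _ = (N:ℝ) * ε' := by rw [Finset.sum_const, Finset.card_range, nsmul_eq_mul]
      have t3 : ‖acoef p l' j M • (α (f (l'/2) 0 M + f (l'/2) 1 N) -
          (f (l'/2) 0 0 + f (l'/2) 1 0))‖ ≤ ε' := by
        rw [norm_smul, Real.norm_of_nonneg (acoef_nonneg _ _ _ _)]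
        have hw := h4 (l'/2) hl2
        rw [hM1] at hw
        nlinarith [acoef_le_one p l' j M, acoef_nonneg p l' j M,
          norm_nonneg (α (f (l'/2) 0 M + f (l'/2) 1 N) - (f (l'/2) 0 0 + f (l'/2) 1 0))]
      calc ‖_ + _ + _‖ ≤ ‖_ + _‖ + ‖_‖ := norm_add_le _ _
        _ ≤ ‖_‖ + ‖_‖ + ‖_‖ := by gcongr; exact norm_add_le _ _
        _ ≤ (M:ℝ) * ε' + (N:ℝ) * ε' + ε' := by gcongr
        _ = ((M:ℝ) + (N:ℝ) + 1) * ε' := by ring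
    have claim2 : X - gh l' ((j+1) % p) =
        ∑ s ∈ Finset.range N,
          (bcoef p R l' j s - bcoef p R l' ((j+1) % p) (s+1)) • f (l'/2) 1 (s+1) := by
      have egh' : gh l' ((j+1) % p) =
          ((∑ s ∈ Finset.range M, acoef p l' j s • f (l'/2) 0 (s+1)) +
            acoef p l' j M • f (l'/2) 0 0) +
          ((∑ s ∈ Finset.range N, bcoef p R l' ((j+1) % p) (s+1) • f (l'/2) 1 (s+1)) +
            acoef p l' j M • f (l'/2) 1 0) := by
        simp only [hghdef]
        congr 1
        · rw [hM, Finset.sum_range_succ']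
          congr 1
          · exact Finset.sum_congr rfl fun s _ => by rw [← K3]
          · rw [K5]
        · rw [Finset.sum_range_succ']
          congr 1
          rw [K6]
      rw [hX, egh']
      simp only [sub_smul, smul_add]
      rw [Finset.sum_sub_distrib]
      abel
    have norm2 : ‖X - gh l' ((j+1) % p)‖ ≤ 2 * ((1/(R:ℝ)) * (1+ε')) := by
      rw [claim2]
      set c : ℕ → ℝ := fun s => bcoef p R l' j s - bcoef p R l' ((j+1) % p) (s+1) with hc
      have hsplit : ∀ s, c s = max (c s) 0 - max (-c s) 0 := by
        intro s
        rcases le_total (c s) 0 with h | h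
        · rw [max_eq_right h, max_eq_left (by linarith)]; ring
        · rw [max_eq_left h, max_eq_right (by linarith)]; ring
      have hdecomp : ∑ s ∈ Finset.range N, c s • f (l'/2) 1 (s+1) =
          (∑ s ∈ Finset.range N, max (c s) 0 • f (l'/2) 1 (s+1)) -
            ∑ s ∈ Finset.range N, max (-c s) 0 • f (l'/2) 1 (s+1) := by
        rw [← Finset.sum_sub_distrib]
        exact Finset.sum_congr rfl fun s _ => by rw [← sub_smul, ← hsplit]
      rw [hdecomp]
      refine (norm_sub_le _ _).trans ?_
      have bnd : ∀ u : ℕ → ℝ, (∀ s, 0 ≤ u s ∧ u s ≤ 1/(R:ℝ)) →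
          ‖∑ s ∈ Finset.range N, u s • f (l'/2) 1 (s+1)‖ ≤ (1/(R:ℝ))*(1+ε') := by
        intro u hu
        have reidx : ∑ s ∈ Finset.range N, u s • f (l'/2) 1 (s+1) =
            ∑ t ∈ Finset.range (N+1), (if t = 0 then (0:ℝ) else u (t-1)) • f (l'/2) 1 t := by
          rw [Finset.sum_range_succ' (fun t => (if t = 0 then (0:ℝ) else u (t-1)) • f (l'/2) 1 t) N]
          simp
        rw [reidx]
        have happ := hub l' hl' (1/(R:ℝ)) (by positivity) (fun _ => 0)
          (fun t => if t = 0 then (0:ℝ) else u (t-1))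
          (fun s => ⟨le_rfl, by positivity⟩)
          (fun t => by
            split_ifs
            · exact ⟨le_rfl, by positivity⟩
            · exact hu _)
        simpa using happ
      have b1 := bnd (fun s => max (c s) 0)
        (fun s => ⟨le_max_right _ _, max_le ((le_abs_self _).trans (K7 s)) (by positivity)⟩)
      have b2 := bnd (fun s => max (-c s) 0)
        (fun s => ⟨le_max_right _ _, max_le ((neg_le_abs _).trans (K7 s)) (by positivity)⟩)
      linarith
    have est : ‖α (gh l' j) - gh l' ((j+1) % p)‖ ≤
        ((M:ℝ) + (N:ℝ) + 1) * ε' + 2 * ((1/(R:ℝ)) * (1+ε')) := by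
      have tri := norm_add_le (α (gh l' j) - X) (X - gh l' ((j+1) % p))
      rw [sub_add_sub_cancel] at tri
      linarith
    have scale : ‖α (θ • gh l' j) - θ • gh l' ((j+1) % p)‖ =
        θ * ‖α (gh l' j) - gh l' ((j+1) % p)‖ := by
      rw [hαsmul, ← smul_sub, norm_smul, Real.norm_of_nonneg hθpos.le]
    rw [scale]
    have hMN : (M:ℝ) + (N:ℝ) + 1 = 2*(N:ℝ) := by
      have : (N:ℝ) = (M:ℝ) + 1 := by exact_mod_cast hM
      linarith
    have h2R : 2 * ((1/(R:ℝ)) * (1+ε')) < ε/2 := by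
      have hr0 : (0:ℝ) ≤ 1/(R:ℝ) := by positivity
      nlinarith [mul_nonneg hr0 (show (0:ℝ) ≤ 1 - ε' by linarith)]
    have h2N : ((M:ℝ) + (N:ℝ) + 1) * ε' ≤ ε/2 := by
      rw [hMN]
      have hpoly4 : 2*(N:ℝ) ≤ 16*((N:ℝ)+2)^2 := by nlinarith [hx]
      have := mul_le_mul_of_nonneg_right hpoly4 hε'pos.le
      linarith [hkey]
    have hfinal : ‖α (gh l' j) - gh l' ((j+1) % p)‖ < ε := by linarith
    calc θ * ‖α (gh l' j) - gh l' ((j+1) % p)‖ ≤ 1 * ‖α (gh l' j) - gh l' ((j+1) % p)‖ :=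
          mul_le_mul_of_nonneg_right hθle1 (norm_nonneg _)
      _ < ε := by rw [one_mul]; exact hfinal
  · -- (iv) approximate centrality
    intro l' hl' j hj a ha
    dsimp only
    rw [if_pos ⟨hl', hj⟩]
    have hl2 : l'/2 ≤ d := by omega
    have hexp : (θ • gh l' j) * a - a * (θ • gh l' j) = θ • (gh l' j * a - a * gh l' j) := by
      rw [smul_mul_assoc, mul_smul_comm, ← smul_sub]
    rw [hexp, norm_smul, Real.norm_of_nonneg hθpos.le]
    have hcomm : gh l' j * a - a * gh l' j =
        (∑ s ∈ Finset.range N, acoef p l' j s • (f (l'/2) 0 s * a - a * f (l'/2) 0 s)) +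
          ∑ s ∈ Finset.range (N+1), bcoef p R l' j s • (f (l'/2) 1 s * a - a * f (l'/2) 1 s) := by
      simp only [hghdef]
      rw [add_mul, mul_add, Finset.sum_mul, Finset.mul_sum, Finset.sum_mul, Finset.mul_sum]
      simp only [smul_mul_assoc, mul_smul_comm, smul_sub]
      rw [Finset.sum_sub_distrib, Finset.sum_sub_distrib]
      abel
    have hbound : ‖gh l' j * a - a * gh l' j‖ ≤ ((N:ℝ) + ((N:ℝ)+1)) * ε' := by
      rw [hcomm]
      have t1 : ‖∑ s ∈ Finset.range N, acoef p l' j s • (f (l'/2) 0 s * a - a * f (l'/2) 0 s)‖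
          ≤ (N:ℝ) * ε' := by
        refine (norm_sum_le _ _).trans ?_
        calc ∑ s ∈ Finset.range N, ‖acoef p l' j s • (f (l'/2) 0 s * a - a * f (l'/2) 0 s)‖
            ≤ ∑ s ∈ Finset.range N, ε' := by
              refine Finset.sum_le_sum fun s hs => ?_
              rw [norm_smul, Real.norm_of_nonneg (acoef_nonneg _ _ _ _)]
              have hc := h5 (l'/2) hl2 0 s (by norm_num)
                (by have := Finset.mem_range.mp hs; omega) a ha
              nlinarith [acoef_le_one p l' j s, acoef_nonneg p l' j s,
                norm_nonneg (f (l'/2) 0 s * a - a * f (l'/2) 0 s)]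
          _ = (N:ℝ) * ε' := by rw [Finset.sum_const, Finset.card_range, nsmul_eq_mul]
      have t2 : ‖∑ s ∈ Finset.range (N+1),
          bcoef p R l' j s • (f (l'/2) 1 s * a - a * f (l'/2) 1 s)‖ ≤ ((N:ℝ)+1) * ε' := by
        refine (norm_sum_le _ _).trans ?_
        calc ∑ s ∈ Finset.range (N+1), ‖bcoef p R l' j s • (f (l'/2) 1 s * a - a * f (l'/2) 1 s)‖
            ≤ ∑ s ∈ Finset.range (N+1), ε' := by
              refine Finset.sum_le_sum fun s hs => ?_
              rw [norm_smul, Real.norm_of_nonneg (bcoef_nonneg _ _ _ _ _)]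
              have hc := h5 (l'/2) hl2 1 s (by norm_num)
                (by have := Finset.mem_range.mp hs; omega) a ha
              nlinarith [bcoef_le_one R p l' j s, bcoef_nonneg R p l' j s,
                norm_nonneg (f (l'/2) 1 s * a - a * f (l'/2) 1 s)]
          _ = ((N:ℝ)+1) * ε' := by
              rw [Finset.sum_const, Finset.card_range, nsmul_eq_mul]; push_cast; ring
      calc ‖_ + _‖ ≤ ‖_‖ + ‖_‖ := norm_add_le _ _
        _ ≤ (N:ℝ) * ε' + ((N:ℝ)+1) * ε' := by gcongr
        _ = ((N:ℝ) + ((N:ℝ)+1)) * ε' := by ring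
    have hfin : ((N:ℝ) + ((N:ℝ)+1)) * ε' < ε := by
      have hpoly3 : ((N:ℝ) + ((N:ℝ)+1)) + 1 ≤ 32*((N:ℝ)+2)^2 := by nlinarith [hx]
      have := mul_le_mul_of_nonneg_right hpoly3 hε'pos.le
      linarith [hkey, hε'pos]
    calc θ * ‖gh l' j * a - a * gh l' j‖ ≤ 1 * ‖gh l' j * a - a * gh l' j‖ :=
          mul_le_mul_of_nonneg_right hθle1 (norm_nonneg _)
      _ < ε := by rw [one_mul]; linarith
end

section
/- Let T be a compact metrizable space, h : T → T a homeomorphism, and d ∈ ℕ. Suppose that for every p ∈ ℕ and every ε > 0 there is a weak d-dimensional Rokhlin tower system of height p with tolerance ε for h (i.e., with the covering condition (2') Σ_{l,r,j} f^{(l)}_{r,j}(t) ≥ 1 − ε for all t ∈ T in place of (2)). Then for every p ∈ ℕ and every ε > 0 there is a d-dimensional Rokhlin tower system of height p with tolerance ε for h satisfying the genuine condition (2). In other words, for commutative C(T) the Rokhlin dimension defined with the weak covering condition coincides with the Rokhlin dimension. -/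
/-- A *weak* `d`-dimensional Rokhlin tower system: conditions (1), (3), (4) as above, but with
the weak covering condition (2'): `∑ f l r j t ≥ 1 - ε` pointwise, instead of (2). -/
def IsWeakRokhlinSystem {T : Type*} [TopologicalSpace T] (h : T ≃ₜ T) (d p : ℕ) (ε : ℝ)
    (f : ℕ → ℕ → ℕ → C(T, ℝ)) : Prop :=
  (∀ l r j, ¬(l ≤ d ∧ r < 2 ∧ j < p + r) → f l r j = 0) ∧
  (∀ l r j (t : T), 0 ≤ f l r j t ∧ f l r j t ≤ 1) ∧
  (∀ l ≤ d, ∀ q i r j, q < 2 → r < 2 → i < p + q → j < p + r → (q, i) ≠ (r, j) →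
    ∀ t : T, |f l q i t * f l r j t| < ε) ∧
  (∀ t : T, 1 - ε ≤ ∑ l ∈ Finset.range (d + 1),
      ((∑ j ∈ Finset.range p, f l 0 j t) + ∑ j ∈ Finset.range (p + 1), f l 1 j t)) ∧
  (∀ l ≤ d, ∀ r j, r < 2 → j + 1 < p + r → ∀ t : T,
    |f l r j (h.symm t) - f l r (j + 1) t| < ε) ∧
  (∀ l ≤ d, ∀ t : T,
    |(f l 0 (p - 1) (h.symm t) + f l 1 p (h.symm t)) - (f l 0 0 t + f l 1 0 t)| < ε)

/-- Quotient comparison bound used in the normalization argument. -/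
private lemma div_sub_div_abs_bound (a b s s' d1 d2 M : ℝ)
    (h1 : |a - b| ≤ d1) (h2 : |s' - s| ≤ d2)
    (hs : 1 / 2 ≤ s) (hs' : 1 / 2 ≤ s') (hb0 : 0 ≤ b) (hbM : b ≤ M) :
    |a * s'⁻¹ - b * s⁻¹| ≤ 2 * d1 + 4 * M * d2 := by
  have hs0 : (0:ℝ) < s := by linarith
  have hs'0 : (0:ℝ) < s' := by linarith
  have hsne : s ≠ 0 := ne_of_gt hs0
  have hs'ne : s' ≠ 0 := ne_of_gt hs'0
  have hd1 : 0 ≤ d1 := le_trans (abs_nonneg _) h1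
  have hd2 : 0 ≤ d2 := le_trans (abs_nonneg _) h2
  have hM : 0 ≤ M := le_trans hb0 hbM
  have hinvs : s⁻¹ ≤ 2 := by
    have h := inv_mul_cancel₀ hsne
    have h' : s⁻¹ * (1/2) ≤ s⁻¹ * s :=
      mul_le_mul_of_nonneg_left hs (le_of_lt (inv_pos.mpr hs0))
    linarith
  have hinvs' : s'⁻¹ ≤ 2 := by
    have h := inv_mul_cancel₀ hs'ne
    have h' : s'⁻¹ * (1/2) ≤ s'⁻¹ * s' :=
      mul_le_mul_of_nonneg_left hs' (le_of_lt (inv_pos.mpr hs'0))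
    linarith
  have hnn : (0:ℝ) ≤ s⁻¹ := le_of_lt (inv_pos.mpr hs0)
  have hnn' : (0:ℝ) ≤ s'⁻¹ := le_of_lt (inv_pos.mpr hs'0)
  have key : a * s'⁻¹ - b * s⁻¹ = (a - b) * s'⁻¹ + (b * (s - s')) * (s⁻¹ * s'⁻¹) := by
    field_simp
    ring
  rw [key]
  have e1 : |(a - b) * s'⁻¹| ≤ 2 * d1 := by
    rw [abs_mul, abs_of_nonneg hnn']
    calc |a - b| * s'⁻¹ ≤ d1 * 2 :=
          mul_le_mul h1 hinvs' hnn' hd1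
      _ = 2 * d1 := by ring
  have e2 : |(b * (s - s')) * (s⁻¹ * s'⁻¹)| ≤ 4 * M * d2 := by
    rw [abs_mul, abs_mul, abs_of_nonneg hb0, abs_of_nonneg (mul_nonneg hnn hnn')]
    have habs : |s - s'| = |s' - s| := abs_sub_comm _ _
    have h1' : b * |s - s'| ≤ M * d2 := by
      rw [habs]
      exact mul_le_mul hbM h2 (abs_nonneg _) hM
    have h2' : s⁻¹ * s'⁻¹ ≤ 4 := by nlinarith
    calc b * |s - s'| * (s⁻¹ * s'⁻¹) ≤ (M * d2) * 4 := by
          apply mul_le_mul h1' h2' (mul_nonneg hnn hnn')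
          positivity
      _ = 4 * M * d2 := by ring
  calc |(a - b) * s'⁻¹ + (b * (s - s')) * (s⁻¹ * s'⁻¹)|
      ≤ |(a - b) * s'⁻¹| + |(b * (s - s')) * (s⁻¹ * s'⁻¹)| := abs_add_le _ _
    _ ≤ 2 * d1 + 4 * M * d2 := by linarith

/-- For a homeomorphism of a compact metrizable space, if weak `d`-dimensional
Rokhlin tower systems (with the covering condition (2')) exist for every height and tolerance,
then genuine `d`-dimensional Rokhlin tower systems (with condition (2)) exist for every height
and tolerance.  Thus for commutative `C(T)` the weak and genuine Rokhlin dimensions coincide. -/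
theorem rokhlin_of_weakRokhlin {T : Type*} [TopologicalSpace T] [CompactSpace T]
    [TopologicalSpace.MetrizableSpace T] (h : T ≃ₜ T) (d : ℕ)
    (hweak : ∀ p : ℕ, ∀ ε : ℝ, 0 < ε →
      ∃ f : ℕ → ℕ → ℕ → C(T, ℝ), IsWeakRokhlinSystem h d p ε f) :
    ∀ p : ℕ, ∀ ε : ℝ, 0 < ε →
      ∃ f : ℕ → ℕ → ℕ → C(T, ℝ), IsRokhlinSystem h d p ε f := by
  intro p ε hε
  set C : ℝ := (((d + 1) * (2 * p + 1) : ℕ) : ℝ) + 1 with hCdef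
  have hC1 : (1:ℝ) ≤ C := by
    have : (0:ℝ) ≤ (((d + 1) * (2 * p + 1) : ℕ) : ℝ) := Nat.cast_nonneg _
    rw [hCdef]; linarith
  have hC0 : (0:ℝ) < C := by linarith
  have hCp : (2 * (p:ℝ) + 1) ≤ C := by
    have h1 : (2 * p + 1) ≤ (d + 1) * (2 * p + 1) := Nat.le_mul_of_pos_left _ (Nat.succ_pos d)
    have h2 : ((2 * p + 1 : ℕ) : ℝ) ≤ (((d + 1) * (2 * p + 1) : ℕ) : ℝ) := Nat.cast_le.mpr h1
    push_cast at h2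
    rw [hCdef]
    push_cast
    linarith
  set δ : ℝ := min (1/2) (ε / (16 * C)) with hδdef
  have hδ0 : 0 < δ := lt_min (by norm_num) (div_pos hε (by linarith))
  have hδh : δ ≤ 1/2 := min_le_left _ _
  have hδε : 16 * C * δ ≤ ε := by
    have h1 : δ ≤ ε / (16 * C) := min_le_right _ _
    have h2 : 16 * C * δ ≤ 16 * C * (ε / (16 * C)) :=
      mul_le_mul_of_nonneg_left h1 (by linarith)
    have h3 : 16 * C * (ε / (16 * C)) = ε := by
      field_simp
    exact le_trans h2 (le_of_eq h3)
  obtain ⟨f, hsupp, hbd, horth, hcov, hshift, hwrap⟩ := hweak p δ hδ0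
  set S : C(T, ℝ) := ∑ l ∈ Finset.range (d + 1),
      ((∑ j ∈ Finset.range p, f l 0 j) + ∑ j ∈ Finset.range (p + 1), f l 1 j) with hSdef
  have hSapp : ∀ t : T, S t = ∑ l ∈ Finset.range (d + 1),
      ((∑ j ∈ Finset.range p, f l 0 j t) + ∑ j ∈ Finset.range (p + 1), f l 1 j t) := by
    intro t
    rw [hSdef]
    simp
  have hS1 : ∀ t, 1 - δ ≤ S t := by intro t; rw [hSapp]; exact hcov t
  have hShalf : ∀ t, (1:ℝ)/2 ≤ S t := fun t => by linarith [hS1 t]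
  have hSpos : ∀ t, (0:ℝ) < S t := fun t => by linarith [hShalf t]
  have hSne : ∀ t, S t ≠ 0 := fun t => ne_of_gt (hSpos t)
  have hSinv : ∀ t, (S t)⁻¹ ≤ 2 := by
    intro t
    have h1 := inv_mul_cancel₀ (hSne t)
    have h2 : (S t)⁻¹ * (1/2) ≤ (S t)⁻¹ * S t :=
      mul_le_mul_of_nonneg_left (hShalf t) (le_of_lt (inv_pos.mpr (hSpos t)))
    linarith
  have hSinvnn : ∀ t, (0:ℝ) ≤ (S t)⁻¹ := fun t => le_of_lt (inv_pos.mpr (hSpos t))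
  set invS : C(T, ℝ) := ⟨fun t => (S t)⁻¹, S.continuous.inv₀ hSne⟩ with hinvdef
  set g : ℕ → ℕ → ℕ → C(T, ℝ) := fun l r j => f l r j * invS with hgdef
  have hgapp : ∀ l r j (t : T), g l r j t = f l r j t * (S t)⁻¹ := by
    intro l r j t
    rw [hgdef]
    simp [hinvdef]
  -- each function is dominated by the total sum
  have hterm : ∀ l r j (t : T), f l r j t ≤ S t := by
    intro l r j t
    by_cases hv : l ≤ d ∧ r < 2 ∧ j < p + r
    · obtain ⟨hl, hr, hj⟩ := hv
      rw [hSapp]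
      have h0 : ∀ x ∈ Finset.range (d + 1),
          0 ≤ (∑ j ∈ Finset.range p, f x 0 j t) + ∑ j ∈ Finset.range (p + 1), f x 1 j t := by
        intro x _
        have h1 : 0 ≤ ∑ j ∈ Finset.range p, f x 0 j t :=
          Finset.sum_nonneg fun i _ => (hbd x 0 i t).1
        have h2 : 0 ≤ ∑ j ∈ Finset.range (p + 1), f x 1 j t :=
          Finset.sum_nonneg fun i _ => (hbd x 1 i t).1
        linarith
      have hl' : l ∈ Finset.range (d + 1) := Finset.mem_range.mpr (Nat.lt_succ_of_le hl)
      refine le_trans ?_ (Finset.single_le_sum h0 hl')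
      interval_cases r
      · have hj' : j ∈ Finset.range p := Finset.mem_range.mpr (by omega)
        have h1 := Finset.single_le_sum (f := fun i => f l 0 i t)
          (fun i _ => (hbd l 0 i t).1) hj'
        have h2 : 0 ≤ ∑ j ∈ Finset.range (p + 1), f l 1 j t :=
          Finset.sum_nonneg fun i _ => (hbd l 1 i t).1
        simpa using by linarith
      · have hj' : j ∈ Finset.range (p + 1) := Finset.mem_range.mpr (by omega)
        have h1 := Finset.single_le_sum (f := fun i => f l 1 i t)
          (fun i _ => (hbd l 1 i t).1) hj'
        have h2 : 0 ≤ ∑ j ∈ Finset.range p, f l 0 j t :=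
          Finset.sum_nonneg fun i _ => (hbd l 0 i t).1
        simpa using by linarith
    · rw [hsupp l r j hv]
      have := hSpos t
      simpa using le_of_lt this
  -- per-level almost-invariance of the partial sums
  have hDl : ∀ l ≤ d, ∀ t : T,
      |((∑ j ∈ Finset.range p, f l 0 j (h.symm t)) +
          ∑ j ∈ Finset.range (p + 1), f l 1 j (h.symm t)) -
        ((∑ j ∈ Finset.range p, f l 0 j t) +
          ∑ j ∈ Finset.range (p + 1), f l 1 j t)| ≤ (2 * (p:ℝ) + 1) * δ := by
    intro l hl t
    rcases Nat.eq_zero_or_pos p with hp | hp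
    · subst hp
      simp only [Finset.range_zero, Finset.sum_empty, Finset.range_one,
        Finset.sum_singleton, zero_add]
      have hw := hwrap l hl t
      have h00 : f l 0 0 = 0 := hsupp l 0 0 (by omega)
      simp only [Nat.zero_sub, h00, ContinuousMap.zero_apply, zero_add, add_zero] at hw
      push_cast
      linarith [hw]
    · obtain ⟨m, rfl⟩ : ∃ m, p = m + 1 := ⟨p - 1, (Nat.succ_pred_eq_of_pos hp).symm⟩
      have e1 : (∑ j ∈ Finset.range (m + 1), f l 0 j (h.symm t))
          = (∑ j ∈ Finset.range m, f l 0 j (h.symm t)) + f l 0 m (h.symm t) :=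
        Finset.sum_range_succ _ _
      have e2 : (∑ j ∈ Finset.range (m + 1), f l 0 j t)
          = (∑ j ∈ Finset.range m, f l 0 (j + 1) t) + f l 0 0 t :=
        Finset.sum_range_succ' _ _
      have e3 : (∑ j ∈ Finset.range (m + 1 + 1), f l 1 j (h.symm t))
          = (∑ j ∈ Finset.range (m + 1), f l 1 j (h.symm t)) + f l 1 (m + 1) (h.symm t) :=
        Finset.sum_range_succ _ _
      have e4 : (∑ j ∈ Finset.range (m + 1 + 1), f l 1 j t)
          = (∑ j ∈ Finset.range (m + 1), f l 1 (j + 1) t) + f l 1 0 t :=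
        Finset.sum_range_succ' _ _
      have key : ((∑ j ∈ Finset.range (m + 1), f l 0 j (h.symm t)) +
            ∑ j ∈ Finset.range (m + 1 + 1), f l 1 j (h.symm t)) -
          ((∑ j ∈ Finset.range (m + 1), f l 0 j t) +
            ∑ j ∈ Finset.range (m + 1 + 1), f l 1 j t)
          = (∑ j ∈ Finset.range m, (f l 0 j (h.symm t) - f l 0 (j + 1) t)) +
            (∑ j ∈ Finset.range (m + 1), (f l 1 j (h.symm t) - f l 1 (j + 1) t)) +
            ((f l 0 m (h.symm t) + f l 1 (m + 1) (h.symm t)) - (f l 0 0 t + f l 1 0 t)) := by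
        rw [e1, e2, e3, e4, Finset.sum_sub_distrib, Finset.sum_sub_distrib]
        ring
      rw [key]
      have b1 : |∑ j ∈ Finset.range m, (f l 0 j (h.symm t) - f l 0 (j + 1) t)| ≤ m * δ := by
        calc |∑ j ∈ Finset.range m, (f l 0 j (h.symm t) - f l 0 (j + 1) t)|
            ≤ ∑ j ∈ Finset.range m, |f l 0 j (h.symm t) - f l 0 (j + 1) t| :=
              Finset.abs_sum_le_sum_abs _ _
          _ ≤ ∑ _j ∈ Finset.range m, δ := by
              refine Finset.sum_le_sum fun i hi => le_of_lt ?_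
              exact hshift l hl 0 i (by omega) (by
                have := Finset.mem_range.mp hi; omega) t
          _ = m * δ := by
              simp [Finset.sum_const, Finset.card_range, nsmul_eq_mul]
      have b2 : |∑ j ∈ Finset.range (m + 1), (f l 1 j (h.symm t) - f l 1 (j + 1) t)|
          ≤ (m + 1) * δ := by
        calc |∑ j ∈ Finset.range (m + 1), (f l 1 j (h.symm t) - f l 1 (j + 1) t)|
            ≤ ∑ j ∈ Finset.range (m + 1), |f l 1 j (h.symm t) - f l 1 (j + 1) t| :=
              Finset.abs_sum_le_sum_abs _ _
          _ ≤ ∑ _j ∈ Finset.range (m + 1), δ := by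
              refine Finset.sum_le_sum fun i hi => le_of_lt ?_
              exact hshift l hl 1 i (by omega) (by
                have := Finset.mem_range.mp hi; omega) t
          _ = (m + 1) * δ := by
              simp [Finset.sum_const, Finset.card_range, nsmul_eq_mul]
      have b3 : |(f l 0 m (h.symm t) + f l 1 (m + 1) (h.symm t)) -
          (f l 0 0 t + f l 1 0 t)| ≤ δ := by
        have hw := hwrap l hl t
        simpa using le_of_lt hw
      have htri := abs_add_le
        ((∑ j ∈ Finset.range m, (f l 0 j (h.symm t) - f l 0 (j + 1) t)) +
          ∑ j ∈ Finset.range (m + 1), (f l 1 j (h.symm t) - f l 1 (j + 1) t))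
        ((f l 0 m (h.symm t) + f l 1 (m + 1) (h.symm t)) - (f l 0 0 t + f l 1 0 t))
      have htri2 := abs_add_le
        (∑ j ∈ Finset.range m, (f l 0 j (h.symm t) - f l 0 (j + 1) t))
        (∑ j ∈ Finset.range (m + 1), (f l 1 j (h.symm t) - f l 1 (j + 1) t))
      push_cast
      linarith
  -- almost-invariance of the total sum
  have hSdiff : ∀ t : T, |S (h.symm t) - S t| ≤ C * δ := by
    intro t
    rw [hSapp, hSapp, ← Finset.sum_sub_distrib]
    calc |∑ l ∈ Finset.range (d + 1),
          (((∑ j ∈ Finset.range p, f l 0 j (h.symm t)) +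
            ∑ j ∈ Finset.range (p + 1), f l 1 j (h.symm t)) -
          ((∑ j ∈ Finset.range p, f l 0 j t) +
            ∑ j ∈ Finset.range (p + 1), f l 1 j t))|
        ≤ ∑ l ∈ Finset.range (d + 1),
          |((∑ j ∈ Finset.range p, f l 0 j (h.symm t)) +
            ∑ j ∈ Finset.range (p + 1), f l 1 j (h.symm t)) -
          ((∑ j ∈ Finset.range p, f l 0 j t) +
            ∑ j ∈ Finset.range (p + 1), f l 1 j t)| := Finset.abs_sum_le_sum_abs _ _
      _ ≤ ∑ _l ∈ Finset.range (d + 1), (2 * (p:ℝ) + 1) * δ := by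
          refine Finset.sum_le_sum fun l hlm => ?_
          exact hDl l (by have := Finset.mem_range.mp hlm; omega) t
      _ = (d + 1 : ℝ) * ((2 * (p:ℝ) + 1) * δ) := by
          simp [Finset.sum_const, Finset.card_range, nsmul_eq_mul]
      _ ≤ C * δ := by
          rw [hCdef]
          push_cast
          nlinarith [hδ0.le, Nat.cast_nonneg (α := ℝ) d, Nat.cast_nonneg (α := ℝ) p]
  refine ⟨g, ?_, ?_, ?_, ?_, ?_, ?_⟩
  · -- support
    intro l r j hv
    ext t
    rw [hgapp, hsupp l r j hv]
    simp
  · -- bounds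
    intro l r j t
    rw [hgapp]
    constructor
    · exact mul_nonneg (hbd l r j t).1 (hSinvnn t)
    · have h1 : f l r j t * (S t)⁻¹ ≤ S t * (S t)⁻¹ :=
        mul_le_mul_of_nonneg_right (hterm l r j t) (hSinvnn t)
      rw [mul_inv_cancel₀ (hSne t)] at h1
      exact h1
  · -- almost orthogonality
    intro l hl q i r j hq hr hi hj hne t
    rw [hgapp, hgapp]
    have hff := horth l hl q i r j hq hr hi hj hne t
    have e : f l q i t * (S t)⁻¹ * (f l r j t * (S t)⁻¹)
        = (f l q i t * f l r j t) * ((S t)⁻¹ * (S t)⁻¹) := by ring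
    rw [e, abs_mul, abs_of_nonneg (mul_nonneg (hSinvnn t) (hSinvnn t))]
    have h1 : |f l q i t * f l r j t| * ((S t)⁻¹ * (S t)⁻¹) ≤ δ * (2 * 2) := by
      apply mul_le_mul (le_of_lt hff)
        (mul_le_mul (hSinv t) (hSinv t) (hSinvnn t) (by norm_num))
        (mul_nonneg (hSinvnn t) (hSinvnn t)) (le_of_lt hδ0)
    have h2 : (0:ℝ) ≤ (C - 1) * δ := mul_nonneg (by linarith) hδ0.le
    nlinarith [hδε]
  · -- exact covering
    intro t
    have ht : ∀ l r j, g l r j t = f l r j t * (S t)⁻¹ := fun l r j => hgapp l r j t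
    simp only [ht, ← Finset.sum_mul, ← add_mul, ← hSapp]
    rw [mul_inv_cancel₀ (hSne t)]
    simpa using hε
  · -- shift condition
    intro l hl r j hr hj t
    rw [hgapp, hgapp]
    have hb := div_sub_div_abs_bound (f l r j (h.symm t)) (f l r (j + 1) t)
      (S t) (S (h.symm t)) δ (C * δ) 1
      (le_of_lt (hshift l hl r j hr hj t)) (hSdiff t)
      (hShalf t) (hShalf (h.symm t)) (hbd l r (j + 1) t).1 (hbd l r (j + 1) t).2
    have h2 : (0:ℝ) ≤ (C - 1) * δ := mul_nonneg (by linarith) hδ0.le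
    have h3 : 0 < C * δ := mul_pos hC0 hδ0
    nlinarith [hδε]
  · -- wrap-around condition
    intro l hl t
    rw [hgapp, hgapp, hgapp, hgapp, ← add_mul, ← add_mul]
    have hb := div_sub_div_abs_bound
      (f l 0 (p - 1) (h.symm t) + f l 1 p (h.symm t)) (f l 0 0 t + f l 1 0 t)
      (S t) (S (h.symm t)) δ (C * δ) 2
      (le_of_lt (hwrap l hl t)) (hSdiff t)
      (hShalf t) (hShalf (h.symm t))
      (add_nonneg (hbd l 0 0 t).1 (hbd l 1 0 t).1)
      (by linarith [(hbd l 0 0 t).2, (hbd l 1 0 t).2])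
    have h2 : (0:ℝ) ≤ (C - 1) * δ := mul_nonneg (by linarith) hδ0.le
    have h3 : 0 < C * δ := mul_pos hC0 hδ0
    nlinarith [hδε]
end

section
/- For every integer p ≥ 1 there exist a unitary u and positive elements f₀,…,f_{p−1}, g₀,…,g_p in the dimension drop algebra Z_{p,p+1} such that: (1) f_i f_j = 0 for i ≠ j, g_i g_j = 0 for i ≠ j, and f_i g_j = g_j f_i for all i, j; (2) f₀ + ⋯ + f_{p−1} + g₀ + ⋯ + g_p = 1; (3) u f_j u* = f_{(j+1 mod p)} for all j ∈ {0,…,p−1}, and u g_j u* = g_{(j+1 mod p+1)} for all j ∈ {0,…,p}. -/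
open Matrix Kronecker ComplexOrder

/-- The dimension drop algebra `Z_{p,p+1}`, realized as the set of continuous functions from
`[0,1]` to `M_p(ℂ) ⊗ M_{p+1}(ℂ)` whose value at `0` lies in `M_p ⊗ 1` and whose value at `1`
lies in `1 ⊗ M_{p+1}`. -/
def DimDrop (p : ℕ) :
    Set C(unitInterval, Matrix (Fin p × Fin (p + 1)) (Fin p × Fin (p + 1)) ℂ) :=
  {f | (∃ a : Matrix (Fin p) (Fin p) ℂ,
          f 0 = a ⊗ₖ (1 : Matrix (Fin (p + 1)) (Fin (p + 1)) ℂ)) ∧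
       (∃ b : Matrix (Fin (p + 1)) (Fin (p + 1)) ℂ,
          f 1 = (1 : Matrix (Fin p) (Fin p) ℂ) ⊗ₖ b)}


namespace DimDropAux

open Fin.NatCast

noncomputable def Fm (m : ℕ) : Matrix (Fin m) (Fin m) ℂ :=
  Matrix.of fun j k => Complex.exp (2 * Real.pi * Complex.I * (j : ℕ) * (k : ℕ) / m)

noncomputable def Dm (m : ℕ) (s : ℝ) : Matrix (Fin m) (Fin m) ℂ :=
  Matrix.diagonal fun r => Complex.exp (-(2 * Real.pi * Complex.I * (s : ℝ) * (r : ℕ) / m))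

noncomputable def wm (m : ℕ) (s : ℝ) : Matrix (Fin m) (Fin m) ℂ :=
  (m : ℂ)⁻¹ • (Fm m * Dm m s * (Fm m)ᴴ)

def Sig (m : ℕ) [NeZero m] : Matrix (Fin m) (Fin m) ℂ :=
  Matrix.of fun j k => if j = k + 1 then (1 : ℂ) else 0

lemma sum_exp_dvd (m : ℕ) (hm : 0 < m) (d : ℤ) :
    ∑ r : Fin m, Complex.exp (2 * Real.pi * Complex.I * d * (r : ℕ) / m)
      = if (m : ℤ) ∣ d then (m : ℂ) else 0 := by
  have hm' : (m : ℂ) ≠ 0 := Nat.cast_ne_zero.mpr hm.ne'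
  have hπI : (2 * (Real.pi:ℂ) * Complex.I) ≠ 0 := by
    simp [Real.pi_ne_zero, Complex.I_ne_zero]
  have hsum : ∑ r : Fin m, Complex.exp (2 * Real.pi * Complex.I * d * (r:ℕ) / m)
      = ∑ r ∈ Finset.range m, Complex.exp (2 * Real.pi * Complex.I * d / m) ^ r := by
    rw [← Fin.sum_univ_eq_sum_range]
    refine Finset.sum_congr rfl fun r _ => ?_
    rw [← Complex.exp_nat_mul]
    congr 1
    ring
  rw [hsum]
  by_cases hd : (m : ℤ) ∣ d
  · obtain ⟨e, rfl⟩ := hd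
    have h1 : (2 * (Real.pi:ℂ) * Complex.I * ((m * e : ℤ) : ℂ) / m)
        = (e : ℂ) * (2 * Real.pi * Complex.I) := by
      push_cast
      field_simp
    rw [if_pos ⟨e, rfl⟩, h1, Complex.exp_int_mul_two_pi_mul_I]
    simp
  · rw [if_neg hd]
    have hz1 : Complex.exp (2 * Real.pi * Complex.I * d / m) ≠ 1 := by
      intro h
      obtain ⟨n, hn⟩ := Complex.exp_eq_one_iff.mp h
      apply hd
      refine ⟨n, ?_⟩
      have hcast : (d : ℂ) = (m : ℂ) * n := by
        have h2 : 2 * (Real.pi:ℂ) * Complex.I * d = 2 * (Real.pi:ℂ) * Complex.I * ((m:ℂ) * n) := by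
          field_simp at hn
          linear_combination (2 * (Real.pi:ℂ) * Complex.I) * hn
        exact mul_left_cancel₀ hπI h2
      exact_mod_cast hcast
    rw [geom_sum_eq hz1]
    have hzm : Complex.exp (2 * Real.pi * Complex.I * d / m) ^ m = 1 := by
      rw [← Complex.exp_nat_mul]
      have h3 : (m : ℂ) * (2 * Real.pi * Complex.I * d / m) = (d:ℂ) * (2 * Real.pi * Complex.I) := by
        field_simp
      rw [h3]
      exact_mod_cast Complex.exp_int_mul_two_pi_mul_I d
    rw [hzm]
    simp

lemma conj_aux (m a b : ℕ) :
    (starRingEnd ℂ) (2 * Real.pi * Complex.I * (a : ℂ) * (b : ℂ) / (m : ℂ))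
      = -(2 * Real.pi * Complex.I * (a : ℂ) * (b : ℂ) / (m : ℂ)) := by
  simp only [map_div₀, _root_.map_mul, Complex.conj_I, Complex.conj_ofReal, map_ofNat,
    Complex.conj_natCast]
  ring

lemma conj_aux2 (m b : ℕ) (s : ℝ) :
    (starRingEnd ℂ) (-(2 * Real.pi * Complex.I * (s : ℂ) * (b : ℂ) / (m : ℂ)))
      = 2 * Real.pi * Complex.I * (s : ℂ) * (b : ℂ) / (m : ℂ) := by
  simp only [map_neg, map_div₀, _root_.map_mul, Complex.conj_I, Complex.conj_ofReal, map_ofNat,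
    Complex.conj_natCast]
  ring

lemma dvd_sub_iff_eq (m : ℕ) (j k : Fin m) :
    (m : ℤ) ∣ ((j : ℕ) : ℤ) - ((k : ℕ) : ℤ) ↔ j = k := by
  constructor
  · intro h
    have h1 : |((j : ℕ) : ℤ) - ((k : ℕ) : ℤ)| < m := by
      have := j.isLt; have := k.isLt
      rw [abs_lt]; constructor <;> omega
    have := Int.eq_zero_of_abs_lt_dvd h h1
    exact Fin.ext (by omega)
  · rintro rfl; simp

lemma Fm_mul_conjT (m : ℕ) (hm : 0 < m) : Fm m * (Fm m)ᴴ = (m : ℂ) • 1 := by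
  ext j k
  rw [Matrix.mul_apply]
  have hterm : ∀ r : Fin m, Fm m j r * (Fm m)ᴴ r k
      = Complex.exp (2 * Real.pi * Complex.I * ((((j:ℕ):ℤ) - ((k:ℕ):ℤ)) : ℤ) * (r : ℕ) / m) := by
    intro r
    rw [Matrix.conjTranspose_apply, Fm]
    simp only [Matrix.of_apply, RCLike.star_def]
    rw [← Complex.exp_conj, conj_aux, ← Complex.exp_add]
    congr 1
    push_cast
    ring
  rw [Finset.sum_congr rfl fun r _ => hterm r, sum_exp_dvd m hm _]
  rw [Matrix.smul_apply, Matrix.one_apply]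
  by_cases h : j = k
  · rw [if_pos ((dvd_sub_iff_eq m j k).mpr h), if_pos h]; simp
  · rw [if_neg (fun hd => h ((dvd_sub_iff_eq m j k).mp hd)), if_neg h]; simp

lemma conjT_mul_Fm (m : ℕ) (hm : 0 < m) : (Fm m)ᴴ * Fm m = (m : ℂ) • 1 := by
  ext j k
  rw [Matrix.mul_apply]
  have hterm : ∀ r : Fin m, (Fm m)ᴴ j r * Fm m r k
      = Complex.exp (2 * Real.pi * Complex.I * ((((k:ℕ):ℤ) - ((j:ℕ):ℤ)) : ℤ) * (r : ℕ) / m) := by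
    intro r
    rw [Matrix.conjTranspose_apply, Fm]
    simp only [Matrix.of_apply, RCLike.star_def]
    rw [← Complex.exp_conj, conj_aux, ← Complex.exp_add]
    congr 1
    push_cast
    ring
  rw [Finset.sum_congr rfl fun r _ => hterm r, sum_exp_dvd m hm _]
  rw [Matrix.smul_apply, Matrix.one_apply]
  by_cases h : j = k
  · rw [if_pos ((dvd_sub_iff_eq m k j).mpr h.symm), if_pos h]; simp
  · rw [if_neg (fun hd => h ((dvd_sub_iff_eq m k j).mp hd).symm), if_neg h]; simp

lemma Dm_mul_conjT (m : ℕ) (s : ℝ) : Dm m s * (Dm m s)ᴴ = 1 := by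
  rw [Dm, Matrix.diagonal_conjTranspose, Matrix.diagonal_mul_diagonal, ← Matrix.diagonal_one]
  refine congrArg Matrix.diagonal (funext fun r => ?_)
  simp only [Pi.mul_apply, Pi.star_apply, RCLike.star_def]
  rw [← Complex.exp_conj, conj_aux2, ← Complex.exp_add, neg_add_cancel, Complex.exp_zero]

lemma conjT_mul_Dm (m : ℕ) (s : ℝ) : (Dm m s)ᴴ * Dm m s = 1 := by
  rw [Dm, Matrix.diagonal_conjTranspose, Matrix.diagonal_mul_diagonal, ← Matrix.diagonal_one]
  refine congrArg Matrix.diagonal (funext fun r => ?_)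
  simp only [Pi.mul_apply, Pi.star_apply, RCLike.star_def]
  rw [← Complex.exp_conj, conj_aux2, ← Complex.exp_add, add_neg_cancel, Complex.exp_zero]

lemma wm_conjT (m : ℕ) (s : ℝ) : (wm m s)ᴴ = (m : ℂ)⁻¹ • (Fm m * (Dm m s)ᴴ * (Fm m)ᴴ) := by
  rw [wm, Matrix.conjTranspose_smul]
  congr 1
  · simp
  · rw [Matrix.conjTranspose_mul, Matrix.conjTranspose_mul, Matrix.conjTranspose_conjTranspose,
      Matrix.mul_assoc]

lemma wm_mul_conjT (m : ℕ) (hm : 0 < m) (s : ℝ) : wm m s * (wm m s)ᴴ = 1 := by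
  have hm' : (m : ℂ) ≠ 0 := Nat.cast_ne_zero.mpr hm.ne'
  rw [wm_conjT, wm, Matrix.smul_mul, Matrix.mul_smul, smul_smul]
  have : Fm m * Dm m s * (Fm m)ᴴ * (Fm m * (Dm m s)ᴴ * (Fm m)ᴴ)
      = ((m : ℂ) * m) • (1 : Matrix (Fin m) (Fin m) ℂ) := by
    calc Fm m * Dm m s * (Fm m)ᴴ * (Fm m * (Dm m s)ᴴ * (Fm m)ᴴ)
        = Fm m * Dm m s * ((Fm m)ᴴ * Fm m) * ((Dm m s)ᴴ * (Fm m)ᴴ) := by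
          simp only [Matrix.mul_assoc]
      _ = (m : ℂ) • (Fm m * (Dm m s * (Dm m s)ᴴ) * (Fm m)ᴴ) := by
          rw [conjT_mul_Fm m hm]
          simp only [Matrix.mul_smul, Matrix.smul_mul, Matrix.mul_one, Matrix.mul_assoc]
      _ = (m : ℂ) • (Fm m * (Fm m)ᴴ) := by rw [Dm_mul_conjT, Matrix.mul_one]
      _ = ((m : ℂ) * m) • 1 := by rw [Fm_mul_conjT m hm, smul_smul]
  rw [this, smul_smul]
  rw [show (m:ℂ)⁻¹ * (m:ℂ)⁻¹ * ((m:ℂ) * m) = 1 by field_simp]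
  rw [one_smul]

lemma conjT_mul_wm (m : ℕ) (hm : 0 < m) (s : ℝ) : (wm m s)ᴴ * wm m s = 1 := by
  have hm' : (m : ℂ) ≠ 0 := Nat.cast_ne_zero.mpr hm.ne'
  rw [wm_conjT, wm, Matrix.smul_mul, Matrix.mul_smul, smul_smul]
  have : Fm m * (Dm m s)ᴴ * (Fm m)ᴴ * (Fm m * Dm m s * (Fm m)ᴴ)
      = ((m : ℂ) * m) • (1 : Matrix (Fin m) (Fin m) ℂ) := by
    calc Fm m * (Dm m s)ᴴ * (Fm m)ᴴ * (Fm m * Dm m s * (Fm m)ᴴ)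
        = Fm m * (Dm m s)ᴴ * ((Fm m)ᴴ * Fm m) * (Dm m s * (Fm m)ᴴ) := by
          simp only [Matrix.mul_assoc]
      _ = (m : ℂ) • (Fm m * ((Dm m s)ᴴ * Dm m s) * (Fm m)ᴴ) := by
          rw [conjT_mul_Fm m hm]
          simp only [Matrix.mul_smul, Matrix.smul_mul, Matrix.mul_one, Matrix.mul_assoc]
      _ = (m : ℂ) • (Fm m * (Fm m)ᴴ) := by rw [conjT_mul_Dm, Matrix.mul_one]
      _ = ((m : ℂ) * m) • 1 := by rw [Fm_mul_conjT m hm, smul_smul]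
  rw [this, smul_smul]
  rw [show (m:ℂ)⁻¹ * (m:ℂ)⁻¹ * ((m:ℂ) * m) = 1 by field_simp]
  rw [one_smul]

lemma wm_zero (m : ℕ) (hm : 0 < m) : wm m 0 = 1 := by
  have hm' : (m : ℂ) ≠ 0 := Nat.cast_ne_zero.mpr hm.ne'
  have hD : Dm m 0 = 1 := by
    rw [Dm, ← Matrix.diagonal_one]
    refine congrArg Matrix.diagonal (funext fun r => ?_)
    norm_num
  rw [wm, hD, Matrix.mul_one, Fm_mul_conjT m hm, smul_smul]
  rw [inv_mul_cancel₀ hm', one_smul]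

lemma dvd_shift_iff (m : ℕ) [NeZero m] (j k : Fin m) :
    (m : ℤ) ∣ ((j : ℕ) : ℤ) - ((k : ℕ) : ℤ) - 1 ↔ j = k + 1 := by
  obtain ⟨m, rfl⟩ : ∃ n, m = n + 1 := ⟨m - 1, by have := NeZero.pos m; omega⟩
  constructor
  · rintro ⟨c, hc⟩
    push_cast at hc
    have hj := j.isLt; have hk := k.isLt
    have hc1 : c < 1 := by
      by_contra h; push_neg at h
      have : ((m:ℤ)+1) * 1 ≤ ((m:ℤ)+1) * c := by
        apply mul_le_mul_of_nonneg_left h; positivity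
      omega
    have hc2 : -1 ≤ c := by
      by_contra h; push_neg at h
      have : ((m:ℤ)+1) * c ≤ ((m:ℤ)+1) * (-2) := by
        apply mul_le_mul_of_nonneg_left (by omega); positivity
      omega
    have : c = 0 ∨ c = -1 := by omega
    rcases this with rfl | rfl
    · have hval : (j : ℕ) = (k : ℕ) + 1 := by omega
      have hklast : k ≠ Fin.last m := by
        intro h; subst h; simp [Fin.last] at hval; omega
      apply Fin.ext
      rw [Fin.val_add_one, if_neg hklast, hval]
    · have hval : (j : ℕ) = 0 ∧ (k : ℕ) = m := by constructor <;> omega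
      have hklast : k = Fin.last m := by apply Fin.ext; simp [Fin.last, hval.2]
      apply Fin.ext
      rw [Fin.val_add_one, if_pos hklast, hval.1]
  · rintro rfl
    rcases eq_or_ne k (Fin.last m) with rfl | hne
    · refine ⟨-1, ?_⟩
      rw [Fin.val_add_one, if_pos rfl]
      simp only [Fin.val_last]
      push_cast
      ring
    · refine ⟨0, ?_⟩
      rw [Fin.val_add_one, if_neg hne]
      push_cast; ring

lemma wm_one (m : ℕ) [NeZero m] : wm m 1 = Sig m := by
  have hm : 0 < m := NeZero.pos m
  have hm' : (m : ℂ) ≠ 0 := Nat.cast_ne_zero.mpr hm.ne'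
  ext j k
  rw [wm, Matrix.smul_apply, Matrix.mul_apply]
  have hterm : ∀ r : Fin m, (Fm m * Dm m 1) j r * (Fm m)ᴴ r k
      = Complex.exp (2 * Real.pi * Complex.I * ((((j:ℕ):ℤ) - ((k:ℕ):ℤ) - 1) : ℤ) * (r : ℕ) / m) := by
    intro r
    simp only [Dm, Matrix.mul_diagonal, Matrix.conjTranspose_apply, Fm, Matrix.of_apply,
      RCLike.star_def]
    rw [← Complex.exp_conj, conj_aux, ← Complex.exp_add, ← Complex.exp_add]
    congr 1
    push_cast
    ring
  rw [Finset.sum_congr rfl fun r _ => hterm r, sum_exp_dvd m hm _]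
  rw [Sig]
  simp only [Matrix.of_apply]
  by_cases h : j = k + 1
  · rw [if_pos ((dvd_shift_iff m j k).mpr h), if_pos h, smul_eq_mul, inv_mul_cancel₀ hm']
  · rw [if_neg (fun hd => h ((dvd_shift_iff m j k).mp hd)), if_neg h, smul_eq_mul, mul_zero]

lemma sig_conj (m : ℕ) [NeZero m] (r : Fin m) :
    Sig m * Matrix.diagonal (Pi.single r 1) * (Sig m)ᴴ
      = Matrix.diagonal (Pi.single (r + 1) (1 : ℂ)) := by
  ext j k
  rw [Matrix.mul_apply]
  have hterm : ∀ b : Fin m, (Sig m * Matrix.diagonal (Pi.single r (1:ℂ))) j b * (Sig m)ᴴ b k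
      = if b = r then ((if j = b + 1 then (1:ℂ) else 0)
          * (if k = b + 1 then (1:ℂ) else 0)) else 0 := by
    intro b
    rw [Matrix.mul_diagonal, Matrix.conjTranspose_apply]
    simp only [Sig, Matrix.of_apply, Pi.single_apply, apply_ite (star : ℂ → ℂ), star_one,
      star_zero]
    by_cases hb : b = r <;> simp [hb] <;> ring
  rw [Finset.sum_congr rfl fun b _ => hterm b, Finset.sum_ite_eq' Finset.univ r]
  simp only [Finset.mem_univ, if_true]
  rw [Matrix.diagonal_apply, Pi.single_apply]
  by_cases hj : j = r + 1 <;> by_cases hk : k = r + 1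
  · subst hj; subst hk; simp
  · rw [if_pos hj, if_neg hk, mul_zero, if_neg (by rintro rfl; exact hk hj)]
  · rw [if_neg hj, zero_mul, if_neg (by rintro rfl; exact hj hk)]
  · rw [if_neg hj, zero_mul]
    split <;> rfl

lemma wm_cont (m : ℕ) (j k : Fin m) : Continuous fun s : ℝ => wm m s j k := by
  have h : ∀ s : ℝ, wm m s j k = (m:ℂ)⁻¹ * ∑ r : Fin m, (Fm m j r * (starRingEnd ℂ) (Fm m k r))
      * Complex.exp (-(2 * Real.pi * Complex.I * (s:ℂ) * (r:ℕ) / m)) := by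
    intro s
    rw [wm, Matrix.smul_apply, Matrix.mul_apply, smul_eq_mul]
    congr 1
    refine Finset.sum_congr rfl fun r _ => ?_
    simp only [Dm, Matrix.mul_diagonal, Matrix.conjTranspose_apply, RCLike.star_def]
    ring
  simp only [h]
  refine continuous_const.mul (continuous_finset_sum _ fun r _ => continuous_const.mul ?_)
  exact Complex.continuous_exp.comp (by fun_prop)

lemma kron_conjT {l m n o : Type*} [Fintype l] [Fintype m] [Fintype n] [Fintype o]
    (A : Matrix l m ℂ) (B : Matrix n o ℂ) : (A ⊗ₖ B)ᴴ = Aᴴ ⊗ₖ Bᴴ := by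
  ext a c
  simp only [Matrix.conjTranspose_apply, Matrix.kroneckerMap_apply, star_mul']

noncomputable def Af (t : unitInterval) : ℝ := min 1 (max 0 (2 - 3 * (t : ℝ)))

lemma Af_cont : Continuous Af := by unfold Af; fun_prop

lemma Af_zero : Af 0 = 1 := by norm_num [Af]
lemma Af_one : Af 1 = 0 := by norm_num [Af]
lemma Af_nonneg (t : unitInterval) : 0 ≤ Af t := le_min zero_le_one (le_max_left _ _)
lemma Af_le_one (t : unitInterval) : Af t ≤ 1 := min_le_left _ _

lemma Af_ne_zero {t : unitInterval} (h : Af t ≠ 0) : min 1 (3 - 3 * (t:ℝ)) = 1 := by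
  rcases le_or_gt (2 - 3 * (t:ℝ)) 0 with h' | h'
  · exact absurd (by rw [Af, max_eq_left h', min_eq_right zero_le_one]) h
  · exact min_eq_left (by linarith)

lemma Af_ne_one {t : unitInterval} (h : 1 - Af t ≠ 0) : min 1 (3 * (t:ℝ)) = 1 := by
  rcases le_or_gt 1 (max 0 (2 - 3 * (t:ℝ))) with h' | h'
  · exact absurd (by rw [Af, min_eq_left h']; ring) h
  · have h2 : 2 - 3 * (t:ℝ) < 1 := lt_of_le_of_lt (le_max_right 0 _) h'
    exact min_eq_left (by linarith)

noncomputable def Xu (p : ℕ) (t : unitInterval) : Matrix (Fin p) (Fin p) ℂ :=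
  wm p (min 1 (3 - 3 * (t:ℝ)))
noncomputable def Yu (p : ℕ) (t : unitInterval) : Matrix (Fin (p+1)) (Fin (p+1)) ℂ :=
  wm (p+1) (min 1 (3 * (t:ℝ)))
noncomputable def uu (p : ℕ) (t : unitInterval) :
    Matrix (Fin p × Fin (p+1)) (Fin p × Fin (p+1)) ℂ :=
  Xu p t ⊗ₖ Yu p t

noncomputable def ff (p : ℕ) [NeZero p] (j : ℕ) (t : unitInterval) :
    Matrix (Fin p × Fin (p+1)) (Fin p × Fin (p+1)) ℂ :=
  ((Af t : ℝ) : ℂ) • (Matrix.diagonal (Pi.single ((j : Fin p)) (1:ℂ))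
    ⊗ₖ (1 : Matrix (Fin (p+1)) (Fin (p+1)) ℂ))

noncomputable def gg (p : ℕ) (j : ℕ) (t : unitInterval) :
    Matrix (Fin p × Fin (p+1)) (Fin p × Fin (p+1)) ℂ :=
  ((1 - Af t : ℝ) : ℂ) • ((1 : Matrix (Fin p) (Fin p) ℂ)
    ⊗ₖ Matrix.diagonal (Pi.single ((j : Fin (p+1))) (1:ℂ)))

lemma diag_kron_one (m n : ℕ) (d : Fin m → ℂ) :
    Matrix.diagonal d ⊗ₖ (1 : Matrix (Fin n) (Fin n) ℂ)
      = Matrix.diagonal (fun q : Fin m × Fin n => d q.1) := by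
  rw [← Matrix.diagonal_one, Matrix.diagonal_kronecker_diagonal]
  exact congrArg Matrix.diagonal (funext fun q => mul_one _)

lemma one_kron_diag (m n : ℕ) (d : Fin n → ℂ) :
    (1 : Matrix (Fin m) (Fin m) ℂ) ⊗ₖ Matrix.diagonal d
      = Matrix.diagonal (fun q : Fin m × Fin n => d q.2) := by
  rw [← Matrix.diagonal_one, Matrix.diagonal_kronecker_diagonal]
  exact congrArg Matrix.diagonal (funext fun q => one_mul _)

lemma ff_diag (p : ℕ) [NeZero p] (j : ℕ) (t : unitInterval) :
    ff p j t = Matrix.diagonal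
      (fun q : Fin p × Fin (p+1) => (Af t : ℂ) * (Pi.single ((j : Fin p)) (1:ℂ) : Fin p → ℂ) q.1) := by
  rw [ff, diag_kron_one, ← Matrix.diagonal_smul]
  exact congrArg Matrix.diagonal (funext fun q => by simp [smul_eq_mul])

lemma gg_diag (p : ℕ) (j : ℕ) (t : unitInterval) :
    gg p j t = Matrix.diagonal
      (fun q : Fin p × Fin (p+1) => ((1 - Af t : ℝ) : ℂ) * (Pi.single ((j : Fin (p+1))) (1:ℂ) : Fin (p+1) → ℂ) q.2) := by
  rw [gg, one_kron_diag, ← Matrix.diagonal_smul]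
  exact congrArg Matrix.diagonal (funext fun q => by simp [smul_eq_mul])

lemma cast_succ_mod (m : ℕ) [NeZero m] (j : ℕ) :
    (((j + 1) % m : ℕ) : Fin m) = (j : Fin m) + 1 := by
  apply Fin.ext
  simp only [Fin.val_natCast, Fin.add_def, Fin.val_one']
  conv_lhs => rw [Nat.mod_mod_of_dvd _ dvd_rfl]
  exact Nat.add_mod j 1 m

lemma sum_single_range (m : ℕ) [NeZero m] (x : Fin m) :
    ∑ j ∈ Finset.range m, (Pi.single ((j : Fin m)) (1:ℂ) : Fin m → ℂ) x = 1 := by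
  rw [← Fin.sum_univ_eq_sum_range (fun j => (Pi.single ((j : Fin m)) (1:ℂ) : Fin m → ℂ) x)]
  have h : ∀ i : Fin m, (Pi.single (((i : ℕ) : Fin m)) (1:ℂ) : Fin m → ℂ) x
      = (Pi.single i (1:ℂ) : Fin m → ℂ) x :=
    fun i => by rw [Fin.cast_val_eq_self]
  rw [Finset.sum_congr rfl fun i _ => h i]
  rw [show (1 : ℂ) = (fun _ : Fin m => (1:ℂ)) x from rfl]
  exact Fintype.sum_pi_single x (fun _ => (1:ℂ))

lemma cast_ne (m : ℕ) [NeZero m] {i j : ℕ} (hi : i < m) (hj : j < m) (h : i ≠ j) :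
    (i : Fin m) ≠ (j : Fin m) := fun he =>
  h (by rw [← Fin.val_cast_of_lt hi, ← Fin.val_cast_of_lt hj, he])

end DimDropAux

open Fin.NatCast in
open DimDropAux in
/-- For every `p ≥ 1` there are a unitary `u` and positive elements
`f₀,…,f_{p-1}, g₀,…,g_p` of `Z_{p,p+1}` such that the `f`'s are pairwise orthogonal, the `g`'s
are pairwise orthogonal, each `f_i` commutes with each `g_j`, all of them sum to `1`, and
conjugation by `u` cyclically permutes the `f`'s and the `g`'s. -/
theorem dimension_drop_towers (p : ℕ) (hp : 1 ≤ p) :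
    ∃ (u : C(unitInterval, Matrix (Fin p × Fin (p + 1)) (Fin p × Fin (p + 1)) ℂ))
      (f g : ℕ → C(unitInterval, Matrix (Fin p × Fin (p + 1)) (Fin p × Fin (p + 1)) ℂ)),
      u ∈ DimDrop p ∧ (∀ j, j < p → f j ∈ DimDrop p) ∧ (∀ j, j < p + 1 → g j ∈ DimDrop p) ∧
      -- u is unitary
      (∀ t, u t * (u t)ᴴ = 1 ∧ (u t)ᴴ * u t = 1) ∧
      -- the f's and g's are positive
      (∀ j, j < p → ∀ t, (f j t).PosSemidef) ∧
      (∀ j, j < p + 1 → ∀ t, (g j t).PosSemidef) ∧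
      -- (1) orthogonality and commutation
      (∀ i j, i < p → j < p → i ≠ j → ∀ t, f i t * f j t = 0) ∧
      (∀ i j, i < p + 1 → j < p + 1 → i ≠ j → ∀ t, g i t * g j t = 0) ∧
      (∀ i j, i < p → j < p + 1 → ∀ t, f i t * g j t = g j t * f i t) ∧
      -- (2) partition of unity
      (∀ t, ((∑ j ∈ Finset.range p, f j t) + ∑ j ∈ Finset.range (p + 1), g j t) = 1) ∧
      -- (3) u cyclically permutes the towers
      (∀ j, j < p → ∀ t, u t * f j t * (u t)ᴴ = f ((j + 1) % p) t) ∧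
      (∀ j, j < p + 1 → ∀ t, u t * g j t * (u t)ᴴ = g ((j + 1) % (p + 1)) t) := by
  haveI : NeZero p := ⟨by omega⟩
  have hp0 : 0 < p := hp
  have hq0 : 0 < p + 1 := Nat.succ_pos p
  have hXc : Continuous (Xu p) :=
    continuous_matrix fun j k => (wm_cont p j k).comp (by fun_prop)
  have hYc : Continuous (Yu p) :=
    continuous_matrix fun j k => (wm_cont (p+1) j k).comp (by fun_prop)
  have huc : Continuous (uu p) := by
    apply continuous_matrix
    intro q q'
    simp only [uu, Matrix.kroneckerMap_apply]
    exact (hXc.matrix_elem q.1 q'.1).mul (hYc.matrix_elem q.2 q'.2)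
  have hfc : ∀ j : ℕ, Continuous (ff p j) := fun j => by
    unfold ff
    exact (Complex.continuous_ofReal.comp Af_cont).smul continuous_const
  have hgc : ∀ j : ℕ, Continuous (gg p j) := fun j => by
    unfold gg
    exact (Complex.continuous_ofReal.comp (continuous_const.sub Af_cont)).smul continuous_const
  have hYu1 : ∀ t, Yu p t * (Yu p t)ᴴ = 1 := fun t => wm_mul_conjT (p+1) hq0 _
  have hXu1 : ∀ t, Xu p t * (Xu p t)ᴴ = 1 := fun t => wm_mul_conjT p hp0 _
  have hu1 : ∀ t, uu p t * (uu p t)ᴴ = 1 := fun t => by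
    rw [uu, kron_conjT, ← Matrix.mul_kronecker_mul, hXu1 t, hYu1 t, Matrix.one_kronecker_one]
  have hXu2 : ∀ t, (Xu p t)ᴴ * Xu p t = 1 := fun t => conjT_mul_wm p hp0 _
  have hYu2 : ∀ t, (Yu p t)ᴴ * Yu p t = 1 := fun t => conjT_mul_wm (p+1) hq0 _
  have hu2 : ∀ t, (uu p t)ᴴ * uu p t = 1 := fun t => by
    rw [uu, kron_conjT, ← Matrix.mul_kronecker_mul, hXu2 t, hYu2 t, Matrix.one_kronecker_one]
  refine ⟨⟨uu p, huc⟩, fun j => ⟨ff p j, hfc j⟩, fun j => ⟨gg p j, hgc j⟩,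
    ?_, ?_, ?_, ?_, ?_, ?_, ?_, ?_, ?_, ?_, ?_, ?_⟩
  · constructor
    · refine ⟨wm p 1, ?_⟩
      show uu p 0 = _
      have hX0 : Xu p 0 = wm p 1 := by rw [Xu]; norm_num
      have hY0 : Yu p 0 = 1 := by
        rw [Yu]
        norm_num
        exact wm_zero (p+1) hq0
      rw [uu, hX0, hY0]
    · refine ⟨wm (p+1) 1, ?_⟩
      show uu p 1 = _
      have hX1 : Xu p 1 = 1 := by
        rw [Xu]
        norm_num
        exact wm_zero p hp0
      have hY1 : Yu p 1 = wm (p+1) 1 := by rw [Yu]; norm_num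
      rw [uu, hX1, hY1]
  · intro j hj
    constructor
    · refine ⟨(Af 0 : ℂ) • Matrix.diagonal (Pi.single ((j : Fin p)) 1), ?_⟩
      show ff p j 0 = _
      rw [ff, Matrix.smul_kronecker]
    · refine ⟨0, ?_⟩
      show ff p j 1 = _
      rw [ff, Af_one, Matrix.kronecker_zero]
      simp
  · intro j hj
    constructor
    · refine ⟨0, ?_⟩
      show gg p j 0 = _
      rw [gg, Af_zero, Matrix.zero_kronecker]
      simp
    · refine ⟨((1 - Af 1 : ℝ) : ℂ) • Matrix.diagonal (Pi.single ((j : Fin (p+1))) 1), ?_⟩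
      show gg p j 1 = _
      rw [gg, Matrix.kronecker_smul]
  · exact fun t => ⟨hu1 t, hu2 t⟩
  · intro j hj t
    show (ff p j t).PosSemidef
    rw [ff_diag]
    refine Matrix.posSemidef_diagonal_iff.mpr fun q => ?_
    rw [Pi.single_apply]
    split
    · rw [mul_one]
      exact_mod_cast Complex.zero_le_real.mpr (Af_nonneg t)
    · rw [mul_zero]
  · intro j hj t
    show (gg p j t).PosSemidef
    rw [gg_diag]
    refine Matrix.posSemidef_diagonal_iff.mpr fun q => ?_
    rw [Pi.single_apply]
    split
    · rw [mul_one]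
      refine Complex.zero_le_real.mpr ?_
      have := Af_le_one t
      linarith
    · rw [mul_zero]
  · intro i j hi hj hij t
    show ff p i t * ff p j t = 0
    rw [ff_diag, ff_diag, Matrix.diagonal_mul_diagonal, ← Matrix.diagonal_zero]
    refine congrArg _ (funext fun q => ?_)
    have hne := cast_ne p hi hj hij
    by_cases h1 : q.1 = (i : Fin p) <;> simp [Pi.single_apply, h1, hne]
  · intro i j hi hj hij t
    show gg p i t * gg p j t = 0
    rw [gg_diag, gg_diag, Matrix.diagonal_mul_diagonal, ← Matrix.diagonal_zero]
    refine congrArg _ (funext fun q => ?_)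
    have hne := cast_ne (p+1) hi hj hij
    by_cases h1 : q.2 = (i : Fin (p+1)) <;> simp [Pi.single_apply, h1, hne]
  · intro i j hi hj t
    show ff p i t * gg p j t = gg p j t * ff p i t
    rw [ff_diag, gg_diag, Matrix.diagonal_mul_diagonal, Matrix.diagonal_mul_diagonal]
    exact congrArg _ (funext fun q => mul_comm _ _)
  · intro t
    show (∑ j ∈ Finset.range p, ff p j t) + ∑ j ∈ Finset.range (p+1), gg p j t = 1
    ext q q'
    simp only [Matrix.add_apply, Matrix.sum_apply, ff_diag, gg_diag, Matrix.diagonal_apply]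
    by_cases h : q = q'
    · subst h
      simp only [if_true, Matrix.one_apply_eq]
      rw [← Finset.mul_sum, ← Finset.mul_sum, sum_single_range p q.1,
        sum_single_range (p+1) q.2]
      push_cast
      ring
    · simp [h, Matrix.one_apply_ne h]
  · intro j hj t
    show uu p t * ff p j t * (uu p t)ᴴ = ff p ((j+1) % p) t
    by_cases hA : Af t = 0
    · simp [ff, hA]
    · have hX : Xu p t = Sig p := by rw [Xu, Af_ne_zero hA, DimDropAux.wm_one p]
      rw [ff, ff, cast_succ_mod p j, Matrix.mul_smul, Matrix.smul_mul]
      congr 1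
      rw [uu, kron_conjT, ← Matrix.mul_kronecker_mul, ← Matrix.mul_kronecker_mul, hX,
        Matrix.mul_one, hYu1 t, sig_conj]
  · intro j hj t
    show uu p t * gg p j t * (uu p t)ᴴ = gg p ((j+1) % (p+1)) t
    by_cases hA : 1 - Af t = 0
    · simp [gg, hA]
    · have hY : Yu p t = Sig (p+1) := by rw [Yu, Af_ne_one hA, DimDropAux.wm_one (p+1)]
      rw [gg, gg, cast_succ_mod (p+1) j, Matrix.mul_smul, Matrix.smul_mul]
      congr 1
      rw [uu, kron_conjT, ← Matrix.mul_kronecker_mul, ← Matrix.mul_kronecker_mul, hY,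
        Matrix.mul_one, hXu1 t, sig_conj]
end

section
/- Let B be a C*-algebra and Y ⊆ B a compact subset such that the smallest closed *-subalgebra of B containing Y equals B. Then for every ε > 0 and every compact subset F ⊆ B there exists ε' > 0 such that the following holds: for every C*-algebra A, every *-automorphism α of A and every *-homomorphism π : B → A, if ‖α(π(y)) − π(y)‖ < ε' for all y ∈ Y, then ‖α(π(x)) − π(x)‖ < ε for all x ∈ F. -/
universe u

/-- Auxiliary: the displacement function is `2`-Lipschitz. -/
private lemma afog_lip {B : Type*} [NonUnitalCStarAlgebra B] {A : Type u}
    [NonUnitalCStarAlgebra A] (α : A ≃⋆ₐ[ℂ] A) (π : B →⋆ₙₐ[ℂ] A) (x x' : B) :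
    ‖α (π x) - π x‖ ≤ ‖α (π x') - π x'‖ + 2 * ‖x - x'‖ := by
  have h1 : α (π x) - π x = (α (π x') - π x') + (α (π (x - x')) - π (x - x')) := by
    simp only [map_sub]
    abel
  calc ‖α (π x) - π x‖ ≤ ‖α (π x') - π x'‖ + ‖α (π (x - x')) - π (x - x')‖ := by
        rw [h1]; exact norm_add_le _ _
    _ ≤ ‖α (π x') - π x'‖ + 2 * ‖x - x'‖ := by
        gcongr
        calc ‖α (π (x - x')) - π (x - x')‖ ≤ ‖α (π (x - x'))‖ + ‖π (x - x')‖ :=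
              norm_sub_le _ _
          _ = ‖π (x - x')‖ + ‖π (x - x')‖ := by rw [StarAlgEquiv.norm_map]
          _ ≤ ‖x - x'‖ + ‖x - x'‖ := by
              gcongr <;> exact NonUnitalStarAlgHom.norm_apply_le π _
          _ = 2 * ‖x - x'‖ := by ring

/-- Auxiliary pointwise property: `α ∘ π` nearly fixing `Y` forces it to nearly fix `x`. -/
private def AfogP {B : Type*} [NonUnitalCStarAlgebra B] (Y : Set B) (x : B) : Prop :=
  ∀ δ : ℝ, 0 < δ → ∃ ε' : ℝ, 0 < ε' ∧
    ∀ (A : Type u) [NonUnitalCStarAlgebra A] (α : A ≃⋆ₐ[ℂ] A) (π : B →⋆ₙₐ[ℂ] A),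
      (∀ y ∈ Y, ‖α (π y) - π y‖ < ε') → ‖α (π x) - π x‖ < δ

private lemma afog_all {B : Type*} [NonUnitalCStarAlgebra B] (Y : Set B)
    (hgen : closure (NonUnitalStarAlgebra.adjoin ℂ Y : Set B) = Set.univ) (x : B) :
    AfogP.{u} Y x := by
  have hadj : ∀ x ∈ NonUnitalStarAlgebra.adjoin ℂ Y, AfogP.{u} Y x := by
    intro x hx
    induction hx using NonUnitalStarAlgebra.adjoin_induction with
    | mem y hy =>
      intro δ hδ
      exact ⟨δ, hδ, fun A _ α π h => h y hy⟩
    | add x y hx hy hx' hy' =>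
      intro δ hδ
      obtain ⟨ε₁, hε₁, h₁⟩ := hx' (δ / 2) (by positivity)
      obtain ⟨ε₂, hε₂, h₂⟩ := hy' (δ / 2) (by positivity)
      refine ⟨min ε₁ ε₂, lt_min hε₁ hε₂, fun A _ α π h => ?_⟩
      have e : α (π (x + y)) - π (x + y) = (α (π x) - π x) + (α (π y) - π y) := by
        simp only [map_add]; abel
      calc ‖α (π (x + y)) - π (x + y)‖ ≤ ‖α (π x) - π x‖ + ‖α (π y) - π y‖ := by
            rw [e]; exact norm_add_le _ _
        _ < δ / 2 + δ / 2 := by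
            gcongr
            · exact h₁ A α π fun z hz => (h z hz).trans_le (min_le_left _ _)
            · exact h₂ A α π fun z hz => (h z hz).trans_le (min_le_right _ _)
        _ = δ := by ring
    | zero =>
      intro δ hδ
      exact ⟨1, one_pos, fun A _ α π _ => by simpa using hδ⟩
    | mul x y hx hy hx' hy' =>
      intro δ hδ
      obtain ⟨ε₁, hε₁, h₁⟩ := hx' (δ / (2 * (‖y‖ + 1))) (by positivity)
      obtain ⟨ε₂, hε₂, h₂⟩ := hy' (δ / (2 * (‖x‖ + 1))) (by positivity)
      refine ⟨min ε₁ ε₂, lt_min hε₁ hε₂, fun A _ α π h => ?_⟩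
      have e : α (π (x * y)) - π (x * y)
          = (α (π x) - π x) * α (π y) + π x * (α (π y) - π y) := by
        simp only [map_mul]
        noncomm_ring
      have hx0 : ‖α (π x) - π x‖ < δ / (2 * (‖y‖ + 1)) :=
        h₁ A α π fun z hz => (h z hz).trans_le (min_le_left _ _)
      have hy0 : ‖α (π y) - π y‖ < δ / (2 * (‖x‖ + 1)) :=
        h₂ A α π fun z hz => (h z hz).trans_le (min_le_right _ _)
      have hπy : ‖α (π y)‖ ≤ ‖y‖ + 1 := by
        rw [StarAlgEquiv.norm_map]
        linarith [NonUnitalStarAlgHom.norm_apply_le π y]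
      have hπx : ‖π x‖ ≤ ‖x‖ + 1 := by
        linarith [NonUnitalStarAlgHom.norm_apply_le π x]
      calc ‖α (π (x * y)) - π (x * y)‖
          ≤ ‖(α (π x) - π x) * α (π y)‖ + ‖π x * (α (π y) - π y)‖ := by
            rw [e]; exact norm_add_le _ _
        _ ≤ ‖α (π x) - π x‖ * ‖α (π y)‖ + ‖π x‖ * ‖α (π y) - π y‖ := by
            gcongr <;> exact norm_mul_le _ _
        _ ≤ ‖α (π x) - π x‖ * (‖y‖ + 1) + (‖x‖ + 1) * ‖α (π y) - π y‖ :=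
            add_le_add (mul_le_mul_of_nonneg_left hπy (norm_nonneg _))
              (mul_le_mul_of_nonneg_right hπx (norm_nonneg _))
        _ < (δ / (2 * (‖y‖ + 1))) * (‖y‖ + 1) + (‖x‖ + 1) * (δ / (2 * (‖x‖ + 1))) := by
            gcongr <;> positivity
        _ = δ / 2 + δ / 2 := by
            field_simp
        _ = δ := by ring
    | smul c x hx hx' =>
      intro δ hδ
      obtain ⟨ε₁, hε₁, h₁⟩ := hx' (δ / (‖c‖ + 1)) (by positivity)
      refine ⟨ε₁, hε₁, fun A _ α π h => ?_⟩
      have e : α (π (c • x)) - π (c • x) = c • (α (π x) - π x) := by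
        simp only [map_smul, smul_sub]
      have hx0 : ‖α (π x) - π x‖ < δ / (‖c‖ + 1) := h₁ A α π h
      calc ‖α (π (c • x)) - π (c • x)‖ = ‖c‖ * ‖α (π x) - π x‖ := by rw [e, norm_smul]
        _ ≤ (‖c‖ + 1) * ‖α (π x) - π x‖ :=
            mul_le_mul_of_nonneg_right (by linarith) (norm_nonneg _)
        _ < (‖c‖ + 1) * (δ / (‖c‖ + 1)) := by
            have : (0:ℝ) < ‖c‖ + 1 := by positivity
            exact mul_lt_mul_of_pos_left hx0 this
        _ = δ := by field_simp
    | star x hx hx' =>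
      intro δ hδ
      obtain ⟨ε₁, hε₁, h₁⟩ := hx' δ hδ
      refine ⟨ε₁, hε₁, fun A _ α π h => ?_⟩
      have e : α (π (star x)) - π (star x) = star (α (π x) - π x) := by
        simp only [map_star, star_sub]
      rw [e, norm_star]
      exact h₁ A α π h
  have hx : x ∈ closure (NonUnitalStarAlgebra.adjoin ℂ Y : Set B) := by
    rw [hgen]; trivial
  intro δ hδ
  obtain ⟨x', hx', hdist⟩ := Metric.mem_closure_iff.mp hx (δ / 4) (by positivity)
  obtain ⟨ε₁, hε₁, h₁⟩ := hadj x' hx' (δ / 2) (by positivity)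
  refine ⟨ε₁, hε₁, fun A _ α π h => ?_⟩
  have hl := afog_lip α π x x'
  have hd : ‖x - x'‖ < δ / 4 := by rwa [← dist_eq_norm]
  have := h₁ A α π h
  linarith

/-- Let `B` be a C*-algebra generated (as a closed *-subalgebra) by a compact
set `Y`.  For every `ε > 0` and every compact `F ⊆ B` there is `ε' > 0` such that for every
C*-algebra `A`, every *-automorphism `α` of `A` and every *-homomorphism `π : B → A`, if `α`
moves each `π(y)`, `y ∈ Y`, by less than `ε'`, then `α` moves each `π(x)`, `x ∈ F`, by less
than `ε`. -/
theorem almost_fixed_on_generators {B : Type*} [NonUnitalCStarAlgebra B]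
    (Y : Set B) (hY : IsCompact Y)
    (hgen : closure (NonUnitalStarAlgebra.adjoin ℂ Y : Set B) = Set.univ) :
    ∀ ε : ℝ, 0 < ε → ∀ F : Set B, IsCompact F →
      ∃ ε' : ℝ, 0 < ε' ∧
        ∀ (A : Type*) [NonUnitalCStarAlgebra A] (α : A ≃⋆ₐ[ℂ] A) (π : B →⋆ₙₐ[ℂ] A),
          (∀ y ∈ Y, ‖α (π y) - π y‖ < ε') → ∀ x ∈ F, ‖α (π x) - π x‖ < ε := by
  classical
  intro ε hε F hF
  obtain ⟨t, ht⟩ := hF.elim_finite_subcover (fun c : B => Metric.ball c (ε / 6))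
    (fun c => Metric.isOpen_ball) (fun x _ => Set.mem_iUnion.mpr ⟨x, by
      simp only [Metric.mem_ball, dist_self]; positivity⟩)
  choose g hg₁ hg₂ using fun c : B => afog_all Y hgen c (ε / 3) (by positivity)
  set s : Finset ℝ := insert (1 : ℝ) (t.image g) with hs
  have hsne : s.Nonempty := ⟨1, Finset.mem_insert_self _ _⟩
  refine ⟨s.min' hsne, ?_, ?_⟩
  · have h : ∀ r ∈ s, 0 < r := by
      intro r hr
      rcases Finset.mem_insert.mp hr with h | h
      · simp [h]
      · obtain ⟨c, _, rfl⟩ := Finset.mem_image.mp h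
        exact hg₁ c
    exact h _ (s.min'_mem hsne)
  · intro A _ α π h x hxF
    obtain ⟨c, hct, hxc⟩ := Set.mem_iUnion₂.mp (ht hxF)
    have hle : s.min' hsne ≤ g c :=
      Finset.min'_le _ _ (Finset.mem_insert_of_mem (Finset.mem_image_of_mem g hct))
    have hc : ‖α (π c) - π c‖ < ε / 3 :=
      hg₂ c A α π fun y hy => (h y hy).trans_le hle
    have hd : ‖x - c‖ < ε / 6 := by
      rw [← dist_eq_norm]; exact hxc
    have := afog_lip α π x c
    linarith
end

section
/- For every k ≥ 1 and δ > 0 there exists s ∈ ℕ such that for every natural number r ≥ 4s the following holds: there exist functions f_i : ℤ → [0,1], indexed by i ∈ ℤ/kℤ, with f_i(j) = 0 unless 1 ≤ j ≤ r−1, such that (a) at each j ∈ ℤ at most one of the f_i is nonzero, and Σ_i f_i(j) ≤ 1 for all j; (b) for every tuple of nonnegative coefficients c : ℤ/kℤ → [0,∞), sup_{j∈ℤ} | Σ_{i∈ℤ/kℤ} c_i·( f_i(j−1) − f_{i+1}(j) ) | ≤ δ · max_i c_i; (c) for every j with 1 ≤ j ≤ r, Σ_i f_i(j+s) + Σ_i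 f_i(j−s) ≥ 1. (This encodes a completely positive contractive order zero map μ : ℂ^k → M_r into the shiftable diagonal, with ‖σ̄(μ(e)) − μ(σ̃(e))‖ ≤ δ‖e‖ for all positive e ∈ ℂ^k and (σ̄⁻)^s(μ(1)) + σ̄^s(μ(1)) ≥ 1, where σ̄ is the truncated shift on the diagonal of M_r, σ̄⁻ its partial inverse, and σ̃ the cyclic shift on ℂ^k.) -/
/-- Helper: if `a+1` and `i+1` agree mod `k` and both `a,i ∈ [0,k)`, then `a = i`. -/
private lemma emod_succ_inj' {k a i : ℤ} (ha : 0 ≤ a) (ha' : a < k)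
    (hi : 0 ≤ i) (hi' : i < k) (h : (a + 1) % k = (i + 1) % k) : a = i := by
  rcases eq_or_lt_of_le (show a + 1 ≤ k by omega) with h1 | h1 <;>
    rcases eq_or_lt_of_le (show i + 1 ≤ k by omega) with h2 | h2
  · omega
  · rw [h1, Int.emod_self, Int.emod_eq_of_lt (by omega) h2] at h; omega
  · rw [h2, Int.emod_self, Int.emod_eq_of_lt (by omega) h1] at h; omega
  · rw [Int.emod_eq_of_lt (by omega) h1, Int.emod_eq_of_lt (by omega) h2] at h; omega

/-- The basic trapezoid function: `0` outside `(0,r)`, slope `1/s` ramps, `1` on `[s, r-s]`. -/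
private noncomputable def gfun (s r : ℕ) (j : ℤ) : ℝ :=
  max 0 (min 1 (min ((j : ℝ) / s) (((r : ℝ) - (j : ℝ)) / s)))

private lemma gfun_nonneg (s r : ℕ) (j : ℤ) : 0 ≤ gfun s r j := le_max_left _ _

private lemma gfun_le_one (s r : ℕ) (j : ℤ) : gfun s r j ≤ 1 :=
  max_le zero_le_one (min_le_left _ _)

private lemma gfun_supp {s r : ℕ} (hs : 1 ≤ s) {j : ℤ} (hj : gfun s r j ≠ 0) :
    1 ≤ j ∧ j ≤ (r : ℤ) - 1 := by
  have hsp : (0 : ℝ) < s := by exact_mod_cast hs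
  have hm : 0 < min 1 (min ((j : ℝ) / s) (((r : ℝ) - (j : ℝ)) / s)) := by
    by_contra hc
    push_neg at hc
    exact hj (max_eq_left hc)
  have h1 : 0 < (j : ℝ) / s :=
    lt_of_lt_of_le hm (le_trans (min_le_right _ _) (min_le_left _ _))
  have h2 : 0 < ((r : ℝ) - (j : ℝ)) / s :=
    lt_of_lt_of_le hm (le_trans (min_le_right _ _) (min_le_right _ _))
  have hj1 : (0 : ℝ) < (j : ℝ) := by
    rcases div_pos_iff.mp h1 with ⟨h, _⟩ | ⟨_, h⟩
    · exact h
    · linarith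
  have hj2 : (j : ℝ) < (r : ℝ) := by
    rcases div_pos_iff.mp h2 with ⟨h, _⟩ | ⟨_, h⟩
    · linarith
    · linarith
  constructor
  · exact_mod_cast hj1
  · have : (j : ℤ) < (r : ℤ) := by exact_mod_cast hj2
    omega

private lemma gfun_eq_one {s r : ℕ} (hs : 1 ≤ s) {j : ℤ}
    (h1 : (s : ℤ) ≤ j) (h2 : j ≤ (r : ℤ) - s) : gfun s r j = 1 := by
  have hsp : (0 : ℝ) < s := by exact_mod_cast hs
  have ha : (1 : ℝ) ≤ (j : ℝ) / s := (one_le_div hsp).mpr (by exact_mod_cast h1)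
  have hb : (1 : ℝ) ≤ ((r : ℝ) - (j : ℝ)) / s := by
    rw [one_le_div hsp]
    have : (j : ℝ) ≤ (r : ℝ) - (s : ℝ) := by exact_mod_cast h2
    linarith
  unfold gfun
  rw [min_eq_left (le_min ha hb), max_eq_right zero_le_one]

private lemma gfun_lip {s r : ℕ} (hs : 1 ≤ s) (j : ℤ) :
    |gfun s r (j - 1) - gfun s r j| ≤ 1 / s := by
  have hsp : (0 : ℝ) < s := by exact_mod_cast hs
  set A := min 1 (min (((j - 1 : ℤ) : ℝ) / s) (((r : ℝ) - ((j - 1 : ℤ) : ℝ)) / s)) with hA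
  set B := min 1 (min ((j : ℝ) / s) (((r : ℝ) - (j : ℝ)) / s)) with hB
  have h0 : |gfun s r (j - 1) - gfun s r j| ≤ max |(0 : ℝ) - 0| |A - B| :=
    abs_max_sub_max_le_max 0 A 0 B
  have h1 : |A - B| ≤ max |(1 : ℝ) - 1|
      |min (((j - 1 : ℤ) : ℝ) / s) (((r : ℝ) - ((j - 1 : ℤ) : ℝ)) / s) -
        min ((j : ℝ) / s) (((r : ℝ) - (j : ℝ)) / s)| :=
    abs_min_sub_min_le_max _ _ _ _
  have h2 : |min (((j - 1 : ℤ) : ℝ) / s) (((r : ℝ) - ((j - 1 : ℤ) : ℝ)) / s) -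
        min ((j : ℝ) / s) (((r : ℝ) - (j : ℝ)) / s)| ≤
      max |((j - 1 : ℤ) : ℝ) / s - (j : ℝ) / s|
        |((r : ℝ) - ((j - 1 : ℤ) : ℝ)) / s - ((r : ℝ) - (j : ℝ)) / s| :=
    abs_min_sub_min_le_max _ _ _ _
  have e1 : |((j - 1 : ℤ) : ℝ) / s - (j : ℝ) / s| = 1 / s := by
    push_cast
    rw [show ((j : ℝ) - 1) / s - (j : ℝ) / s = -(1 / s) by ring, abs_neg,
      abs_of_nonneg (by positivity)]
  have e2 : |((r : ℝ) - ((j - 1 : ℤ) : ℝ)) / s - ((r : ℝ) - (j : ℝ)) / s| = 1 / s := by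
    push_cast
    rw [show ((r : ℝ) - ((j : ℝ) - 1)) / s - ((r : ℝ) - (j : ℝ)) / s = 1 / s by ring,
      abs_of_nonneg (by positivity)]
  rw [e1, e2, max_self] at h2
  have h1' : |A - B| ≤ 1 / s := by
    refine le_trans h1 (max_le ?_ h2)
    simp only [sub_self, abs_zero]
    positivity
  refine le_trans h0 (max_le ?_ h1')
  simp only [sub_self, abs_zero]
  positivity

/-- (Cyclic versus truncated shifts.)  For every `k ≥ 1` and `δ > 0` there is
`s ∈ ℕ` such that for every `r ≥ 4s` there are `[0,1]`-valued functions `f i : ℤ → ℝ`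
(`i ∈ {0,…,k-1}`, with cyclic index convention `f ((i+1) % k)`), supported in `{1,…,r-1}`,
such that (a) at each point at most one of them is nonzero and their sum is `≤ 1`;
(b) for all nonnegative coefficients `c i` bounded by `M`, the weighted difference between the
shifted family and the cyclically permuted family is at most `δ·M` in absolute value; and
(c) the sum of the `s`-step forward and backward shifts of `∑ f i` dominates `1` on `{1,…,r}`. -/
theorem cyclic_vs_truncated_shift (k : ℕ) (hk : 1 ≤ k) (δ : ℝ) (hδ : 0 < δ) :
    ∃ s : ℕ, ∀ r : ℕ, 4 * s ≤ r →
      ∃ f : ℕ → ℤ → ℝ,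
        (∀ i j, 0 ≤ f i j ∧ f i j ≤ 1) ∧
        -- support condition
        (∀ i, i < k → ∀ j : ℤ, f i j ≠ 0 → 1 ≤ j ∧ j ≤ (r : ℤ) - 1) ∧
        -- (a) disjoint supports, sum at most one
        (∀ j : ℤ, ∀ i i', i < k → i' < k → i ≠ i' → (f i j = 0 ∨ f i' j = 0)) ∧
        (∀ j : ℤ, (∑ i ∈ Finset.range k, f i j) ≤ 1) ∧
        -- (b) the truncated shift approximately implements the cyclic shift
        (∀ c : ℕ → ℝ, (∀ i, 0 ≤ c i) → ∀ M : ℝ, (∀ i, i < k → c i ≤ M) → ∀ j : ℤ,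
          |∑ i ∈ Finset.range k, c i * (f i (j - 1) - f ((i + 1) % k) j)| ≤ δ * M) ∧
        -- (c) the two s-shifts of the total cover everything
        (∀ j : ℤ, 1 ≤ j → j ≤ (r : ℤ) →
          1 ≤ (∑ i ∈ Finset.range k, f i (j + (s : ℤ))) +
              ∑ i ∈ Finset.range k, f i (j - (s : ℤ))) := by
  obtain ⟨s, hs1, hsδ⟩ : ∃ s : ℕ, 1 ≤ s ∧ 1 / (s : ℝ) ≤ δ := by
    refine ⟨max 1 ⌈1 / δ⌉₊, le_max_left _ _, ?_⟩
    have hsp : (0 : ℝ) < (max 1 ⌈1 / δ⌉₊ : ℕ) := by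
      have : (1 : ℕ) ≤ max 1 ⌈1 / δ⌉₊ := le_max_left _ _
      exact_mod_cast this
    rw [div_le_iff₀ hsp]
    have h1 : (1 : ℝ) / δ ≤ (⌈1 / δ⌉₊ : ℕ) := Nat.le_ceil _
    have h2 : ((⌈1 / δ⌉₊ : ℕ) : ℝ) ≤ ((max 1 ⌈1 / δ⌉₊ : ℕ) : ℝ) := by
      exact_mod_cast le_max_right 1 ⌈1 / δ⌉₊
    rw [div_le_iff₀ hδ] at h1
    nlinarith
  refine ⟨s, ?_⟩
  intro r hr
  have hk0 : (0 : ℤ) < (k : ℤ) := by exact_mod_cast hk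
  refine ⟨fun i j => if j % (k : ℤ) = (i : ℤ) then gfun s r j else 0, ?_, ?_, ?_, ?_, ?_, ?_⟩
  · -- values in [0,1]
    intro i j
    by_cases h : j % (k : ℤ) = (i : ℤ) <;>
      simp [h, gfun_nonneg, gfun_le_one]
  · -- support
    intro i _ j hj
    by_cases h : j % (k : ℤ) = (i : ℤ)
    · exact gfun_supp hs1 (by simpa [h] using hj)
    · simp [h] at hj
  · -- disjoint supports
    intro j i i' hi hi' hne
    by_cases h : j % (k : ℤ) = (i : ℤ)
    · right
      have h' : j % (k : ℤ) ≠ (i' : ℤ) := by omega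
      simp [h']
    · left; simp [h]
  · -- sum ≤ 1
    intro j
    have h1 := Int.emod_lt_of_pos j hk0
    have h2 := Int.emod_nonneg j hk0.ne'
    have hsum : (∑ i ∈ Finset.range k,
        if j % (k : ℤ) = (i : ℤ) then gfun s r j else 0) = gfun s r j := by
      have hmem : (j % (k : ℤ)).toNat ∈ Finset.range k :=
        Finset.mem_range.mpr (by omega)
      rw [Finset.sum_eq_single_of_mem _ hmem]
      · rw [if_pos (by omega)]
      · intro i hi hne
        rw [if_neg]
        intro h
        exact hne (by omega)
    calc (∑ i ∈ Finset.range k,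
          (fun i (j : ℤ) => if j % (k : ℤ) = (i : ℤ) then gfun s r j else 0) i j)
        = gfun s r j := hsum
      _ ≤ 1 := gfun_le_one s r j
  · -- (b)
    intro c hc M hM j
    set a : ℕ := ((j - 1) % (k : ℤ)).toNat with ha
    have haZ : ((a : ℤ)) = (j - 1) % (k : ℤ) := by
      have := Int.emod_nonneg (j - 1) hk0.ne'
      omega
    have hak : a < k := by
      have h1 := Int.emod_lt_of_pos (j - 1) hk0
      have h2 := Int.emod_nonneg (j - 1) hk0.ne'
      omega
    have hjmod : j % (k : ℤ) = ((j - 1) % (k : ℤ) + 1) % (k : ℤ) := by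
      conv_lhs => rw [show j = (j - 1) + 1 by ring, Int.add_emod]
      rw [Int.add_emod ((j - 1) % (k : ℤ)) 1, Int.emod_emod_of_dvd _ dvd_rfl]
    have hsum2 : (∑ i ∈ Finset.range k, c i *
          ((if (j - 1) % (k : ℤ) = (i : ℤ) then gfun s r (j - 1) else 0) -
           (if j % (k : ℤ) = (((i + 1) % k : ℕ) : ℤ) then gfun s r j else 0))) =
        c a * (gfun s r (j - 1) - gfun s r j) := by
      rw [Finset.sum_eq_single_of_mem a (Finset.mem_range.mpr hak)]
      · rw [if_pos haZ.symm, if_pos]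
        rw [Int.natCast_mod]
        push_cast
        rw [← haZ] at hjmod
        exact hjmod
      · intro i hi hne
        rw [if_neg, if_neg]
        · ring
        · -- second if : j % k ≠ (i+1) % k
          rw [Int.natCast_mod]
          push_cast
          intro h
          rw [hjmod, ← haZ] at h
          have hik : i < k := Finset.mem_range.mp hi
          have : (a : ℤ) = (i : ℤ) :=
            emod_succ_inj' (by positivity) (by exact_mod_cast hak)
              (by positivity) (by exact_mod_cast hik) h
          exact hne (by omega)
        · -- first if : (j-1) % k ≠ i
          intro h
          exact hne (by omega)
    rw [hsum2]
    have hM0 : 0 ≤ M := le_trans (hc a) (hM a hak)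
    have hlip := gfun_lip (r := r) hs1 j
    rw [abs_mul, abs_of_nonneg (hc a)]
    calc c a * |gfun s r (j - 1) - gfun s r j| ≤ M * (1 / s) :=
          mul_le_mul (hM a hak) hlip (abs_nonneg _) hM0
      _ ≤ M * δ := mul_le_mul_of_nonneg_left hsδ hM0
      _ = δ * M := mul_comm _ _
  · -- (c)
    intro j hj1 hjr
    have hsum : ∀ x : ℤ, (∑ i ∈ Finset.range k,
        (fun i (x : ℤ) => if x % (k : ℤ) = (i : ℤ) then gfun s r x else 0) i x)
        = gfun s r x := by
      intro x
      have h1 := Int.emod_lt_of_pos x hk0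
      have h2 := Int.emod_nonneg x hk0.ne'
      have hmem : (x % (k : ℤ)).toNat ∈ Finset.range k :=
        Finset.mem_range.mpr (by omega)
      rw [Finset.sum_eq_single_of_mem _ hmem]
      · exact if_pos (by omega)
      · intro i hi hne
        refine if_neg ?_
        intro h
        exact hne (by omega)
    rw [hsum (j + (s : ℤ)), hsum (j - (s : ℤ))]
    have hrZ : (4 * s : ℤ) ≤ (r : ℤ) := by exact_mod_cast hr
    rcases le_or_gt j ((r : ℤ) - 2 * s) with h | h
    · have h1 : gfun s r (j + (s : ℤ)) = 1 := gfun_eq_one hs1 (by omega) (by omega)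
      have h2 := gfun_nonneg s r (j - (s : ℤ))
      linarith
    · have h1 : gfun s r (j - (s : ℤ)) = 1 := gfun_eq_one hs1 (by omega) (by omega)
      have h2 := gfun_nonneg s r (j + (s : ℤ))
      linarith
end

section
/- Let r, s ≥ 1 be integers and let q₁,…,q_s ∈ M_r(ℂ) be pairwise commuting projections (self-adjoint idempotent matrices). Then for every projection p in the *-subalgebra of M_r(ℂ) generated by q₁,…,q_s there exist indices j(k,l) ∈ {1,…,s} and choices b(k,l) ∈ {0,1}, for k, l ∈ {1,…,r}, such that p = Σ_{k=1}^{r} Π_{l=1}^{r} y^{(k,l)}, where y^{(k,l)} = q_{j(k,l)} if b(k,l) = 1 and y^{(k,l)} = 1 − q_{j(k,l)} if b(k,l) = 0. (That is, p is given by an 'elementary polynomial' in r of the generators.) -/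
open Matrix

namespace ElemPolyAux

lemma ext_mulVec {n : ℕ} {A B : Matrix (Fin n) (Fin n) ℂ}
    (h : ∀ v, A *ᵥ v = B *ᵥ v) : A = B := by
  ext i j
  have h2 := congrFun (h (Pi.single j 1)) i
  simpa using h2

lemma exists_mulVec_ne {n : ℕ} {A : Matrix (Fin n) (Fin n) ℂ} (h : A ≠ 0) :
    ∃ v, A *ᵥ v ≠ 0 := by
  by_contra hc
  push_neg at hc
  exact h (ext_mulVec fun v => by rw [hc v, Matrix.zero_mulVec])

lemma rank_pos_of_ne_zero {n : ℕ} {A : Matrix (Fin n) (Fin n) ℂ} (h : A ≠ 0) :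
    1 ≤ A.rank := by
  obtain ⟨v, hv⟩ := exists_mulVec_ne h
  by_contra hc
  push_neg at hc
  have h0 : A.rank = 0 := Nat.lt_one_iff.mp hc
  unfold Matrix.rank at h0
  have hbot : LinearMap.range A.mulVecLin = ⊥ := Submodule.finrank_eq_zero.mp h0
  have hv' : A *ᵥ v ∈ LinearMap.range A.mulVecLin := ⟨v, by simp⟩
  rw [hbot] at hv'
  exact hv ((Submodule.mem_bot _).mp hv')

lemma proj_eq_of_rank_le {n : ℕ} {A B : Matrix (Fin n) (Fin n) ℂ}
    (hBB : B * B = B) (hBA : B * A = B) (hAB : A * B = B) (hrk : A.rank ≤ B.rank) :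
    A = B := by
  have hle : LinearMap.range B.mulVecLin ≤ LinearMap.range A.mulVecLin := by
    rw [← hAB, Matrix.mulVecLin_mul]
    exact LinearMap.range_comp_le_range _ _
  have hrk' : Module.finrank ℂ (LinearMap.range A.mulVecLin) ≤
      Module.finrank ℂ (LinearMap.range B.mulVecLin) := hrk
  have heq : LinearMap.range B.mulVecLin = LinearMap.range A.mulVecLin :=
    Submodule.eq_of_le_of_finrank_le hle hrk'
  apply ext_mulVec
  intro v
  have hmem : A *ᵥ v ∈ LinearMap.range B.mulVecLin := by
    rw [heq]; exact ⟨v, by simp⟩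
  obtain ⟨w, hw⟩ := hmem
  simp only [Matrix.mulVecLin_apply] at hw
  calc A *ᵥ v = B *ᵥ w := hw.symm
    _ = (B * B) *ᵥ w := by rw [hBB]
    _ = B *ᵥ (B *ᵥ w) := by rw [Matrix.mulVec_mulVec]
    _ = B *ᵥ (A *ᵥ v) := by rw [hw]
    _ = (B * A) *ᵥ v := by rw [Matrix.mulVec_mulVec]
    _ = B *ᵥ v := by rw [hBA]

lemma list_prod_pad {Mo : Type*} [Monoid Mo] (x m : Mo) (hx : x * m = m) (k : ℕ) :
    (List.replicate k x).prod * m = m := by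
  induction k with
  | zero => simp
  | succ n ih => rw [List.replicate_succ, List.prod_cons, mul_assoc, ih, hx]

lemma finRange_map_get' {α : Type*} {r : ℕ} (t : List α) (ht : t.length = r) :
    ((List.finRange r).map fun l : Fin r => t.get (Fin.cast ht.symm l)) = t := by
  subst ht
  simp [Fin.cast_refl]

theorem core {n s : ℕ} (hn : 1 ≤ n) (hs : 1 ≤ s) {A : Type*} [CommRing A] [Algebra ℂ A]
    (φ : A →ₐ[ℂ] Matrix (Fin n) (Fin n) ℂ)
    (Q : Fin s → A) (hQ2 : ∀ i, Q i * Q i = Q i)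
    (p : Matrix (Fin n) (Fin n) ℂ)
    (hp_mem : p ∈ Algebra.adjoin ℂ (Set.range fun i => φ (Q i)))
    (hpp : p * p = p) :
    ∃ (jj : Fin n → Fin n → Fin s) (b : Fin n → Fin n → Bool),
      p = ∑ k : Fin n, ((List.finRange n).map fun l =>
          if b k l then φ (Q (jj k l)) else 1 - φ (Q (jj k l))).prod := by
  classical
  let i₀ : Fin s := ⟨0, hs⟩
  let Fs : Fin s → Bool → A := fun i b => if b then Q i else 1 - Q i
  let PT : (Fin s → Bool) → Finset (Fin s) → A := fun ε T => ∏ i ∈ T, Fs i (ε i)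
  let pt : (Fin s → Bool) → Finset (Fin s) → Matrix (Fin n) (Fin n) ℂ := fun ε T => φ (PT ε T)
  let F : Fin s × Bool → Matrix (Fin n) (Fin n) ℂ :=
    fun x => if x.2 then φ (Q x.1) else 1 - φ (Q x.1)
  -- ## A-side algebra facts
  have hFs2 : ∀ i b, Fs i b * Fs i b = Fs i b := by
    intro i b
    cases b
    · show (1 - Q i) * (1 - Q i) = 1 - Q i
      calc (1 - Q i) * (1 - Q i) = 1 - Q i - Q i + Q i * Q i := by ring
        _ = 1 - Q i := by rw [hQ2 i]; ring
    · exact hQ2 i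
  have hFs0 : ∀ i (b b' : Bool), b ≠ b' → Fs i b * Fs i b' = 0 := by
    intro i b b' hbb
    have h : Q i * (1 - Q i) = 0 := by
      rw [mul_one_sub, hQ2 i, sub_self]
    cases b <;> cases b'
    · exact absurd rfl hbb
    · show (1 - Q i) * Q i = 0
      rw [mul_comm]; exact h
    · exact h
    · exact absurd rfl hbb
  have hPT_idem : ∀ ε T, PT ε T * PT ε T = PT ε T := by
    intro ε T
    show (∏ i ∈ T, Fs i (ε i)) * (∏ i ∈ T, Fs i (ε i)) = ∏ i ∈ T, Fs i (ε i)
    rw [← Finset.prod_mul_distrib]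
    exact Finset.prod_congr rfl fun i _ => hFs2 i (ε i)
  have habs1 : ∀ ε (T : Finset (Fin s)) i, i ∈ T → Fs i (ε i) * PT ε T = PT ε T := by
    intro ε T i hi
    show Fs i (ε i) * ∏ j ∈ T, Fs j (ε j) = ∏ j ∈ T, Fs j (ε j)
    rw [← Finset.mul_prod_erase T _ hi, ← mul_assoc, hFs2]
  have hsplit : ∀ ε (i : Fin s), PT ε Finset.univ = Fs i (ε i) * PT ε (Finset.univ.erase i) := by
    intro ε i
    exact (Finset.mul_prod_erase Finset.univ _ (Finset.mem_univ i)).symm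
  have hE_q : ∀ (i : Fin s) ε, Q i * PT ε Finset.univ =
      if ε i then PT ε Finset.univ else 0 := by
    intro i ε
    rw [hsplit ε i, ← mul_assoc]
    cases hb : ε i
    · have h0 : Q i * Fs i false = 0 := by
        show Q i * (1 - Q i) = 0
        rw [mul_one_sub, hQ2 i, sub_self]
      rw [h0, zero_mul, if_neg (by simp)]
    · have h1 : Q i * Fs i true = Fs i true := hQ2 i
      rw [h1, if_pos rfl]
  have hE_orth : ∀ ε η, ε ≠ η → PT ε Finset.univ * PT η Finset.univ = 0 := by
    intro ε η hne
    obtain ⟨i, hi⟩ := Function.ne_iff.mp hne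
    rw [hsplit ε i, hsplit η i, mul_mul_mul_comm, hFs0 i _ _ hi, zero_mul]
  have hE_sum : (∑ ε : Fin s → Bool, PT ε Finset.univ) = (1 : A) := by
    have h1 : ∀ i : Fin s, (∑ b : Bool, Fs i b) = 1 := by
      intro i
      rw [Fintype.sum_bool]
      show Q i + (1 - Q i) = 1
      ring
    calc (∑ ε : Fin s → Bool, PT ε Finset.univ)
        = ∑ ε ∈ Fintype.piFinset (fun _ : Fin s => (Finset.univ : Finset Bool)),
            ∏ i, Fs i (ε i) := by rw [Fintype.piFinset_univ]
      _ = ∏ i, ∑ b : Bool, Fs i b := (Finset.prod_univ_sum _ _).symm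
      _ = ∏ _i : Fin s, (1 : A) := Finset.prod_congr rfl fun i _ => h1 i
      _ = 1 := Finset.prod_const_one
  -- ## matrix-side facts
  have hpt_idem : ∀ ε T, pt ε T * pt ε T = pt ε T := by
    intro ε T
    show φ _ * φ _ = φ _
    rw [← _root_.map_mul, hPT_idem]
  have he_orth : ∀ ε η, ε ≠ η → pt ε Finset.univ * pt η Finset.univ = 0 := by
    intro ε η hne
    show φ _ * φ _ = 0
    rw [← _root_.map_mul, hE_orth ε η hne, _root_.map_zero]
  have he_sum : (∑ ε : Fin s → Bool, pt ε Finset.univ) = 1 := by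
    show (∑ ε : Fin s → Bool, φ (PT ε Finset.univ)) = 1
    rw [← _root_.map_sum, hE_sum, _root_.map_one]
  have hq_e : ∀ (i : Fin s) ε, φ (Q i) * pt ε Finset.univ =
      if ε i then pt ε Finset.univ else 0 := by
    intro i ε
    show φ (Q i) * φ (PT ε Finset.univ) = _
    rw [← _root_.map_mul, hE_q i ε, apply_ite φ, _root_.map_zero]
  have he_q_comm : ∀ (i : Fin s) ε, pt ε Finset.univ * φ (Q i) = φ (Q i) * pt ε Finset.univ := by
    intro i ε
    show φ (PT ε Finset.univ) * φ (Q i) = φ (Q i) * φ (PT ε Finset.univ)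
    rw [← _root_.map_mul, ← _root_.map_mul, mul_comm]
  -- ## coefficients
  have hcoef : ∀ ε, ∃ c : ℂ, p * pt ε Finset.univ = c • pt ε Finset.univ ∧
      pt ε Finset.univ * p = c • pt ε Finset.univ := by
    have H : ∀ x ∈ Algebra.adjoin ℂ (Set.range fun i => φ (Q i)), ∀ ε,
        ∃ c : ℂ, x * pt ε Finset.univ = c • pt ε Finset.univ ∧
          pt ε Finset.univ * x = c • pt ε Finset.univ := by
      intro x hx
      refine Algebra.adjoin_induction
        (p := fun x _ => ∀ ε, ∃ c : ℂ, x * pt ε Finset.univ = c • pt ε Finset.univ ∧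
          pt ε Finset.univ * x = c • pt ε Finset.univ) ?_ ?_ ?_ ?_ hx
      · rintro x ⟨i, rfl⟩ ε
        refine ⟨if ε i then 1 else 0, ?_, ?_⟩
        · rw [hq_e i ε]
          cases ε i <;> simp
        · rw [he_q_comm i ε, hq_e i ε]
          cases ε i <;> simp
      · intro c ε
        refine ⟨c, ?_, ?_⟩
        · rw [Algebra.algebraMap_eq_smul_one, smul_mul_assoc, one_mul]
        · rw [Algebra.algebraMap_eq_smul_one, mul_smul_comm, mul_one]
      · intro x y hx' hy' ihx ihy ε
        obtain ⟨cx, h1, h2⟩ := ihx ε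
        obtain ⟨cy, g1, g2⟩ := ihy ε
        exact ⟨cx + cy, by rw [add_mul, h1, g1, add_smul], by rw [mul_add, h2, g2, add_smul]⟩
      · intro x y hx' hy' ihx ihy ε
        obtain ⟨cx, h1, h2⟩ := ihx ε
        obtain ⟨cy, g1, g2⟩ := ihy ε
        refine ⟨cx * cy, ?_, ?_⟩
        · rw [mul_assoc, g1, mul_smul_comm, h1, smul_smul, mul_comm cy cx]
        · rw [← mul_assoc, h2, smul_mul_assoc, g2, smul_smul]
    exact H p hp_mem
  choose c hc1 hc2 using hcoef
  have hc01 : ∀ ε, pt ε Finset.univ ≠ 0 → c ε = 0 ∨ c ε = 1 := by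
    intro ε hne
    have h2 : p * (p * pt ε Finset.univ) = p * pt ε Finset.univ := by
      rw [← mul_assoc, hpp]
    rw [hc1 ε, mul_smul_comm, hc1 ε, smul_smul] at h2
    have h3 : (c ε * c ε - c ε) • pt ε Finset.univ = 0 := by
      rw [sub_smul, h2, sub_self]
    rcases smul_eq_zero.mp h3 with h | h
    · have h4 : c ε * (c ε - 1) = 0 := by linear_combination h
      rcases mul_eq_zero.mp h4 with h5 | h5
      · exact Or.inl h5
      · exact Or.inr (by linear_combination h5)
    · exact absurd h hne
  set N : Finset (Fin s → Bool) := Finset.univ.filter (fun ε => pt ε Finset.univ ≠ 0) with hN_def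
  set S0 : Finset (Fin s → Bool) := N.filter (fun ε => c ε = 1) with hS0_def
  -- p is the sum of the minimal projections in S0
  have hp2 : p = ∑ ε ∈ S0, pt ε Finset.univ := by
    calc p = p * 1 := (mul_one p).symm
      _ = ∑ ε : Fin s → Bool, p * pt ε Finset.univ := by rw [← he_sum, Finset.mul_sum]
      _ = ∑ ε : Fin s → Bool, c ε • pt ε Finset.univ :=
          Finset.sum_congr rfl fun ε _ => hc1 ε
      _ = ∑ ε ∈ S0, c ε • pt ε Finset.univ := by
          refine (Finset.sum_subset (Finset.subset_univ S0) ?_).symm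
          intro ε _ hεS
          by_cases hz : pt ε Finset.univ = 0
          · rw [hz, smul_zero]
          · rcases hc01 ε hz with h | h
            · rw [h, zero_smul]
            · exfalso
              apply hεS
              rw [hS0_def, Finset.mem_filter, hN_def, Finset.mem_filter]
              exact ⟨⟨Finset.mem_univ ε, hz⟩, h⟩
      _ = ∑ ε ∈ S0, pt ε Finset.univ := by
          refine Finset.sum_congr rfl fun ε hε => ?_
          rw [hS0_def, Finset.mem_filter] at hε
          rw [hε.2, one_smul]
  -- the number of nonzero minimal projections is at most n
  have hNne : ∀ ε : {ε // ε ∈ N}, pt ε.1 Finset.univ ≠ 0 := by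
    intro ε
    have h := ε.2
    simp only [hN_def, Finset.mem_filter] at h
    exact h.2
  have hNcard : N.card ≤ n := by
    have hw : ∀ ε : {ε // ε ∈ N}, ∃ v, pt ε.1 Finset.univ *ᵥ v ≠ 0 :=
      fun ε => exists_mulVec_ne (hNne ε)
    choose w hwne using hw
    set v : {ε // ε ∈ N} → (Fin n → ℂ) := fun ε => pt ε.1 Finset.univ *ᵥ w ε with hv_def
    have hv_fix : ∀ ε : {ε // ε ∈ N}, pt ε.1 Finset.univ *ᵥ v ε = v ε := by
      intro ε
      rw [hv_def]
      show pt ε.1 Finset.univ *ᵥ (pt ε.1 Finset.univ *ᵥ w ε) = _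
      rw [Matrix.mulVec_mulVec, hpt_idem]
    have hv_kill : ∀ ε η : {ε // ε ∈ N}, ε ≠ η → pt ε.1 Finset.univ *ᵥ v η = 0 := by
      intro ε η hne
      rw [hv_def]
      show pt ε.1 Finset.univ *ᵥ (pt η.1 Finset.univ *ᵥ w η) = 0
      rw [Matrix.mulVec_mulVec, he_orth _ _ (fun h => hne (Subtype.ext h)),
        Matrix.zero_mulVec]
    have hlin : LinearIndependent ℂ v := by
      rw [Fintype.linearIndependent_iff]
      intro g hg η
      have hdist : pt η.1 Finset.univ *ᵥ (∑ i, g i • v i) = ∑ i, g i • (pt η.1 Finset.univ *ᵥ v i) := by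
        calc pt η.1 Finset.univ *ᵥ (∑ i, g i • v i)
            = (pt η.1 Finset.univ).mulVecLin (∑ i, g i • v i) := rfl
          _ = ∑ i, g i • (pt η.1 Finset.univ).mulVecLin (v i) := by
              rw [_root_.map_sum]
              exact Finset.sum_congr rfl fun i _ => _root_.map_smul _ _ _
          _ = ∑ i, g i • (pt η.1 Finset.univ *ᵥ v i) := rfl
      have h2 : ∑ i, g i • (pt η.1 Finset.univ *ᵥ v i) = g η • v η := by
        rw [Finset.sum_eq_single η]
        · rw [hv_fix]
        · intro i _ hiη
          rw [hv_kill η i (fun hh => hiη hh.symm), smul_zero]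
        · intro h
          exact absurd (Finset.mem_univ η) h
      have h3 : g η • v η = 0 := by
        rw [← h2, ← hdist, hg, Matrix.mulVec_zero]
      rcases smul_eq_zero.mp h3 with h | h
      · exact h
      · exact absurd h (hwne η)
    calc N.card = Fintype.card {ε // ε ∈ N} := (Fintype.card_coe N).symm
      _ ≤ Module.finrank ℂ (Fin n → ℂ) := hlin.fintype_card_le_finrank
      _ = n := by simp
  have hS0card : S0.card ≤ n := le_trans (Finset.card_le_card (Finset.filter_subset _ _)) hNcard
  -- ## shortening products to at most n-1 factors
  have key : ∀ (m : ℕ) (ε : Fin s → Bool) (T : Finset (Fin s)), (pt ε T).rank ≤ m →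
      ∃ T', pt ε T' = pt ε Finset.univ ∧
        T'.card + (pt ε Finset.univ).rank ≤ T.card + (pt ε T).rank := by
    intro m
    induction m with
    | zero =>
      intro ε T hT
      have h0 : pt ε T = 0 := by
        by_contra hne
        have := rank_pos_of_ne_zero hne
        omega
      have hsd : PT ε Finset.univ = PT ε (Finset.univ \ T) * PT ε T := by
        show (∏ i ∈ Finset.univ, Fs i (ε i)) = (∏ i ∈ Finset.univ \ T, Fs i (ε i)) * ∏ i ∈ T, Fs i (ε i)
        rw [Finset.prod_sdiff (Finset.subset_univ T)]
      have huniv : pt ε Finset.univ = 0 := by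
        show φ (PT ε Finset.univ) = 0
        rw [hsd, _root_.map_mul]
        have : φ (PT ε T) = 0 := h0
        rw [this, mul_zero]
      exact ⟨T, by rw [huniv, h0], by rw [huniv, h0]⟩
    | succ m ih =>
      intro ε T hT
      by_cases hdone : pt ε T = pt ε Finset.univ
      · exact ⟨T, hdone, by rw [hdone]⟩
      by_cases hex : ∀ i, φ (Fs i (ε i)) * pt ε T = pt ε T
      · exfalso
        apply hdone
        have hU : ∀ U : Finset (Fin s), φ (PT ε U) * pt ε T = pt ε T := by
          intro U
          induction U using Finset.induction_on with
          | empty =>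
            have h1 : PT ε (∅ : Finset (Fin s)) = 1 := Finset.prod_empty
            rw [h1, _root_.map_one, one_mul]
          | @insert a U ha ihU =>
            have h1 : PT ε (insert a U) = Fs a (ε a) * PT ε U := by
              show (∏ j ∈ insert a U, Fs j (ε j)) = _
              rw [Finset.prod_insert ha]
            rw [h1, _root_.map_mul, mul_assoc, ihU, hex a]
        have hsd : PT ε Finset.univ = PT ε (Finset.univ \ T) * PT ε T := by
          show (∏ i ∈ Finset.univ, Fs i (ε i)) = (∏ i ∈ Finset.univ \ T, Fs i (ε i)) * ∏ i ∈ T, Fs i (ε i)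
          rw [Finset.prod_sdiff (Finset.subset_univ T)]
        calc pt ε T = φ (PT ε (Finset.univ \ T)) * pt ε T := (hU _).symm
          _ = pt ε Finset.univ := by
              show _ = φ (PT ε Finset.univ)
              rw [hsd, _root_.map_mul]
      · push_neg at hex
        obtain ⟨i, hi⟩ := hex
        have hiT : i ∉ T := by
          intro hmem
          apply hi
          show φ (Fs i (ε i)) * φ (PT ε T) = φ (PT ε T)
          rw [← _root_.map_mul, habs1 ε T i hmem]
        have hins : PT ε (insert i T) = Fs i (ε i) * PT ε T := by
          show (∏ j ∈ insert i T, Fs j (ε j)) = _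
          rw [Finset.prod_insert hiT]
        have hBmat : pt ε (insert i T) = φ (Fs i (ε i)) * pt ε T := by
          show φ (PT ε (insert i T)) = _
          rw [hins, _root_.map_mul]
        have hrkle : (pt ε (insert i T)).rank ≤ (pt ε T).rank := by
          rw [hBmat]
          exact Matrix.rank_mul_le_right _ _
        have hrklt : (pt ε (insert i T)).rank < (pt ε T).rank := by
          rcases lt_or_eq_of_le hrkle with h | h
          · exact h
          · exfalso
            apply hi
            have hBB := hpt_idem ε (insert i T)
            have hBA : pt ε (insert i T) * pt ε T = pt ε (insert i T) := by
              show φ _ * φ _ = φ _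
              rw [← _root_.map_mul, hins, mul_assoc, hPT_idem]
            have hAB : pt ε T * pt ε (insert i T) = pt ε (insert i T) := by
              show φ _ * φ _ = φ _
              rw [← _root_.map_mul, hins, mul_left_comm, hPT_idem]
            have heq := proj_eq_of_rank_le hBB hBA hAB h.symm.le
            rw [← hBmat, ← heq]
        have hrkm : (pt ε (insert i T)).rank ≤ m := by omega
        obtain ⟨T', hT'eq, hT'le⟩ := ih ε (insert i T) hrkm
        refine ⟨T', hT'eq, ?_⟩
        have hci : (insert i T).card = T.card + 1 := Finset.card_insert_of_notMem hiT
        omega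
  have hshort : ∀ ε, pt ε Finset.univ ≠ 0 →
      ∃ T : Finset (Fin s), pt ε T = pt ε Finset.univ ∧ T.card + 1 ≤ n := by
    intro ε hne
    have h1 : (pt ε ∅).rank ≤ n := by
      calc (pt ε ∅).rank ≤ Fintype.card (Fin n) := Matrix.rank_le_card_width _
        _ = n := Fintype.card_fin n
    obtain ⟨T, hTeq, hTle⟩ := key ((pt ε ∅).rank) ε ∅ le_rfl
    refine ⟨T, hTeq, ?_⟩
    have h2 : 1 ≤ (pt ε Finset.univ).rank := rank_pos_of_ne_zero hne
    have h3 : Finset.card (∅ : Finset (Fin s)) = 0 := rfl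
    omega
  -- ## list representations
  have hcoeF : ∀ (i : Fin s) (b : Bool), F (i, b) = φ (Fs i b) := by
    intro i b
    cases b
    · show 1 - φ (Q i) = φ (1 - Q i)
      rw [_root_.map_sub, _root_.map_one]
    · rfl
  have hlist : ∀ ε (T : Finset (Fin s)),
      φ (PT ε T) = ((T.toList.map fun i => (i, ε i)).map F).prod := by
    intro ε T
    have h1 : PT ε T = (T.toList.map fun i => Fs i (ε i)).prod := by
      show (∏ i ∈ T, Fs i (ε i)) = _
      rw [Finset.prod_map_toList]
    rw [h1, map_list_prod, List.map_map, List.map_map]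
    have hfe : (⇑φ ∘ fun i => Fs i (ε i)) = (F ∘ fun i => (i, ε i)) := by
      funext i
      exact (hcoeF i (ε i)).symm
    rw [hfe]
  have hpad : ∀ ε, F (i₀, ε i₀) * pt ε Finset.univ = pt ε Finset.univ := by
    intro ε
    rw [hcoeF]
    show φ _ * φ (PT ε Finset.univ) = φ (PT ε Finset.univ)
    rw [← _root_.map_mul, habs1 ε Finset.univ i₀ (Finset.mem_univ i₀)]
  have hq2m : φ (Q i₀) * φ (Q i₀) = φ (Q i₀) := by
    rw [← _root_.map_mul, hQ2]
  have hzero : ∃ L : List (Fin s × Bool), L.length = n ∧ (L.map F).prod = 0 := by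
    by_cases h2 : 2 ≤ n
    · refine ⟨(i₀, true) :: (i₀, false) :: List.replicate (n - 2) (i₀, true), ?_, ?_⟩
      · simp only [List.length_cons, List.length_replicate]
        omega
      · rw [List.map_cons, List.map_cons, List.prod_cons, List.prod_cons, ← mul_assoc]
        have hz : F (i₀, true) * F (i₀, false) = 0 := by
          show φ (Q i₀) * (1 - φ (Q i₀)) = 0
          rw [mul_one_sub, hq2m, sub_self]
        rw [hz, zero_mul]
    · have hn1 : n = 1 := by omega
      have hz : φ (Q i₀) * (1 - φ (Q i₀)) = 0 := by
        rw [mul_one_sub, hq2m, sub_self]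
      have hcard1 : (φ (Q i₀)).rank + (1 - φ (Q i₀)).rank ≤ 1 := by
        have h := Matrix.rank_add_rank_le_card_of_mul_eq_zero hz
        rw [Fintype.card_fin] at h
        omega
      by_cases hq0 : φ (Q i₀) = 0
      · refine ⟨[(i₀, true)], by simp [hn1], ?_⟩
        rw [List.map_singleton, List.prod_singleton]
        exact hq0
      · have h1 : 1 ≤ (φ (Q i₀)).rank := rank_pos_of_ne_zero hq0
        have hq1 : 1 - φ (Q i₀) = 0 := by
          by_contra hne
          have := rank_pos_of_ne_zero hne
          omega
        refine ⟨[(i₀, false)], by simp [hn1], ?_⟩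
        rw [List.map_singleton, List.prod_singleton]
        exact hq1
  obtain ⟨Lz, hLz_len, hLz_prod⟩ := hzero
  have hLs : ∀ ε : Fin s → Bool, ∃ L : List (Fin s × Bool), L.length = n ∧
      (L.map F).prod = (if ε ∈ S0 then pt ε Finset.univ else 0) := by
    intro ε
    by_cases hε : ε ∈ S0
    · rw [if_pos hε]
      have hne : pt ε Finset.univ ≠ 0 := by
        have h := hε
        simp only [hS0_def, hN_def, Finset.mem_filter] at h
        exact h.1.2
      obtain ⟨T, hTeq, hTle⟩ := hshort ε hne
      refine ⟨List.replicate (n - T.card) (i₀, ε i₀) ++ T.toList.map (fun i => (i, ε i)), ?_, ?_⟩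
      · rw [List.length_append, List.length_replicate, List.length_map, Finset.length_toList]
        omega
      · rw [List.map_append, List.prod_append, List.map_replicate]
        have hbase : ((T.toList.map fun i => (i, ε i)).map F).prod = pt ε Finset.univ := by
          rw [← hlist ε T]
          exact hTeq
        rw [hbase]
        exact list_prod_pad _ _ (hpad ε) _
    · rw [if_neg hε]
      exact ⟨Lz, hLz_len, hLz_prod⟩
  choose Lf hLf_len hLf_prod using hLs
  -- ## assembling the final sum
  set l0 : List (Fin s → Bool) := S0.toList with hl0_def
  have hlen_le : l0.length ≤ n := by
    rw [hl0_def, Finset.length_toList]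
    exact hS0card
  set LL : Fin n → List (Fin s × Bool) :=
    fun k => if h : (k : ℕ) < l0.length then Lf (l0.get ⟨k, h⟩) else Lz with hLL_def
  have hLL_len : ∀ k, (LL k).length = n := by
    intro k
    simp only [hLL_def]
    by_cases h : (k : ℕ) < l0.length
    · rw [dif_pos h]
      exact hLf_len _
    · rw [dif_neg h]
      exact hLz_len
  refine ⟨fun k l => ((LL k).get (Fin.cast (hLL_len k).symm l)).1,
      fun k l => ((LL k).get (Fin.cast (hLL_len k).symm l)).2, ?_⟩
  have hterm : ∀ k : Fin n,
      ((List.finRange n).map fun l =>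
        if ((LL k).get (Fin.cast (hLL_len k).symm l)).2 then φ (Q (((LL k).get (Fin.cast (hLL_len k).symm l)).1))
        else 1 - φ (Q (((LL k).get (Fin.cast (hLL_len k).symm l)).1))) = (LL k).map F := by
    intro k
    conv_rhs => rw [← finRange_map_get' (LL k) (hLL_len k)]
    rw [List.map_map]
    rfl
  have hG : ∀ k : Fin n, ((LL k).map F).prod =
      (fun j : ℕ => if h : j < l0.length then pt (l0.get ⟨j, h⟩) Finset.univ else 0) (k : ℕ) := by
    intro k
    simp only [hLL_def]
    by_cases h : (k : ℕ) < l0.length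
    · rw [dif_pos h, dif_pos h, hLf_prod, if_pos]
      exact Finset.mem_toList.mp (List.get_mem l0 ⟨↑k, h⟩)
    · rw [dif_neg h, dif_neg h]
      exact hLz_prod
  have hsum_eq : (∑ k : Fin n, ((LL k).map F).prod) = ∑ ε ∈ S0, pt ε Finset.univ := by
    calc (∑ k : Fin n, ((LL k).map F).prod)
        = ∑ k : Fin n, (fun j : ℕ =>
            if h : j < l0.length then pt (l0.get ⟨j, h⟩) Finset.univ else 0) (k : ℕ) :=
          Finset.sum_congr rfl fun k _ => hG k
      _ = ∑ j ∈ Finset.range n, (fun j : ℕ =>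
            if h : j < l0.length then pt (l0.get ⟨j, h⟩) Finset.univ else 0) j :=
          Fin.sum_univ_eq_sum_range (fun j : ℕ =>
            if h : j < l0.length then pt (l0.get ⟨j, h⟩) Finset.univ else 0) n
      _ = ∑ j ∈ Finset.range l0.length, (fun j : ℕ =>
            if h : j < l0.length then pt (l0.get ⟨j, h⟩) Finset.univ else 0) j := by
          refine (Finset.sum_subset (Finset.range_subset_range.mpr hlen_le) ?_).symm
          intro j _ hj2
          rw [Finset.mem_range] at hj2
          exact dif_neg hj2
      _ = ∑ j : Fin l0.length, (fun j : ℕ =>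
            if h : j < l0.length then pt (l0.get ⟨j, h⟩) Finset.univ else 0) (j : ℕ) :=
          (Fin.sum_univ_eq_sum_range (fun j : ℕ =>
            if h : j < l0.length then pt (l0.get ⟨j, h⟩) Finset.univ else 0) l0.length).symm
      _ = ∑ j : Fin l0.length, pt (l0.get j) Finset.univ := by
          refine Finset.sum_congr rfl fun j _ => ?_
          exact dif_pos j.2
      _ = ((l0.map fun ε => pt ε Finset.univ).sum) := by
          rw [← Fin.sum_univ_fun_getElem]
          refine Finset.sum_congr rfl fun j _ => ?_
          rw [List.get_eq_getElem]
      _ = ∑ ε ∈ S0, pt ε Finset.univ := by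
          rw [hl0_def]
          exact Finset.sum_map_toList S0 _
  calc p = ∑ ε ∈ S0, pt ε Finset.univ := hp2
    _ = ∑ k : Fin n, ((LL k).map F).prod := hsum_eq.symm
    _ = _ := by
        refine Finset.sum_congr rfl fun k _ => ?_
        rw [hterm k]






end ElemPolyAux

open ElemPolyAux in
/-- If `q 1, …, q s` are pairwise commuting projections in `M_r(ℂ)`, then every
projection `p` in the *-subalgebra they generate can be written as an elementary polynomial
`p = ∑_{k=1}^r ∏_{l=1}^r y^{(k,l)}` in `r` of the generators, where each `y^{(k,l)}` is either
some `q j` or `1 - q j`.  (The factors commute, so the order of the product is immaterial; it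
is taken in the canonical order of `Fin r`.) -/
theorem projection_eq_elementary_polynomial (r s : ℕ) (hr : 1 ≤ r) (hs : 1 ≤ s)
    (q : Fin s → Matrix (Fin r) (Fin r) ℂ)
    (hq_proj : ∀ i, (q i)ᴴ = q i ∧ q i * q i = q i)
    (hq_comm : ∀ i j, q i * q j = q j * q i)
    (p : Matrix (Fin r) (Fin r) ℂ)
    (hp_mem : p ∈ StarAlgebra.adjoin ℂ (Set.range q))
    (hp_proj : pᴴ = p ∧ p * p = p) :
    ∃ (jj : Fin r → Fin r → Fin s) (b : Fin r → Fin r → Bool),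
      p = ∑ k : Fin r,
        ((List.finRange r).map fun l =>
          if b k l then q (jj k l) else 1 - q (jj k l)).prod := by
    classical
  letI : CommRing (Algebra.adjoin ℂ (Set.range q)) :=
    Algebra.adjoinCommRingOfComm ℂ (by rintro a ⟨i, rfl⟩ b ⟨j, rfl⟩; exact hq_comm i j)
  have hstar_range : Set.range q ∪ star (Set.range q) = Set.range q := by
    rw [Set.union_eq_self_of_subset_right]
    intro x hx
    rw [Set.mem_star] at hx
    obtain ⟨i, hi⟩ := hx
    refine ⟨i, ?_⟩
    calc q i = (q i)ᴴ := ((hq_proj i).1).symm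
      _ = star (q i) := rfl
      _ = star (star x) := by rw [hi]
      _ = x := star_star x
  have hp_mem' : p ∈ Algebra.adjoin ℂ (Set.range q) := by
    have h1 : p ∈ (StarAlgebra.adjoin ℂ (Set.range q)).toSubalgebra := hp_mem
    rw [StarAlgebra.adjoin_toSubalgebra, hstar_range] at h1
    exact h1
  let φ : (Algebra.adjoin ℂ (Set.range q)) →ₐ[ℂ] Matrix (Fin r) (Fin r) ℂ :=
    { toFun := fun x => (x : Matrix (Fin r) (Fin r) ℂ),
      map_one' := rfl,
      map_mul' := fun _ _ => rfl,
      map_zero' := rfl,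
      map_add' := fun _ _ => rfl,
      commutes' := fun _ => rfl }
  let Q : Fin s → (Algebra.adjoin ℂ (Set.range q)) :=
    fun i => ⟨q i, Algebra.subset_adjoin ⟨i, rfl⟩⟩
  have hQ2 : ∀ i, Q i * Q i = Q i := fun i => Subtype.ext ((hq_proj i).2)
  have hp_mem'' : p ∈ Algebra.adjoin ℂ (Set.range fun i => φ (Q i)) := hp_mem'
  obtain ⟨jj, b, hpe⟩ := core hr hs φ Q hQ2 p hp_mem'' hp_proj.2
  exact ⟨jj, b, hpe⟩
end
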